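/- arXiv:1808.08479 — 3 statements merged into one kernel-verified Lean document; each statement's English description precedes it below -/
import Mathlib

section
/- Let T be a rooted tree with n vertices and let m be an integer with 1 ≤ m < n. Then the sum, over all subtrees T' of T that have exactly m vertices and the same root as T (i.e. subsets of m vertices containing the root, closed under passing to parents, with the induced tree structure), of the product ∏_{v ∈ V_{T'}} n_v(T)/n_v(T'), equals the binomial coefficient n!/(m!(n−m)!). Here n_v(T') is computed inside T' and n_v(T) inside T. -/
open scoped Classical

/-!
Write `w(S) = ∏_{v ∈ S} n_v(T) / n_v(S)` and `W_m` for the sum of `w` over the subtrees with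
`m` vertices. For a leaf `u` of `S`,
`w(S \ {u}) / w(S) = n_u(T)⁻¹ ∏_a n_a(S) / (n_a(S) - 1)`,
the product running over the strict ancestors `a` of `u` in `S`. The hook-walk identity says that
these products sum to `|S|` over the leaves of `S` (induction down the tree: below an internal
vertex `v` the children carry `n_v(S) - 1` vertices), hence `|S| w(S) = ∑_u n_u(T) w(S \ {u})`.
Removing a leaf is a bijection onto the pairs `(S', u)` with `u ∉ S'` and `parent u ∈ S'`; the
descendant sets of these `u` partition the complement of `S'`, so `∑_u n_u(T) = n - |S'|`.
Thus `(m + 1) W_{m+1} = (n - m) W_m` and `W_1 = n`, the recursion of `n.choose m`.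
-/

open Finset Function

noncomputable section

namespace ParentTree

variable {α : Type*}

def IsAncestor (parent : α → α) (v w : α) : Prop := ∃ k : ℕ, parent^[k] w = v

def IsParentClosed (parent : α → α) (S : Finset α) : Prop := ∀ v ∈ S, parent v ∈ S

variable {parent : α → α} {root : α}

theorem isAncestor_refl (v : α) : IsAncestor parent v v := ⟨0, rfl⟩

theorem isAncestor_parent (v : α) : IsAncestor parent (parent v) v := ⟨1, rfl⟩

theorem IsAncestor.trans {u v w : α} (huv : IsAncestor parent u v)
    (hvw : IsAncestor parent v w) : IsAncestor parent u w := by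
  obtain ⟨a, rfl⟩ := huv
  obtain ⟨b, rfl⟩ := hvw
  exact ⟨a + b, iterate_add_apply parent a b w⟩

theorem isAncestor_iff_eq_or_isAncestor_parent {a c : α} :
    IsAncestor parent a c ↔ a = c ∨ IsAncestor parent a (parent c) := by
  constructor
  · rintro ⟨_ | k, rfl⟩
    · exact .inl rfl
    · exact .inr ⟨k, (iterate_succ_apply parent k c).symm⟩
  · rintro (rfl | h)
    · exact isAncestor_refl a
    · exact h.trans (isAncestor_parent c)

theorem IsAncestor.total {x y w : α} (hx : IsAncestor parent x w) (hy : IsAncestor parent y w) :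
    IsAncestor parent x y ∨ IsAncestor parent y x := by
  obtain ⟨a, rfl⟩ := hx
  obtain ⟨b, rfl⟩ := hy
  rcases le_total a b with h | h
  · exact .inr ⟨b - a, by rw [← iterate_add_apply, Nat.sub_add_cancel h]⟩
  · exact .inl ⟨a - b, by rw [← iterate_add_apply, Nat.sub_add_cancel h]⟩

theorem IsParentClosed.mem_of_isAncestor {S : Finset α} (hS : IsParentClosed parent S)
    {v w : α} (h : IsAncestor parent v w) (hw : w ∈ S) : v ∈ S := by
  obtain ⟨k, rfl⟩ := h
  induction k with
  | zero => exact hw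
  | succ k ih => rw [iterate_succ_apply']; exact hS _ ih

theorem IsAncestor.exists_child {v w : α} (h : IsAncestor parent v w) (hw : w ≠ v) :
    ∃ c, parent c = v ∧ c ≠ v ∧ IsAncestor parent c w := by
  obtain ⟨k, rfl⟩ := h
  induction k with
  | zero => exact absurd rfl hw
  | succ k ih =>
    rw [iterate_succ_apply'] at hw ⊢
    by_cases hk : parent^[k] w = parent (parent^[k] w)
    · rw [← hk]
      exact ih (by rwa [hk])
    · exact ⟨parent^[k] w, rfl, hk, k, rfl⟩

theorem eq_root_of_isPeriodicPt (hroot : parent root = root)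
    (hreach : ∀ v, ∃ k : ℕ, parent^[k] v = root) {p : ℕ} (hp : 0 < p) {x : α}
    (hx : IsPeriodicPt parent p x) : x = root := by
  obtain ⟨K, hK⟩ := hreach x
  have hle : K ≤ p * K := Nat.le_mul_of_pos_left K hp
  calc x = parent^[p * K] x := (hx.mul_const K).eq.symm
    _ = root := by rw [← Nat.sub_add_cancel hle, iterate_add_apply, hK, iterate_fixed hroot]

theorem isAncestor_antisymm (hroot : parent root = root)
    (hreach : ∀ v, ∃ k : ℕ, parent^[k] v = root) {x y : α}
    (hxy : IsAncestor parent x y) (hyx : IsAncestor parent y x) : x = y := by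
  obtain ⟨a, rfl⟩ := hxy
  obtain ⟨b, hb⟩ := hyx
  rcases Nat.eq_zero_or_pos a with rfl | ha
  · rfl
  have hper : IsPeriodicPt parent (b + a) y := by
    rw [IsPeriodicPt, IsFixedPt, iterate_add_apply, hb]
  rw [eq_root_of_isPeriodicPt hroot hreach (by omega) hper, iterate_fixed hroot]

theorem parent_ne_self (hreach : ∀ v, ∃ k : ℕ, parent^[k] v = root) {u : α}
    (hu : u ≠ root) : parent u ≠ u := fun h =>
  hu (by obtain ⟨k, hk⟩ := hreach u; rwa [iterate_fixed h] at hk)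

theorem pairwiseDisjoint_filter_isAncestor {A : Set α}
    (hA : IsAntichain (IsAncestor parent) A) (T : Finset α) :
    A.PairwiseDisjoint fun a => T.filter (IsAncestor parent a) := by
  intro a ha b hb hne
  refine disjoint_left.2 fun w hw hw' => ?_
  rcases (mem_filter.1 hw).2.total (mem_filter.1 hw').2 with h | h
  · exact hA ha hb hne h
  · exact hA hb ha hne.symm h

def subtreeCard (parent : α → α) (S : Finset α) (v : α) : ℕ :=
  (S.filter (IsAncestor parent v)).card

theorem subtreeCard_root (hreach : ∀ v, ∃ k : ℕ, parent^[k] v = root) (S : Finset α) :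
    subtreeCard parent S root = S.card := by
  rw [subtreeCard, filter_true_of_mem (p := IsAncestor parent root) fun w _ => hreach w]

theorem subtreeCard_pos {S : Finset α} {v : α} (hv : v ∈ S) : 0 < subtreeCard parent S v :=
  card_pos.2 ⟨v, mem_filter.2 ⟨hv, isAncestor_refl v⟩⟩

theorem subtreeCard_erase_add {S : Finset α} {u : α} (hu : u ∈ S) (a : α) :
    subtreeCard parent (S.erase u) a + (if IsAncestor parent a u then 1 else 0) =
      subtreeCard parent S a := by
  rw [subtreeCard, subtreeCard, filter_erase]
  split_ifs with h
  · exact card_erase_add_one (mem_filter.2 ⟨hu, h⟩)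
  · rw [erase_eq_of_notMem fun h' => h (mem_filter.1 h').2, add_zero]

def leaves (parent : α → α) (S : Finset α) : Finset α :=
  S.filter fun u => subtreeCard parent S u = 1

theorem ne_root_of_mem_leaves (hreach : ∀ v, ∃ k : ℕ, parent^[k] v = root) {S : Finset α}
    (hS : 2 ≤ S.card) {u : α} (hu : u ∈ leaves parent S) : u ≠ root := by
  rintro rfl
  have := (mem_filter.1 hu).2
  rw [subtreeCard_root hreach] at this
  omega

theorem filter_isAncestor_eq_singleton_of_mem_leaves {S : Finset α} {u : α}
    (hu : u ∈ leaves parent S) : S.filter (IsAncestor parent u) = {u} := by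
  obtain ⟨huS, hleaf⟩ := mem_filter.1 hu
  have huu : u ∈ S.filter (IsAncestor parent u) := mem_filter.2 ⟨huS, isAncestor_refl u⟩
  exact eq_singleton_iff_unique_mem.2 ⟨huu, fun w hw => card_le_one.1 hleaf.le w hw u huu⟩

theorem IsParentClosed.erase_of_mem_leaves {S : Finset α} (hS : IsParentClosed parent S) {u : α}
    (hu : u ∈ leaves parent S) : IsParentClosed parent (S.erase u) := by
  intro v hv
  obtain ⟨hvu, hvS⟩ := mem_erase.1 hv
  refine mem_erase.2 ⟨fun hpv => hvu ?_, hS v hvS⟩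
  have hv : v ∈ S.filter (IsAncestor parent u) := mem_filter.2 ⟨hvS, ⟨1, hpv⟩⟩
  rwa [filter_isAncestor_eq_singleton_of_mem_leaves hu, mem_singleton] at hv

theorem IsParentClosed.insert {S : Finset α} (hS : IsParentClosed parent S) {u : α}
    (hpu : parent u ∈ S) : IsParentClosed parent (insert u S) := by
  intro v hv
  rcases mem_insert.1 hv with rfl | hv
  · exact mem_insert_of_mem hpu
  · exact mem_insert_of_mem (hS v hv)

theorem mem_leaves_insert {S : Finset α} (hS : IsParentClosed parent S) {u : α} (hu : u ∉ S)
    (hpu : parent u ∈ S) : u ∈ leaves parent (insert u S) := by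
  have huu : u ∈ (insert u S).filter (IsAncestor parent u) :=
    mem_filter.2 ⟨mem_insert_self u S, isAncestor_refl u⟩
  refine mem_filter.2 ⟨mem_insert_self u S, card_eq_one.2 ⟨u, eq_singleton_iff_unique_mem.2
    ⟨huu, fun w hw => ?_⟩⟩⟩
  obtain ⟨hwS, huw⟩ := mem_filter.1 hw
  by_contra hwu
  obtain ⟨c, hcu, -, hcw⟩ := huw.exists_child hwu
  rcases mem_insert.1 ((hS.insert hpu).mem_of_isAncestor hcw hwS) with rfl | hcS
  · exact hu (hcu ▸ hpu)
  · exact hu (hcu ▸ hS c hcS)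

def pathProduct (parent : α → α) (S : Finset α) (v u : α) : ℚ :=
  ∏ a ∈ (S.erase u).filter (fun a => IsAncestor parent v a ∧ IsAncestor parent a u),
    (subtreeCard parent S a : ℚ) / (subtreeCard parent S a - 1)

theorem pathProduct_self (hroot : parent root = root)
    (hreach : ∀ v, ∃ k : ℕ, parent^[k] v = root) (S : Finset α) (v : α) :
    pathProduct parent S v v = 1 := by
  rw [pathProduct, filter_false_of_mem, prod_empty]
  rintro a ha ⟨hva, hav⟩
  exact (mem_erase.1 ha).1 (isAncestor_antisymm hroot hreach hav hva)

section Fintype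

variable [Fintype α]

-- The condition `c ≠ v` keeps the root, its own parent, out of its children.
def children (parent : α → α) (v : α) : Finset α :=
  univ.filter fun c => parent c = v ∧ c ≠ v

theorem mem_children {v c : α} : c ∈ children parent v ↔ parent c = v ∧ c ≠ v := by
  simp [children]

theorem isAncestor_of_mem_children {v c : α} (hc : c ∈ children parent v) :
    IsAncestor parent v c :=
  ⟨1, (mem_children.1 hc).1⟩

theorem not_isAncestor_of_mem_children (hroot : parent root = root)
    (hreach : ∀ v, ∃ k : ℕ, parent^[k] v = root) {v c : α} (hc : c ∈ children parent v) :
    ¬IsAncestor parent c v := fun h =>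
  (mem_children.1 hc).2 (isAncestor_antisymm hroot hreach h (isAncestor_of_mem_children hc))

theorem isAntichain_children (hroot : parent root = root)
    (hreach : ∀ v, ∃ k : ℕ, parent^[k] v = root) (v : α) :
    IsAntichain (IsAncestor parent) (children parent v : Set α) := by
  intro a ha b hb hne hab
  rcases isAncestor_iff_eq_or_isAncestor_parent.1 hab with h | h
  · exact hne h
  · rw [(mem_children.1 (mem_coe.1 hb)).1] at h
    exact not_isAncestor_of_mem_children hroot hreach (mem_coe.1 ha) h

theorem filter_isAncestor_erase (hroot : parent root = root)
    (hreach : ∀ v, ∃ k : ℕ, parent^[k] v = root) (T : Finset α) (v : α) :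
    (T.filter (IsAncestor parent v)).erase v =
      (children parent v).biUnion fun c => T.filter (IsAncestor parent c) := by
  ext w
  simp only [mem_erase, mem_filter, mem_biUnion]
  constructor
  · rintro ⟨hwv, hwT, hvw⟩
    obtain ⟨c, hcv, hne, hcw⟩ := hvw.exists_child hwv
    exact ⟨c, mem_children.2 ⟨hcv, hne⟩, hwT, hcw⟩
  · rintro ⟨c, hc, hwT, hcw⟩
    refine ⟨?_, hwT, (isAncestor_of_mem_children hc).trans hcw⟩
    rintro rfl
    exact not_isAncestor_of_mem_children hroot hreach hc hcw

theorem subtreeCard_eq_sum_children_add_one (hroot : parent root = root)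
    (hreach : ∀ v, ∃ k : ℕ, parent^[k] v = root) {S : Finset α} {v : α} (hv : v ∈ S) :
    subtreeCard parent S v = ∑ c ∈ children parent v, subtreeCard parent S c + 1 := by
  rw [subtreeCard, ← card_erase_add_one (mem_filter.2 ⟨hv, isAncestor_refl v⟩),
    filter_isAncestor_erase hroot hreach,
    card_biUnion (pairwiseDisjoint_filter_isAncestor (isAntichain_children hroot hreach v) S)]
  rfl

theorem subtreeCard_univ_lt_of_mem_children (hroot : parent root = root)
    (hreach : ∀ v, ∃ k : ℕ, parent^[k] v = root) {v c : α} (hc : c ∈ children parent v) :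
    subtreeCard parent univ c < subtreeCard parent univ v := by
  refine card_lt_card ⟨fun w hw => ?_, fun h => ?_⟩
  · exact mem_filter.2 ⟨mem_univ w,
      (isAncestor_of_mem_children hc).trans (mem_filter.1 hw).2⟩
  · exact not_isAncestor_of_mem_children hroot hreach hc
      (mem_filter.1 (h (mem_filter.2 ⟨mem_univ v, isAncestor_refl v⟩))).2

theorem pathProduct_of_mem_children (hroot : parent root = root)
    (hreach : ∀ v, ∃ k : ℕ, parent^[k] v = root) {S : Finset α} {v c u : α} (hv : v ∈ S)
    (hc : c ∈ children parent v) (hcu : IsAncestor parent c u) :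
    pathProduct parent S v u =
      (subtreeCard parent S v : ℚ) / (subtreeCard parent S v - 1) *
        pathProduct parent S c u := by
  have hvc := isAncestor_of_mem_children hc
  have hcv := not_isAncestor_of_mem_children hroot hreach hc
  have hpath : (S.erase u).filter (fun a => IsAncestor parent v a ∧ IsAncestor parent a u) =
      insert v ((S.erase u).filter fun a => IsAncestor parent c a ∧ IsAncestor parent a u) := by
    ext a
    simp only [mem_filter, mem_erase, mem_insert]
    constructor
    · rintro ⟨haS, hva, hau⟩
      rcases hau.total hcu with hac | hca
      · rcases isAncestor_iff_eq_or_isAncestor_parent.1 hac with rfl | hac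
        · exact .inr ⟨haS, isAncestor_refl a, hau⟩
        · rw [(mem_children.1 hc).1] at hac
          exact .inl (isAncestor_antisymm hroot hreach hac hva)
      · exact .inr ⟨haS, hca, hau⟩
    · rintro (rfl | ⟨haS, hca, hau⟩)
      · exact ⟨⟨fun hau => hcv (hau ▸ hcu), hv⟩, isAncestor_refl a, hvc.trans hcu⟩
      · exact ⟨haS, hvc.trans hca, hau⟩
  rw [pathProduct, hpath, prod_insert fun h => hcv (mem_filter.1 h).2.1]
  rfl

theorem sum_pathProduct_leaves (hroot : parent root = root)
    (hreach : ∀ v, ∃ k : ℕ, parent^[k] v = root) {S : Finset α}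
    (hS : IsParentClosed parent S) (v : α) :
    ∑ u ∈ (leaves parent S).filter (IsAncestor parent v), pathProduct parent S v u =
      subtreeCard parent S v := by
  induction hN : subtreeCard parent univ v using Nat.strong_induction_on generalizing v with
  | _ N ih =>
  subst hN
  by_cases hvS : v ∈ S
  swap
  · have hempty : S.filter (IsAncestor parent v) = ∅ :=
      filter_eq_empty_iff.2 fun w hw h => hvS (hS.mem_of_isAncestor h hw)
    rw [leaves, filter_comm, hempty, filter_empty, sum_empty, subtreeCard, hempty, card_empty,
      Nat.cast_zero]
  by_cases hleaf : subtreeCard parent S v = 1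
  · rw [leaves, filter_comm,
      filter_isAncestor_eq_singleton_of_mem_leaves (mem_filter.2 ⟨hvS, hleaf⟩),
      filter_singleton, if_pos hleaf, sum_singleton, pathProduct_self hroot hreach, hleaf,
      Nat.cast_one]
  have hsplit : (leaves parent S).filter (IsAncestor parent v) =
      (children parent v).biUnion fun c => (leaves parent S).filter (IsAncestor parent c) := by
    rw [← filter_isAncestor_erase hroot hreach, erase_eq_of_notMem]
    exact fun h => hleaf (mem_filter.1 (mem_filter.1 h).1).2
  have hchild : ∀ c ∈ children parent v,
      ∑ u ∈ (leaves parent S).filter (IsAncestor parent c), pathProduct parent S v u =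
        (subtreeCard parent S v : ℚ) / (subtreeCard parent S v - 1) *
          subtreeCard parent S c := by
    intro c hc
    rw [← ih _ (subtreeCard_univ_lt_of_mem_children hroot hreach hc) c rfl, mul_sum]
    exact sum_congr rfl fun u hu =>
      pathProduct_of_mem_children hroot hreach hvS hc (mem_filter.1 hu).2
  have hsum : ∑ c ∈ children parent v, (subtreeCard parent S c : ℚ) =
      subtreeCard parent S v - 1 := by
    rw [subtreeCard_eq_sum_children_add_one hroot hreach hvS]
    push_cast
    ring
  have hne : (subtreeCard parent S v : ℚ) - 1 ≠ 0 := by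
    rw [sub_ne_zero, Nat.cast_ne_one]
    exact hleaf
  rw [hsplit,
    sum_biUnion (pairwiseDisjoint_filter_isAncestor (isAntichain_children hroot hreach v) _),
    sum_congr rfl hchild, ← mul_sum, hsum, div_mul_cancel₀ _ hne]

def weight (parent : α → α) (S : Finset α) : ℚ :=
  ∏ v ∈ S, (subtreeCard parent univ v : ℚ) / subtreeCard parent S v

theorem weight_mul_pathProduct (hreach : ∀ v, ∃ k : ℕ, parent^[k] v = root) {S : Finset α}
    {u : α} (hu : u ∈ leaves parent S) :
    weight parent S * pathProduct parent S root u =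
      subtreeCard parent univ u * weight parent (S.erase u) := by
  obtain ⟨huS, hleaf⟩ := mem_filter.1 hu
  have hpath : pathProduct parent S root u = ∏ a ∈ S.erase u,
      if IsAncestor parent a u then
        (subtreeCard parent S a : ℚ) / (subtreeCard parent S a - 1) else 1 := by
    rw [pathProduct, ← prod_filter]
    exact prod_congr (filter_congr fun a _ => and_iff_right (hreach a)) fun _ _ => rfl
  have hfactor : ∀ a ∈ S.erase u,
      (subtreeCard parent univ a : ℚ) / subtreeCard parent S a *
        (if IsAncestor parent a u then
          (subtreeCard parent S a : ℚ) / (subtreeCard parent S a - 1) else 1) =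
      (subtreeCard parent univ a : ℚ) / subtreeCard parent (S.erase u) a := by
    intro a ha
    have hpos : (0 : ℚ) < subtreeCard parent (S.erase u) a := by
      exact_mod_cast subtreeCard_pos ha
    rw [← subtreeCard_erase_add huS a]
    split_ifs
    · push_cast
      rw [add_sub_cancel_right]
      field_simp
    · simp
  rw [weight, weight, ← mul_prod_erase S _ huS, hleaf, hpath, Nat.cast_one, div_one, mul_assoc,
    ← prod_mul_distrib, prod_congr rfl hfactor]

theorem card_mul_weight (hroot : parent root = root)
    (hreach : ∀ v, ∃ k : ℕ, parent^[k] v = root) {S : Finset α}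
    (hS : IsParentClosed parent S) :
    (S.card : ℚ) * weight parent S =
      ∑ u ∈ leaves parent S, (subtreeCard parent univ u : ℚ) * weight parent (S.erase u) := by
  have hall : (leaves parent S).filter (IsAncestor parent root) = leaves parent S :=
    filter_true_of_mem fun u _ => hreach u
  rw [← subtreeCard_root hreach S, ← sum_pathProduct_leaves hroot hreach hS root, hall, sum_mul]
  exact sum_congr rfl fun u hu => by rw [mul_comm, weight_mul_pathProduct hreach hu]

def subtrees (parent : α → α) (root : α) (m : ℕ) : Finset (Finset α) :=
  univ.powerset.filter fun S => root ∈ S ∧ IsParentClosed parent S ∧ S.card = m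

theorem mem_subtrees {m : ℕ} {S : Finset α} :
    S ∈ subtrees parent root m ↔ root ∈ S ∧ IsParentClosed parent S ∧ S.card = m := by
  simp [subtrees]

theorem subtrees_one (hroot : parent root = root) : subtrees parent root 1 = {{root}} := by
  ext S
  rw [mem_subtrees, mem_singleton]
  constructor
  · rintro ⟨hrS, -, hcard⟩
    exact eq_singleton_iff_unique_mem.2 ⟨hrS, fun v hv => card_le_one.1 hcard.le v hv root hrS⟩
  · rintro rfl
    refine ⟨mem_singleton_self root, fun v hv => ?_, card_singleton root⟩
    rw [mem_singleton.1 hv, hroot]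
    exact mem_singleton_self root

def boundary (parent : α → α) (S : Finset α) : Finset α :=
  Sᶜ.filter fun u => parent u ∈ S

theorem isAntichain_boundary {S : Finset α} (hS : IsParentClosed parent S) :
    IsAntichain (IsAncestor parent) (boundary parent S : Set α) := by
  intro a ha b hb hne hab
  rcases isAncestor_iff_eq_or_isAncestor_parent.1 hab with h | h
  · exact hne h
  · exact mem_compl.1 (mem_filter.1 ha).1 (hS.mem_of_isAncestor h (mem_filter.1 hb).2)

theorem exists_mem_boundary_isAncestor {S : Finset α} {k : ℕ} {w : α} (hk : parent^[k] w ∈ S)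
    (hw : w ∉ S) : ∃ u ∈ boundary parent S, IsAncestor parent u w := by
  induction k generalizing w with
  | zero => exact absurd hk hw
  | succ k ih =>
    rw [iterate_succ_apply] at hk
    by_cases hpw : parent w ∈ S
    · exact ⟨w, mem_filter.2 ⟨mem_compl.2 hw, hpw⟩, isAncestor_refl w⟩
    · obtain ⟨u, hu, huw⟩ := ih hk hpw
      exact ⟨u, hu, huw.trans (isAncestor_parent w)⟩

theorem sum_boundary_subtreeCard (hreach : ∀ v, ∃ k : ℕ, parent^[k] v = root) {S : Finset α}
    (hrS : root ∈ S) (hS : IsParentClosed parent S) :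
    ∑ u ∈ boundary parent S, subtreeCard parent univ u = Fintype.card α - S.card := by
  have hcover :
      (boundary parent S).biUnion (fun u => univ.filter (IsAncestor parent u)) = Sᶜ := by
    ext w
    simp only [mem_biUnion, mem_filter, mem_univ, true_and, mem_compl]
    constructor
    · rintro ⟨u, hu, huw⟩ hwS
      exact mem_compl.1 (mem_filter.1 hu).1 (hS.mem_of_isAncestor huw hwS)
    · intro hwS
      obtain ⟨k, hk⟩ := hreach w
      exact exists_mem_boundary_isAncestor (hk ▸ hrS) hwS
  rw [← card_compl, ← hcover,
    card_biUnion (pairwiseDisjoint_filter_isAncestor (isAntichain_boundary hS) univ)]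
  rfl

theorem sum_sum_leaves_eq_sum_sum_boundary (hreach : ∀ v, ∃ k : ℕ, parent^[k] v = root)
    {m : ℕ} (hm : 1 ≤ m) {M : Type*} [AddCommMonoid M] (f : Finset α → α → M) :
    ∑ S ∈ subtrees parent root (m + 1), ∑ u ∈ leaves parent S, f (S.erase u) u =
      ∑ S ∈ subtrees parent root m, ∑ u ∈ boundary parent S, f S u := by
  rw [sum_sigma', sum_sigma']
  refine sum_nbij' (fun p => ⟨p.1.erase p.2, p.2⟩) (fun p => ⟨insert p.2 p.1, p.2⟩)
    ?_ ?_ ?_ ?_ fun _ _ => rfl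
  · rintro ⟨S, u⟩ h
    obtain ⟨h, hu⟩ := mem_sigma.1 h
    obtain ⟨hrS, hS, hcard⟩ := mem_subtrees.1 h
    have huS := (mem_filter.1 hu).1
    have hur := ne_root_of_mem_leaves hreach (by omega) hu
    refine mem_sigma.2 ⟨mem_subtrees.2 ⟨mem_erase.2 ⟨hur.symm, hrS⟩,
      hS.erase_of_mem_leaves hu, by rw [card_erase_of_mem huS, hcard]; rfl⟩,
      mem_filter.2 ⟨mem_compl.2 (notMem_erase u S),
        mem_erase.2 ⟨parent_ne_self hreach hur, hS u huS⟩⟩⟩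
  · rintro ⟨S, u⟩ h
    obtain ⟨h, hu⟩ := mem_sigma.1 h
    obtain ⟨hrS, hS, hcard⟩ := mem_subtrees.1 h
    obtain ⟨huS, hpu⟩ := mem_filter.1 hu
    have huS := mem_compl.1 huS
    exact mem_sigma.2 ⟨mem_subtrees.2 ⟨mem_insert_of_mem hrS, hS.insert hpu,
      by rw [card_insert_of_notMem huS, hcard]⟩, mem_leaves_insert hS huS hpu⟩
  · rintro ⟨S, u⟩ h
    simp only [insert_erase (mem_filter.1 (mem_sigma.1 h).2).1]
  · rintro ⟨S, u⟩ h
    simp only [erase_insert (mem_compl.1 (mem_filter.1 (mem_sigma.1 h).2).1)]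

theorem sum_weight_subtrees_succ_mul (hroot : parent root = root)
    (hreach : ∀ v, ∃ k : ℕ, parent^[k] v = root) {m : ℕ} (hm : 1 ≤ m) :
    (∑ S ∈ subtrees parent root (m + 1), weight parent S) * (m + 1) =
      (∑ S ∈ subtrees parent root m, weight parent S) * (Fintype.card α - m : ℕ) :=
  calc (∑ S ∈ subtrees parent root (m + 1), weight parent S) * (m + 1)
      = ∑ S ∈ subtrees parent root (m + 1), (S.card : ℚ) * weight parent S := by
        rw [sum_mul]
        refine sum_congr rfl fun S hS => ?_
        rw [(mem_subtrees.1 hS).2.2, mul_comm]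
        push_cast
        rfl
    _ = ∑ S ∈ subtrees parent root (m + 1), ∑ u ∈ leaves parent S,
          (subtreeCard parent univ u : ℚ) * weight parent (S.erase u) :=
        sum_congr rfl fun S hS => card_mul_weight hroot hreach (mem_subtrees.1 hS).2.1
    _ = ∑ S ∈ subtrees parent root m, ∑ u ∈ boundary parent S,
          (subtreeCard parent univ u : ℚ) * weight parent S :=
        sum_sum_leaves_eq_sum_sum_boundary hreach hm fun S u =>
          (subtreeCard parent univ u : ℚ) * weight parent S
    _ = (∑ S ∈ subtrees parent root m, weight parent S) * (Fintype.card α - m : ℕ) := by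
        rw [sum_mul]
        refine sum_congr rfl fun S hS => ?_
        obtain ⟨hrS, hS, hcard⟩ := mem_subtrees.1 hS
        rw [← sum_mul, ← Nat.cast_sum, sum_boundary_subtreeCard hreach hrS hS, hcard, mul_comm]

theorem sum_weight_subtrees (hroot : parent root = root)
    (hreach : ∀ v, ∃ k : ℕ, parent^[k] v = root) {m : ℕ} (hm : 1 ≤ m) :
    ∑ S ∈ subtrees parent root m, weight parent S = (Fintype.card α).choose m := by
  induction m, hm using Nat.le_induction with
  | base =>
    rw [subtrees_one hroot, sum_singleton, weight, prod_singleton, subtreeCard_root hreach,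
      subtreeCard_root hreach, card_univ, card_singleton, Nat.choose_one_right, Nat.cast_one,
      div_one]
  | succ m hm ih =>
    have hchoose : ((Fintype.card α).choose (m + 1) : ℚ) * (m + 1) =
        (Fintype.card α).choose m * (Fintype.card α - m : ℕ) := by
      exact_mod_cast Nat.choose_succ_right_eq _ _
    rw [← ih] at hchoose
    exact mul_right_cancel₀ (by positivity)
      ((sum_weight_subtrees_succ_mul hroot hreach hm).trans hchoose.symm)

end Fintype

end ParentTree

end

/-- Theorem 1 of the paper: let `T` be a rooted tree with `n` vertices,
encoded by a parent function on `Fin n` fixing the root, with every vertex reaching the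
root by iterating `parent`.  For `1 ≤ m < n`, the sum over all subtrees `T'` with `m`
vertices and the same root (subsets containing the root, closed under passing to
parents) of `∏_{v ∈ V_{T'}} n_v(T)/n_v(T')` equals `n!/(m!(n−m)!)`.  Here
`n_v(·)` is the number of vertices of the subtree rooted at `v` (for a parent-closed
subset `S`, the descendants of `v` inside `T'` are exactly the descendants of `v` in
`T` that lie in `S`). -/
theorem subtree_sum_eq_binomial (n m : ℕ) (hm : 1 ≤ m) (hmn : m < n)
    (parent : Fin n → Fin n) (root : Fin n)
    (hroot : parent root = root)
    (hreach : ∀ v : Fin n, ∃ k : ℕ, parent^[k] v = root) :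
    ∑ S ∈ Finset.univ.powerset.filter
        (fun S : Finset (Fin n) =>
          root ∈ S ∧ (∀ v ∈ S, parent v ∈ S) ∧ S.card = m),
      ∏ v ∈ S,
        (((Finset.univ.filter (fun w : Fin n => ∃ k : ℕ, parent^[k] w = v)).card : ℚ) /
          ((S.filter (fun w : Fin n => ∃ k : ℕ, parent^[k] w = v)).card : ℚ))
      = (n.factorial : ℚ) / ((m.factorial : ℚ) * ((n - m).factorial : ℚ)) := by
  have h := ParentTree.sum_weight_subtrees hroot hreach hm
  rw [Fintype.card_fin] at h
  rw [← Nat.cast_choose ℚ hmn.le, ← h]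
  refine sum_congr ?_ fun _ _ => rfl
  ext S
  simp [ParentTree.mem_subtrees, ParentTree.IsParentClosed]
end

section
/- Define rational numbers a_T for oriented trees recursively by: a_T = 1 if T has a single vertex, and for T with n ≥ 2 vertices, a_T = (1/n) ∑_{v ∈ V_T} ε_v ∏_s a_{T_s(v)}, where T_s(v) are the oriented trees obtained from T by removing the vertex v together with its incident edges, and ε_v = (−1)^{n_v^+} with n_v^+ the number of edges of T oriented towards v. Then for all oriented trees T_1, T_2, T_3 with marked vertices v_1, v_2, v_3 respectively, one has a_{T̂_1} + a_{T̂_2} − a_{T̂_3} = a_{T_1} · a_{T_2} · a_{T_3}, where T̂_1 is the oriented tree obtained from the disjoint union of T_1, T_2, T_3 by adding the two oriented edges e_1 = (v_2 → v_3) and e_2 = (v_1 → v_3), T̂_2 is obtained by adding e_2 = (v_1 → v_3) and e_3 = (v_1 → v_2), and T̂_3 is obtained by adding e_3 = (v_1 → v_2) and e_1 = (v_2 → v_3). -/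
open scoped Classical

/-- Adjacency induced by a finite set of oriented edges. -/
def OAdj (E : Finset (ℕ × ℕ)) (a c : ℕ) : Prop := (a, c) ∈ E ∨ (c, a) ∈ E

/-- `IsOTree V E` : the oriented edge set `E` makes the finite vertex set `V` into an
(unrooted) tree: edges join distinct vertices of `V`, each edge carries a single
orientation, `|E| = |V| − 1`, and the underlying graph is connected. -/
def IsOTree (V : Finset ℕ) (E : Finset (ℕ × ℕ)) : Prop :=
  V.Nonempty ∧
  (∀ e ∈ E, e.1 ∈ V ∧ e.2 ∈ V ∧ e.1 ≠ e.2) ∧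
  (∀ e ∈ E, (e.2, e.1) ∉ E) ∧
  E.card = V.card - 1 ∧
  (∀ S : Finset ℕ, S ⊆ V → S.Nonempty → S ≠ V →
    ∃ e ∈ E, (e.1 ∈ S ∧ e.2 ∈ V ∧ e.2 ∉ S) ∨ (e.2 ∈ S ∧ e.1 ∈ V ∧ e.1 ∉ S))

/-- The vertex set of the connected component of `u` in the graph obtained from
`(V, E)` by removing the vertex `v` (together with its incident edges). -/
noncomputable def comp (V : Finset ℕ) (E : Finset (ℕ × ℕ)) (v u : ℕ) : Finset ℕ :=
  (V.erase v).filter (fun w =>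
    ∀ S : Finset ℕ, u ∈ S → (∀ a ∈ S, ∀ c ∈ V.erase v, OAdj E a c → c ∈ S) → w ∈ S)

/-- The edges of `E` joining two vertices of the component of `u` after removing `v`. -/
noncomputable def subE (V : Finset ℕ) (E : Finset (ℕ × ℕ)) (v u : ℕ) : Finset (ℕ × ℕ) :=
  E.filter (fun e => e.1 ∈ comp V E v u ∧ e.2 ∈ comp V E v u)

/-! Auxiliary notions -/

def Closed (E : Finset (ℕ × ℕ)) (W C : Finset ℕ) : Prop :=
  ∀ a ∈ C, ∀ c ∈ W, OAdj E a c → c ∈ C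

def Conn (E : Finset (ℕ × ℕ)) (C : Finset ℕ) : Prop :=
  ∀ S : Finset ℕ, S ⊆ C → S.Nonempty → S ≠ C →
    ∃ e ∈ E, (e.1 ∈ S ∧ e.2 ∈ C ∧ e.2 ∉ S) ∨ (e.2 ∈ S ∧ e.1 ∈ C ∧ e.1 ∉ S)

lemma IsOTree.conn {V E} (h : IsOTree V E) : Conn E V := h.2.2.2.2

lemma OAdj.symm {E a c} (h : OAdj E a c) : OAdj E c a := h.elim Or.inr Or.inl

lemma OAdj.mono {E E' : Finset (ℕ × ℕ)} {a c} (hE : E ⊆ E') (h : OAdj E a c) : OAdj E' a c :=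
  h.elim (fun h => Or.inl (hE h)) (fun h => Or.inr (hE h))

lemma Conn.mono {E E' : Finset (ℕ × ℕ)} {C} (hE : E ⊆ E') (h : Conn E C) : Conn E' C := by
  intro S hS hne hne'
  obtain ⟨e, he, hh⟩ := h S hS hne hne'
  exact ⟨e, hE he, hh⟩

/-! comp basics -/

lemma comp_subset {V E v u} : comp V E v u ⊆ V.erase v := Finset.filter_subset _ _

lemma mem_comp_self {V E v u} (hu : u ∈ V.erase v) : u ∈ comp V E v u := by
  simp only [comp, Finset.mem_filter]
  exact ⟨hu, fun S hS _ => hS⟩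

lemma comp_closed {V E v u} : Closed E (V.erase v) (comp V E v u) := by
  intro a ha c hc hadj
  simp only [comp, Finset.mem_filter] at ha ⊢
  exact ⟨hc, fun S hS hcl => hcl a (ha.2 S hS hcl) c hc hadj⟩

lemma comp_min {V E v u} {S : Finset ℕ} (hu : u ∈ S) (hS : Closed E (V.erase v) S) :
    comp V E v u ⊆ S := by
  intro w hw
  simp only [comp, Finset.mem_filter] at hw
  exact hw.2 S hu hS

/-- characterization of `comp` -/
lemma comp_spec {V E v u} {C : Finset ℕ} {F : Finset (ℕ × ℕ)}
    (huC : u ∈ C) (hCV : C ⊆ V.erase v) (hcl : Closed E (V.erase v) C)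
    (hFE : F ⊆ E) (hconn : Conn F C) : comp V E v u = C := by
  apply Finset.Subset.antisymm (comp_min huC hcl)
  intro w hw
  simp only [comp, Finset.mem_filter]
  refine ⟨hCV hw, fun S hS hScl => ?_⟩
  by_contra hws
  -- show C ∩ S = C
  have : C ∩ S ≠ C := by
    intro h
    rw [← h] at hw
    exact hws (Finset.mem_inter.1 hw).2
  obtain ⟨e, heF, hh⟩ := hconn (C ∩ S) Finset.inter_subset_left ⟨u, Finset.mem_inter.2 ⟨huC, hS⟩⟩ this
  have heE : e ∈ E := hFE heF
  rcases hh with ⟨h1, h2, h3⟩ | ⟨h1, h2, h3⟩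
  · have := hScl e.1 (Finset.mem_inter.1 h1).2 e.2 (hCV h2) (Or.inl (by simpa using heE))
    exact h3 (Finset.mem_inter.2 ⟨h2, this⟩)
  · have := hScl e.2 (Finset.mem_inter.1 h1).2 e.1 (hCV h2) (Or.inr (by simpa using heE))
    exact h3 (Finset.mem_inter.2 ⟨h2, this⟩)

/-- `comp` is connected via its internal edges. -/
lemma comp_conn {V E v u} (hu : u ∈ V.erase v) : Conn (subE V E v u) (comp V E v u) := by
  intro S hS hne hnq
  by_contra hc
  push_neg at hc
  -- then S is closed, so comp ⊆ S, so S = comp, contradiction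
  -- no crossing edge: both S and comp \ S are closed
  have hcl : Closed E (V.erase v) S := by
    intro a ha c hcV hadj
    have haC : a ∈ comp V E v u := hS ha
    have hcC : c ∈ comp V E v u := comp_closed a haC c hcV hadj
    by_contra hcS
    rcases hadj with h | h
    · exact hcS ((hc (a, c) (Finset.mem_filter.2 ⟨h, haC, hcC⟩)).1 ha hcC)
    · exact hcS ((hc (c, a) (Finset.mem_filter.2 ⟨h, hcC, haC⟩)).2 ha hcC)
  have hcl' : Closed E (V.erase v) (comp V E v u \ S) := by
    intro a ha c hcV hadj
    rw [Finset.mem_sdiff] at ha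
    have hcC : c ∈ comp V E v u := comp_closed a ha.1 c hcV hadj
    rw [Finset.mem_sdiff]
    refine ⟨hcC, fun hcS => ?_⟩
    rcases hadj with h | h
    · exact ha.2 ((hc (a, c) (Finset.mem_filter.2 ⟨h, ha.1, hcC⟩)).2 hcS ha.1)
    · exact ha.2 ((hc (c, a) (Finset.mem_filter.2 ⟨h, hcC, ha.1⟩)).1 hcS ha.1)
  by_cases huS : u ∈ S
  · exact hnq (Finset.Subset.antisymm hS (comp_min huS hcl))
  · have huS' : u ∈ comp V E v u \ S := Finset.mem_sdiff.2 ⟨mem_comp_self hu, huS⟩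
    obtain ⟨w, hw⟩ := hne
    have := comp_min huS' hcl' (hS hw)
    exact (Finset.mem_sdiff.1 this).2 hw

/-! Counting: a connected set needs at least `card - 1` internal edges. -/

lemma conn_card_aux (n : ℕ) : ∀ (C : Finset ℕ) (F : Finset (ℕ × ℕ)) (S : Finset ℕ),
    Conn F C → S ⊆ C → S.Nonempty →
    S.card ≤ (F.filter (fun e => e.1 ∈ S ∧ e.2 ∈ S)).card + 1 →
    (C \ S).card ≤ n → C.card ≤ F.card + 1 := by
  induction n with
  | zero =>
    intro C F S hconn hS hne hcard hn
    have h0 : C \ S = ∅ := Finset.card_eq_zero.1 (Nat.le_zero.1 hn)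
    have hSC : S = C := Finset.Subset.antisymm hS (fun x hx => by
      by_contra hxs
      exact absurd (Finset.mem_sdiff.2 ⟨hx, hxs⟩) (by simp [h0]))
    subst hSC
    exact hcard.trans (Nat.add_le_add_right (Finset.card_le_card (Finset.filter_subset _ _)) 1)
  | succ n ih =>
    intro C F S hconn hS hne hcard hn
    by_cases hSC : S = C
    · subst hSC
      exact hcard.trans (Nat.add_le_add_right (Finset.card_le_card (Finset.filter_subset _ _)) 1)
    · obtain ⟨e, heF, hh⟩ := hconn S hS hne hSC
      obtain ⟨c, hcC, hcS, h1', h2'⟩ :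
          ∃ c, c ∈ C ∧ c ∉ S ∧ e.1 ∈ insert c S ∧ e.2 ∈ insert c S := by
        rcases hh with ⟨h1, h2, h3⟩ | ⟨h1, h2, h3⟩
        · exact ⟨e.2, h2, h3, Finset.mem_insert_of_mem h1, Finset.mem_insert_self _ _⟩
        · exact ⟨e.1, h2, h3, Finset.mem_insert_self _ _, Finset.mem_insert_of_mem h1⟩
      have heS : e ∉ F.filter (fun e => e.1 ∈ S ∧ e.2 ∈ S) := by
        intro hx
        obtain ⟨_, hx1, hx2⟩ := Finset.mem_filter.1 hx
        rcases hh with ⟨_, _, h3⟩ | ⟨_, _, h3⟩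
        · exact h3 hx2
        · exact h3 hx1
      have hsub : insert e (F.filter (fun e => e.1 ∈ S ∧ e.2 ∈ S)) ⊆
          F.filter (fun e => e.1 ∈ insert c S ∧ e.2 ∈ insert c S) := by
        intro x hx
        rcases Finset.mem_insert.1 hx with rfl | hx
        · exact Finset.mem_filter.2 ⟨heF, h1', h2'⟩
        · obtain ⟨hxF, hx1, hx2⟩ := Finset.mem_filter.1 hx
          exact Finset.mem_filter.2 ⟨hxF, Finset.mem_insert_of_mem hx1,
            Finset.mem_insert_of_mem hx2⟩
      have hcard' : (insert c S).card ≤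
          (F.filter (fun e => e.1 ∈ insert c S ∧ e.2 ∈ insert c S)).card + 1 := by
        rw [Finset.card_insert_of_notMem hcS]
        have := Finset.card_le_card hsub
        rw [Finset.card_insert_of_notMem heS] at this
        omega
      have hsd : (C \ insert c S).card ≤ n := by
        have hss : C \ insert c S ⊆ (C \ S).erase c := by
          intro x hx
          simp only [Finset.mem_sdiff, Finset.mem_insert, not_or] at hx
          exact Finset.mem_erase.2 ⟨hx.2.1, Finset.mem_sdiff.2 ⟨hx.1, hx.2.2⟩⟩
        have := Finset.card_le_card hss
        rw [Finset.card_erase_of_mem (Finset.mem_sdiff.2 ⟨hcC, hcS⟩)] at this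
        omega
      exact ih C F (insert c S) hconn (Finset.insert_subset hcC hS)
        ⟨c, Finset.mem_insert_self _ _⟩ hcard' hsd

lemma conn_card {C : Finset ℕ} {F : Finset (ℕ × ℕ)} (hconn : Conn F C) (hne : C.Nonempty) :
    C.card ≤ (F.filter (fun e => e.1 ∈ C ∧ e.2 ∈ C)).card + 1 := by
  obtain ⟨u, hu⟩ := hne
  have := conn_card_aux (C \ {u}).card C (F.filter (fun e => e.1 ∈ C ∧ e.2 ∈ C)) {u}
    ?_ (by simpa using hu) ⟨u, Finset.mem_singleton_self u⟩ (by simp) le_rfl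
  · exact this
  · intro S hS hne hSC
    obtain ⟨e, heF, hh⟩ := hconn S hS hne hSC
    refine ⟨e, Finset.mem_filter.2 ⟨heF, ?_, ?_⟩, hh⟩
    · rcases hh with ⟨h1, _, _⟩ | ⟨_, h2, _⟩
      · exact hS h1
      · exact h2
    · rcases hh with ⟨_, h2, _⟩ | ⟨h1, _, _⟩
      · exact h2
      · exact hS h1

/-! Symmetry of reachability. -/

lemma mem_comp_symm {V E v u w} (hu : u ∈ V.erase v) (hw : w ∈ comp V E v u) :
    u ∈ comp V E v w := by
  have hS0 : ∀ x ∈ comp V E v u, u ∈ comp V E v x := by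
    intro x hx
    have : comp V E v u ⊆ (V.erase v).filter (fun x => u ∈ comp V E v x) := by
      apply comp_min
      · exact Finset.mem_filter.2 ⟨hu, mem_comp_self hu⟩
      · intro a ha c hc hadj
        rw [Finset.mem_filter] at ha
        have hac : a ∈ comp V E v c := comp_closed c (mem_comp_self hc) a ha.1 hadj.symm
        have : comp V E v a ⊆ comp V E v c := comp_min hac comp_closed
        exact Finset.mem_filter.2 ⟨hc, this ha.2⟩
    exact (Finset.mem_filter.1 (this hx)).2
  exact hS0 w hw

lemma comp_eq_of_mem {V E v u w} (hu : u ∈ V.erase v) (hw : w ∈ comp V E v u) :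
    comp V E v w = comp V E v u := by
  apply Finset.Subset.antisymm
  · exact comp_min hw comp_closed
  · exact comp_min (mem_comp_symm hu hw) comp_closed

/-! Covering: every vertex of `V.erase v` lies in the component of some neighbour of `v`. -/

lemma comp_cover {V E} (h : IsOTree V E) {v : ℕ} (hv : v ∈ V) :
    ∀ w ∈ V.erase v, ∃ u ∈ (V.erase v).filter (fun u => OAdj E u v), w ∈ comp V E v u := by
  set Nv := (V.erase v).filter (fun u => OAdj E u v) with hNv
  set R := insert v (Nv.biUnion (fun u => comp V E v u)) with hR
  have hRV : R ⊆ V := by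
    intro x hx
    rcases Finset.mem_insert.1 hx with rfl | hx
    · exact hv
    · obtain ⟨u, _, hxu⟩ := Finset.mem_biUnion.1 hx
      exact Finset.mem_of_mem_erase (comp_subset hxu)
  have hReq : R = V := by
    by_contra hne
    obtain ⟨e, heE, hh⟩ := h.conn R hRV ⟨v, Finset.mem_insert_self _ _⟩ hne
    obtain ⟨a, c, haR, hcV, hcR, hadj⟩ :
        ∃ a c, a ∈ R ∧ c ∈ V ∧ c ∉ R ∧ OAdj E a c := by
      rcases hh with ⟨h1, h2, h3⟩ | ⟨h1, h2, h3⟩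
      · exact ⟨e.1, e.2, h1, h2, h3, Or.inl (by simpa using heE)⟩
      · exact ⟨e.2, e.1, h1, h2, h3, Or.inr (by simpa using heE)⟩
    have hcv : c ≠ v := fun hcv => hcR (hcv ▸ Finset.mem_insert_self _ _)
    have hcVe : c ∈ V.erase v := Finset.mem_erase.2 ⟨hcv, hcV⟩
    rcases Finset.mem_insert.1 haR with rfl | haB
    · -- a = v : c is a neighbour of v
      have hcN : c ∈ Nv := Finset.mem_filter.2 ⟨hcVe, hadj.symm⟩
      exact hcR (Finset.mem_insert_of_mem (Finset.mem_biUnion.2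
        ⟨c, hcN, mem_comp_self hcVe⟩))
    · obtain ⟨u, huN, hau⟩ := Finset.mem_biUnion.1 haB
      exact hcR (Finset.mem_insert_of_mem (Finset.mem_biUnion.2
        ⟨u, huN, comp_closed a hau c hcVe hadj⟩))
  intro w hw
  have hwR : w ∈ R := hReq ▸ Finset.mem_of_mem_erase hw
  rcases Finset.mem_insert.1 hwR with rfl | hwB
  · exact absurd rfl (Finset.mem_erase.1 hw).1
  · obtain ⟨u, huN, hwu⟩ := Finset.mem_biUnion.1 hwB
    exact ⟨u, huN, hwu⟩

lemma comp_eq_or_disjoint {V E v u u'} (hu : u ∈ V.erase v) (hu' : u' ∈ V.erase v) :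
    comp V E v u = comp V E v u' ∨ Disjoint (comp V E v u) (comp V E v u') := by
  by_cases hd : Disjoint (comp V E v u) (comp V E v u')
  · exact Or.inr hd
  · left
    obtain ⟨x, hx⟩ := Finset.not_disjoint_iff.1 hd
    rw [← comp_eq_of_mem hu hx.1, comp_eq_of_mem hu' hx.2]

/-- number of edges at `v` = number of neighbours of `v` -/
lemma neighbor_edge_card {V E} (h : IsOTree V E) {v : ℕ} :
    (E.filter (fun e => e.1 = v ∨ e.2 = v)).card
      = ((V.erase v).filter (fun u => OAdj E u v)).card := by
  apply Finset.card_bij (fun e _ => if e.1 = v then e.2 else e.1)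
  · intro e he
    obtain ⟨heE, hev⟩ := Finset.mem_filter.1 he
    obtain ⟨h1V, h2V, hne⟩ := h.2.1 e heE
    by_cases h1 : e.1 = v
    · simp only [h1, if_true]
      refine Finset.mem_filter.2 ⟨Finset.mem_erase.2 ⟨fun hh => hne (by rw [h1, hh]), h2V⟩,
        Or.inr ?_⟩
      rw [← h1]; simpa using heE
    · simp only [h1, if_false]
      have h2 : e.2 = v := hev.resolve_left h1
      refine Finset.mem_filter.2 ⟨Finset.mem_erase.2 ⟨fun hh => hne (by rw [h2, hh]), h1V⟩,
        Or.inl ?_⟩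
      rw [← h2]; simpa using heE
  · intro e he e' he' heq
    obtain ⟨heE, hev⟩ := Finset.mem_filter.1 he
    obtain ⟨heE', hev'⟩ := Finset.mem_filter.1 he'
    by_cases a1 : e.1 = v <;> by_cases a2 : e'.1 = v <;>
      simp only [a1, a2, if_true, if_false, if_pos, if_neg, reduceIte] at heq
    · exact Prod.ext_iff.2 ⟨a1.trans a2.symm, heq⟩
    · have b2 : e'.2 = v := hev'.resolve_left a2
      have : (e.2, e.1) = e' := Prod.ext_iff.2 ⟨heq, by rw [a1, b2]⟩
      exact absurd (this ▸ heE') (h.2.2.1 e heE)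
    · have b1 : e.2 = v := hev.resolve_left a1
      have : (e'.2, e'.1) = e := Prod.ext_iff.2 ⟨heq.symm, by rw [a2, b1]⟩
      exact absurd (this ▸ heE) (h.2.2.1 e' heE')
    · have b1 : e.2 = v := hev.resolve_left a1
      have b2 : e'.2 = v := hev'.resolve_left a2
      exact Prod.ext_iff.2 ⟨heq, b1.trans b2.symm⟩
  · intro u hu
    obtain ⟨huV, hadj⟩ := Finset.mem_filter.1 hu
    have huv : u ≠ v := (Finset.mem_erase.1 huV).1
    rcases hadj with hE | hE
    · exact ⟨(u, v), Finset.mem_filter.2 ⟨hE, Or.inr rfl⟩, by simp [huv]⟩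
    · exact ⟨(v, u), Finset.mem_filter.2 ⟨hE, Or.inl rfl⟩, by simp⟩

/-! The main structural theorem: components of a tree minus a vertex. -/

theorem tree_decomp {V E} (h : IsOTree V E) {v : ℕ} (hv : v ∈ V) :
    (∀ u ∈ (V.erase v).filter (fun u => OAdj E u v),
        IsOTree (comp V E v u) (subE V E v u)) ∧
    (∀ u ∈ (V.erase v).filter (fun u => OAdj E u v),
      ∀ u' ∈ (V.erase v).filter (fun u => OAdj E u v),
      ∀ w, w ∈ comp V E v u → w ∈ comp V E v u' → u = u') := by
  classical
  set Nv := (V.erase v).filter (fun u => OAdj E u v) with hNvdef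
  set P := Nv.image (fun u => comp V E v u) with hPdef
  have hNvE : ∀ u ∈ Nv, u ∈ V.erase v := fun u hu => (Finset.mem_filter.1 hu).1
  -- pairwise disjointness of distinct elements of P
  have hPdisj : ∀ C ∈ P, ∀ C' ∈ P, C ≠ C' → Disjoint C C' := by
    intro C hC C' hC' hne
    obtain ⟨u, hu, rfl⟩ := Finset.mem_image.1 hC
    obtain ⟨u', hu', rfl⟩ := Finset.mem_image.1 hC'
    exact (comp_eq_or_disjoint (hNvE u hu) (hNvE u' hu')).resolve_left hne
  -- vertex partition
  have hVP : V.erase v = P.biUnion id := by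
    apply Finset.Subset.antisymm
    · intro w hw
      obtain ⟨u, hu, hwu⟩ := comp_cover h hv w hw
      exact Finset.mem_biUnion.2 ⟨comp V E v u, Finset.mem_image.2 ⟨u, hu, rfl⟩, hwu⟩
    · intro w hw
      obtain ⟨C, hC, hwC⟩ := Finset.mem_biUnion.1 hw
      obtain ⟨u, _, rfl⟩ := Finset.mem_image.1 hC
      exact comp_subset hwC
  have hVcard : (V.erase v).card = ∑ C ∈ P, C.card := by
    rw [hVP, Finset.card_biUnion]
    · rfl
    · exact fun C hC C' hC' hne => hPdisj C hC C' hC' hne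
  -- edge partition
  have hEP : E.filter (fun e => ¬(e.1 = v ∨ e.2 = v))
      = P.biUnion (fun C => E.filter (fun e => e.1 ∈ C ∧ e.2 ∈ C)) := by
    apply Finset.Subset.antisymm
    · intro e he
      obtain ⟨heE, hev⟩ := Finset.mem_filter.1 he
      push_neg at hev
      obtain ⟨h1V, h2V, hne⟩ := h.2.1 e heE
      have h1 : e.1 ∈ V.erase v := Finset.mem_erase.2 ⟨hev.1, h1V⟩
      have h2 : e.2 ∈ V.erase v := Finset.mem_erase.2 ⟨hev.2, h2V⟩
      obtain ⟨u, hu, h1u⟩ := comp_cover h hv e.1 h1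
      have h2u : e.2 ∈ comp V E v u :=
        comp_closed e.1 h1u e.2 h2 (Or.inl (by simpa using heE))
      exact Finset.mem_biUnion.2 ⟨comp V E v u, Finset.mem_image.2 ⟨u, hu, rfl⟩,
        Finset.mem_filter.2 ⟨heE, h1u, h2u⟩⟩
    · intro e he
      obtain ⟨C, hC, heC⟩ := Finset.mem_biUnion.1 he
      obtain ⟨u, _, rfl⟩ := Finset.mem_image.1 hC
      obtain ⟨heE, h1C, h2C⟩ := Finset.mem_filter.1 heC
      refine Finset.mem_filter.2 ⟨heE, ?_⟩
      push_neg
      exact ⟨(Finset.mem_erase.1 (comp_subset h1C)).1,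
        (Finset.mem_erase.1 (comp_subset h2C)).1⟩
  have hEcard : E.card = Nv.card + ∑ C ∈ P, (E.filter (fun e => e.1 ∈ C ∧ e.2 ∈ C)).card := by
    have hsplit := Finset.card_filter_add_card_filter_not
      (s := E) (p := fun e => e.1 = v ∨ e.2 = v)
    rw [← hsplit, neighbor_edge_card h, hEP, Finset.card_biUnion]
    intro C hC C' hC' hne
    have hdisj := hPdisj C hC C' hC' hne
    simp only [Finset.disjoint_left, Finset.mem_filter]
    intro e he he'
    exact (Finset.disjoint_left.1 hdisj) he.2.1 he'.2.1
  -- per-component lower bound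
  have hlow : ∀ C ∈ P, C.card ≤ (E.filter (fun e => e.1 ∈ C ∧ e.2 ∈ C)).card + 1 := by
    intro C hC
    obtain ⟨u, hu, rfl⟩ := Finset.mem_image.1 hC
    exact conn_card ((comp_conn (hNvE u hu)).mono (Finset.filter_subset _ _))
      ⟨u, mem_comp_self (hNvE u hu)⟩
  have hPle : P.card ≤ Nv.card := Finset.card_image_le
  have hV1 : (V.erase v).card = V.card - 1 := Finset.card_erase_of_mem hv
  have hcard1 : 1 ≤ V.card := Finset.card_pos.2 h.1
  have hexp : ∑ C ∈ P, ((E.filter (fun e => e.1 ∈ C ∧ e.2 ∈ C)).card + 1)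
      = (∑ C ∈ P, (E.filter (fun e => e.1 ∈ C ∧ e.2 ∈ C)).card) + P.card := by
    rw [Finset.sum_add_distrib, Finset.sum_const, smul_eq_mul, mul_one]
  have hE4 := h.2.2.2.1
  -- total equality
  have hsum : ∑ C ∈ P, C.card = ∑ C ∈ P, ((E.filter (fun e => e.1 ∈ C ∧ e.2 ∈ C)).card + 1) := by
    have hle : ∑ C ∈ P, C.card ≤ ∑ C ∈ P, ((E.filter (fun e => e.1 ∈ C ∧ e.2 ∈ C)).card + 1) :=
      Finset.sum_le_sum hlow
    omega
  have hterm : ∀ C ∈ P, C.card = (E.filter (fun e => e.1 ∈ C ∧ e.2 ∈ C)).card + 1 :=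
    (Finset.sum_eq_sum_iff_of_le hlow).1 hsum
  have hPcard : P.card = Nv.card := by omega
  have hinj : Set.InjOn (fun u => comp V E v u) Nv := Finset.card_image_iff.1 hPcard
  constructor
  · intro u hu
    have huV := hNvE u hu
    have hCP : comp V E v u ∈ P := Finset.mem_image.2 ⟨u, hu, rfl⟩
    refine ⟨⟨u, mem_comp_self huV⟩, ?_, ?_, ?_, ?_⟩
    · intro e he
      obtain ⟨heE, h1, h2⟩ := Finset.mem_filter.1 he
      exact ⟨h1, h2, (h.2.1 e heE).2.2⟩
    · intro e he he'
      exact h.2.2.1 e (Finset.mem_filter.1 he).1 (Finset.mem_filter.1 he').1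
    · have := hterm _ hCP
      have : (subE V E v u).card = (comp V E v u).card - 1 := by
        rw [subE]; omega
      exact this
    · exact comp_conn huV
  · intro u hu u' hu' w hw hw'
    have : comp V E v u = comp V E v u' := by
      rw [← comp_eq_of_mem (hNvE u hu) hw, comp_eq_of_mem (hNvE u' hu') hw']
    exact hinj hu hu' this

/-! Joining two trees by a bridge edge. -/

lemma conn_join {F1 F2 : Finset (ℕ × ℕ)} {C1 C2 : Finset ℕ} {b : ℕ × ℕ} {p q : ℕ}
    (h1 : Conn F1 C1) (h2 : Conn F2 C2) (hp : p ∈ C1) (hq : q ∈ C2)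
    (hb : b = (p, q) ∨ b = (q, p)) :
    Conn (F1 ∪ F2 ∪ {b}) (C1 ∪ C2) := by
  intro S hS hne hSC
  by_cases hA : S ∩ C1 ≠ ∅ ∧ S ∩ C1 ≠ C1
  · obtain ⟨e, heF, hh⟩ := h1 (S ∩ C1) Finset.inter_subset_right
      (Finset.nonempty_iff_ne_empty.2 hA.1) hA.2
    refine ⟨e, by simp [Finset.mem_union, heF], ?_⟩
    rcases hh with ⟨ha, hc, hcn⟩ | ⟨ha, hc, hcn⟩
    · exact Or.inl ⟨(Finset.mem_inter.1 ha).1, Finset.mem_union_left _ hc,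
        fun hs => hcn (Finset.mem_inter.2 ⟨hs, hc⟩)⟩
    · exact Or.inr ⟨(Finset.mem_inter.1 ha).1, Finset.mem_union_left _ hc,
        fun hs => hcn (Finset.mem_inter.2 ⟨hs, hc⟩)⟩
  by_cases hB : S ∩ C2 ≠ ∅ ∧ S ∩ C2 ≠ C2
  · obtain ⟨e, heF, hh⟩ := h2 (S ∩ C2) Finset.inter_subset_right
      (Finset.nonempty_iff_ne_empty.2 hB.1) hB.2
    refine ⟨e, by simp [Finset.mem_union, heF], ?_⟩
    rcases hh with ⟨ha, hc, hcn⟩ | ⟨ha, hc, hcn⟩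
    · exact Or.inl ⟨(Finset.mem_inter.1 ha).1, Finset.mem_union_right _ hc,
        fun hs => hcn (Finset.mem_inter.2 ⟨hs, hc⟩)⟩
    · exact Or.inr ⟨(Finset.mem_inter.1 ha).1, Finset.mem_union_right _ hc,
        fun hs => hcn (Finset.mem_inter.2 ⟨hs, hc⟩)⟩
  push_neg at hA hB
  have hbmem : b ∈ F1 ∪ F2 ∪ {b} := by simp
  -- each side is all-in or all-out
  have hcase1 : S ∩ C1 = ∅ ∨ S ∩ C1 = C1 := by
    rcases (S ∩ C1).eq_empty_or_nonempty with hh | hh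
    exacts [Or.inl hh, Or.inr (hA hh)]
  have hcase2 : S ∩ C2 = ∅ ∨ S ∩ C2 = C2 := by
    rcases (S ∩ C2).eq_empty_or_nonempty with hh | hh
    exacts [Or.inl hh, Or.inr (hB hh)]
  have hSsub : S = (S ∩ C1) ∪ (S ∩ C2) := by
    rw [← Finset.inter_union_distrib_left]
    exact (Finset.inter_eq_left.2 hS).symm
  rcases hcase1 with hc1 | hc1 <;> rcases hcase2 with hc2 | hc2
  · exfalso; rw [hc1, hc2] at hSsub; simp at hSsub
    exact hne.ne_empty hSsub
  · -- S ⊇ C2, disjoint from C1 : use bridge, q ∈ S, p ∉ S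
    have hqS : q ∈ S := by rw [hSsub, hc1, hc2]; simp [hq]
    have hpS : p ∉ S := fun hps => by
      have : p ∈ S ∩ C1 := Finset.mem_inter.2 ⟨hps, hp⟩
      rw [hc1] at this; simp at this
    refine ⟨b, hbmem, ?_⟩
    rcases hb with rfl | rfl
    · exact Or.inr ⟨hqS, Finset.mem_union_left _ hp, hpS⟩
    · exact Or.inl ⟨hqS, Finset.mem_union_left _ hp, hpS⟩
  · have hpS : p ∈ S := by rw [hSsub, hc1, hc2]; simp [hp]
    have hqS : q ∉ S := fun hqs => by
      have : q ∈ S ∩ C2 := Finset.mem_inter.2 ⟨hqs, hq⟩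
      rw [hc2] at this; simp at this
    refine ⟨b, hbmem, ?_⟩
    rcases hb with rfl | rfl
    · exact Or.inl ⟨hpS, Finset.mem_union_right _ hq, hqS⟩
    · exact Or.inr ⟨hpS, Finset.mem_union_right _ hq, hqS⟩
  · exfalso
    apply hSC
    apply Finset.Subset.antisymm hS
    intro x hx
    rcases Finset.mem_union.1 hx with hx | hx
    · rw [← hc1] at hx; exact (Finset.mem_inter.1 hx).1
    · rw [← hc2] at hx; exact (Finset.mem_inter.1 hx).1

lemma join_tree {V VA VB : Finset ℕ} {E EA EB : Finset (ℕ × ℕ)} {b : ℕ × ℕ} {p q : ℕ}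
    (hV : V = VA ∪ VB) (hE : E = EA ∪ EB ∪ {b})
    (hA : IsOTree VA EA) (hB : IsOTree VB EB) (hd : Disjoint VA VB)
    (hp : p ∈ VA) (hq : q ∈ VB) (hb : b = (p, q) ∨ b = (q, p)) :
    IsOTree V E := by
  have hAspan := hA.2.1
  have hBspan := hB.2.1
  have hpq : p ≠ q := fun h => Finset.disjoint_left.1 hd hp (h ▸ hq)
  have hbEA : b ∉ EA := by
    intro hmem
    rcases hb with rfl | rfl
    · exact Finset.disjoint_left.1 hd (hAspan _ hmem).2.1 hq
    · exact Finset.disjoint_left.1 hd (hAspan _ hmem).1 hq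
  have hbEB : b ∉ EB := by
    intro hmem
    rcases hb with rfl | rfl
    · exact Finset.disjoint_left.1 hd hp (hBspan _ hmem).1
    · exact Finset.disjoint_left.1 hd hp (hBspan _ hmem).2.1
  have hdE : Disjoint EA EB := by
    rw [Finset.disjoint_left]
    intro e heA heB
    exact Finset.disjoint_left.1 hd (hAspan e heA).1 (hBspan e heB).1
  subst hV hE
  refine ⟨Finset.Nonempty.mono Finset.subset_union_left hA.1, ?_, ?_, ?_, ?_⟩
  · intro e he
    rcases Finset.mem_union.1 he with he' | he'
    · rcases Finset.mem_union.1 he' with h | h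
      · obtain ⟨h1, h2, h3⟩ := hAspan e h
        exact ⟨Finset.mem_union_left _ h1, Finset.mem_union_left _ h2, h3⟩
      · obtain ⟨h1, h2, h3⟩ := hBspan e h
        exact ⟨Finset.mem_union_right _ h1, Finset.mem_union_right _ h2, h3⟩
    · have : e = b := Finset.mem_singleton.1 he'
      subst this
      rcases hb with rfl | rfl
      · exact ⟨Finset.mem_union_left _ hp, Finset.mem_union_right _ hq, hpq⟩
      · exact ⟨Finset.mem_union_right _ hq, Finset.mem_union_left _ hp, hpq.symm⟩
  · intro e he hrev
    have hside : ∀ f : ℕ × ℕ, f ∈ EA ∪ EB ∪ {b} →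
        (f.1 ∈ VA ∧ f.2 ∈ VA ∧ f ∈ EA) ∨ (f.1 ∈ VB ∧ f.2 ∈ VB ∧ f ∈ EB) ∨ f = b := by
      intro f hf
      rcases Finset.mem_union.1 hf with hf' | hf'
      · rcases Finset.mem_union.1 hf' with h | h
        · exact Or.inl ⟨(hAspan f h).1, (hAspan f h).2.1, h⟩
        · exact Or.inr (Or.inl ⟨(hBspan f h).1, (hBspan f h).2.1, h⟩)
      · exact Or.inr (Or.inr (Finset.mem_singleton.1 hf'))
    have hD := Finset.disjoint_left.1 hd
    rcases hside e he with ⟨e1, e2, heE⟩ | ⟨e1, e2, heE⟩ | rfl <;>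
      rcases hside _ hrev with ⟨f1, f2, hfE⟩ | ⟨f1, f2, hfE⟩ | hfb
    · exact hA.2.2.1 e heE hfE
    · exact hD e2 f1
    · rcases hb with rfl | rfl <;> rw [Prod.ext_iff] at hfb <;> simp at hfb
      · exact hD (hfb.2 ▸ e1) hq
      · exact hD (hfb.1 ▸ e2) hq
    · exact hD f1 e2
    · exact hB.2.2.1 e heE hfE
    · rcases hb with rfl | rfl <;> rw [Prod.ext_iff] at hfb <;> simp at hfb
      · exact hD hp (hfb.1 ▸ e2)
      · exact hD hp (hfb.2 ▸ e1)
    · rcases hb with rfl | rfl <;> simp at f1 f2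
      · exact hD f1 hq
      · exact hD f2 hq
    · rcases hb with rfl | rfl <;> simp at f1 f2
      · exact hD hp f2
      · exact hD hp f1
    · rcases hb with rfl | rfl <;> rw [Prod.ext_iff] at hfb <;> simp at hfb <;>
        exact hpq (by omega)
  · have hbU : b ∉ EA ∪ EB := by
      intro hx
      rcases Finset.mem_union.1 hx with h | h
      · exact hbEA h
      · exact hbEB h
    have h1 : (EA ∪ EB ∪ {b}).card = EA.card + EB.card + 1 := by
      rw [Finset.card_union_of_disjoint (Finset.disjoint_singleton_right.2 hbU),
        Finset.card_union_of_disjoint hdE]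
      simp
    have h2 : (VA ∪ VB).card = VA.card + VB.card := Finset.card_union_of_disjoint hd
    have hA1 : 1 ≤ VA.card := Finset.card_pos.2 hA.1
    have hB1 : 1 ≤ VB.card := Finset.card_pos.2 hB.1
    have := hA.2.2.2.1
    have := hB.2.2.2.1
    omega
  · exact conn_join (F1 := EA) (F2 := EB) hA.conn hB.conn hp hq hb

/-! Components, neighbours and in-degrees in a join of two trees. -/

lemma oadj_union {E F : Finset (ℕ × ℕ)} {a c : ℕ} :
    OAdj (E ∪ F) a c ↔ OAdj E a c ∨ OAdj F a c := by
  simp only [OAdj, Finset.mem_union]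
  tauto

lemma oadj_singleton {b : ℕ × ℕ} {a c : ℕ} :
    OAdj {b} a c ↔ (a = b.1 ∧ c = b.2) ∨ (a = b.2 ∧ c = b.1) := by
  simp only [OAdj, Finset.mem_singleton, Prod.ext_iff]
  tauto

lemma oadj_span {E : Finset (ℕ × ℕ)} {VA : Finset ℕ} {a c : ℕ}
    (hsp : ∀ e ∈ E, e.1 ∈ VA ∧ e.2 ∈ VA) (h : OAdj E a c) : a ∈ VA ∧ c ∈ VA := by
  rcases h with h | h
  · exact ⟨(hsp _ h).1, (hsp _ h).2⟩
  · exact ⟨(hsp _ h).2, (hsp _ h).1⟩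

section Join

variable {V VA VB : Finset ℕ} {E EA EB : Finset (ℕ × ℕ)} {b : ℕ × ℕ} {p q v u : ℕ}

lemma bridge_not_memA (hAspan : ∀ e ∈ EA, e.1 ∈ VA ∧ e.2 ∈ VA)
    (hd : Disjoint VA VB) (hq : q ∈ VB) (hb : b = (p, q) ∨ b = (q, p)) : b ∉ EA := by
  intro hmem
  rcases hb with rfl | rfl
  · exact Finset.disjoint_left.1 hd (hAspan _ hmem).2 hq
  · exact Finset.disjoint_left.1 hd (hAspan _ hmem).1 hq

lemma join_comp_out (hV : V = VA ∪ VB) (hE : E = EA ∪ EB ∪ {b})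
    (hAspan : ∀ e ∈ EA, e.1 ∈ VA ∧ e.2 ∈ VA) (hBspan : ∀ e ∈ EB, e.1 ∈ VB ∧ e.2 ∈ VB)
    (hd : Disjoint VA VB) (hp : p ∈ VA) (hq : q ∈ VB) (hb : b = (p, q) ∨ b = (q, p))
    (hu : u ∈ VA.erase v) (hpu : p ∉ comp VA EA v u) :
    comp V E v u = comp VA EA v u ∧ subE V E v u = subE VA EA v u := by
  have hD := Finset.disjoint_left.1 hd
  have hCVA : comp VA EA v u ⊆ VA := fun x hx => Finset.mem_of_mem_erase (comp_subset hx)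
  have hcomp : comp V E v u = comp VA EA v u := by
    apply comp_spec (F := subE VA EA v u) (mem_comp_self hu)
    · intro x hx
      have := comp_subset hx
      rw [Finset.mem_erase] at this ⊢
      exact ⟨this.1, hV ▸ Finset.mem_union_left _ this.2⟩
    · intro a ha c hc hadj
      rw [hE, oadj_union, oadj_union] at hadj
      rcases hadj with (hadj | hadj) | hadj
      · have hcVA := (oadj_span hAspan hadj).2
        exact comp_closed a ha c
          (Finset.mem_erase.2 ⟨(Finset.mem_erase.1 hc).1, hcVA⟩) hadj
      · exact absurd (oadj_span hBspan hadj).1 (fun hx => hD (hCVA ha) hx)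
      · rw [oadj_singleton] at hadj
        exfalso
        rcases hb with rfl | rfl
        · rcases (hadj : (a = p ∧ c = q) ∨ (a = q ∧ c = p)) with ⟨h1, _⟩ | ⟨h1, _⟩
          · rw [h1] at ha; exact hpu ha
          · exact hD (hCVA ha) (by rw [h1]; exact hq)
        · rcases (hadj : (a = q ∧ c = p) ∨ (a = p ∧ c = q)) with ⟨h1, _⟩ | ⟨h1, _⟩
          · exact hD (hCVA ha) (by rw [h1]; exact hq)
          · rw [h1] at ha; exact hpu ha
    · exact hE ▸ (Finset.Subset.trans (Finset.filter_subset _ _)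
        (Finset.Subset.trans Finset.subset_union_left Finset.subset_union_left))
    · exact comp_conn hu
  refine ⟨hcomp, ?_⟩
  simp only [subE, hcomp]
  rw [hE]
  apply Finset.Subset.antisymm
  · intro e he
    obtain ⟨heE, h1, h2⟩ := Finset.mem_filter.1 he
    rcases Finset.mem_union.1 heE with h | h
    · rcases Finset.mem_union.1 h with h | h
      · exact Finset.mem_filter.2 ⟨h, h1, h2⟩
      · exact absurd (hBspan e h).1 (fun hx => hD (hCVA h1) hx)
    · exfalso
      have heb : e = b := Finset.mem_singleton.1 h
      subst heb
      rcases hb with rfl | rfl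
      · exact hD (hCVA h2) hq
      · exact hD (hCVA h1) hq
  · intro e he
    obtain ⟨heE, h1, h2⟩ := Finset.mem_filter.1 he
    exact Finset.mem_filter.2 ⟨Finset.mem_union_left _ (Finset.mem_union_left _ heE), h1, h2⟩

lemma join_comp_in (hV : V = VA ∪ VB) (hE : E = EA ∪ EB ∪ {b})
    (hAspan : ∀ e ∈ EA, e.1 ∈ VA ∧ e.2 ∈ VA) (hBspan : ∀ e ∈ EB, e.1 ∈ VB ∧ e.2 ∈ VB)
    (hd : Disjoint VA VB) (hp : p ∈ VA) (hq : q ∈ VB) (hb : b = (p, q) ∨ b = (q, p))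
    (hv : v ∈ VA) (hu : u ∈ VA.erase v) (hpu : p ∈ comp VA EA v u)
    (hBconn : Conn EB VB) :
    comp V E v u = comp VA EA v u ∪ VB ∧
      subE V E v u = subE VA EA v u ∪ EB ∪ {b} := by
  have hD := Finset.disjoint_left.1 hd
  have hCVA : comp VA EA v u ⊆ VA := fun x hx => Finset.mem_of_mem_erase (comp_subset hx)
  have hvB : v ∉ VB := fun hx => hD hv hx
  have hcomp : comp V E v u = comp VA EA v u ∪ VB := by
    apply comp_spec (F := subE VA EA v u ∪ EB ∪ {b}) (Finset.mem_union_left _ (mem_comp_self hu))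
    · intro x hx
      rcases Finset.mem_union.1 hx with hx | hx
      · have := comp_subset hx
        rw [Finset.mem_erase] at this ⊢
        exact ⟨this.1, hV ▸ Finset.mem_union_left _ this.2⟩
      · exact Finset.mem_erase.2 ⟨fun h => hvB (h ▸ hx), hV ▸ Finset.mem_union_right _ hx⟩
    · intro a ha c hc hadj
      rw [hE, oadj_union, oadj_union] at hadj
      rcases hadj with (hadj | hadj) | hadj
      · have haVA := (oadj_span hAspan hadj).1
        have hcVA := (oadj_span hAspan hadj).2
        have haC : a ∈ comp VA EA v u := by
          rcases Finset.mem_union.1 ha with h | h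
          · exact h
          · exact absurd haVA (fun hx => hD hx h)
        exact Finset.mem_union_left _ (comp_closed a haC c
          (Finset.mem_erase.2 ⟨(Finset.mem_erase.1 hc).1, hcVA⟩) hadj)
      · exact Finset.mem_union_right _ (oadj_span hBspan hadj).2
      · rw [oadj_singleton] at hadj
        rcases hb with rfl | rfl
        · rcases (hadj : (a = p ∧ c = q) ∨ (a = q ∧ c = p)) with ⟨_, h2⟩ | ⟨_, h2⟩
          · rw [h2]; exact Finset.mem_union_right _ hq
          · rw [h2]; exact Finset.mem_union_left _ hpu
        · rcases (hadj : (a = q ∧ c = p) ∨ (a = p ∧ c = q)) with ⟨_, h2⟩ | ⟨_, h2⟩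
          · rw [h2]; exact Finset.mem_union_left _ hpu
          · rw [h2]; exact Finset.mem_union_right _ hq
    · rw [hE]
      intro e he
      rcases Finset.mem_union.1 he with h | h
      · rcases Finset.mem_union.1 h with h | h
        · exact Finset.mem_union_left _ (Finset.mem_union_left _ (Finset.filter_subset _ _ h))
        · exact Finset.mem_union_left _ (Finset.mem_union_right _ h)
      · exact Finset.mem_union_right _ h
    · exact conn_join (comp_conn hu) hBconn hpu hq hb
  refine ⟨hcomp, ?_⟩
  simp only [subE, hcomp]
  rw [hE]
  apply Finset.Subset.antisymm
  · intro e he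
    obtain ⟨heE, h1, h2⟩ := Finset.mem_filter.1 he
    rcases Finset.mem_union.1 heE with h | h
    · rcases Finset.mem_union.1 h with h | h
      · -- e ∈ EA : both endpoints in VA hence in comp_A
        have e1 : e.1 ∈ comp VA EA v u := by
          rcases Finset.mem_union.1 h1 with hx | hx
          · exact hx
          · exact absurd (hAspan e h).1 (fun hy => hD hy hx)
        have e2 : e.2 ∈ comp VA EA v u := by
          rcases Finset.mem_union.1 h2 with hx | hx
          · exact hx
          · exact absurd (hAspan e h).2 (fun hy => hD hy hx)
        exact Finset.mem_union_left _ (Finset.mem_union_left _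
          (Finset.mem_filter.2 ⟨h, e1, e2⟩))
      · exact Finset.mem_union_left _ (Finset.mem_union_right _ h)
    · exact Finset.mem_union_right _ h
  · intro e he
    rcases Finset.mem_union.1 he with h | h
    · rcases Finset.mem_union.1 h with h | h
      · obtain ⟨heE, h1, h2⟩ := Finset.mem_filter.1 h
        exact Finset.mem_filter.2 ⟨Finset.mem_union_left _ (Finset.mem_union_left _ heE),
          Finset.mem_union_left _ h1, Finset.mem_union_left _ h2⟩
      · exact Finset.mem_filter.2 ⟨Finset.mem_union_left _ (Finset.mem_union_right _ h),
          Finset.mem_union_right _ (hBspan e h).1, Finset.mem_union_right _ (hBspan e h).2⟩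
    · have heb : e = b := Finset.mem_singleton.1 h
      subst heb
      refine Finset.mem_filter.2 ⟨Finset.mem_union_right _ (Finset.mem_singleton_self _), ?_, ?_⟩
      · rcases hb with hb' | hb' <;> rw [hb']
        · exact Finset.mem_union_left _ hpu
        · exact Finset.mem_union_right _ hq
      · rcases hb with hb' | hb' <;> rw [hb']
        · exact Finset.mem_union_right _ hq
        · exact Finset.mem_union_left _ hpu

lemma join_comp_bridge (hV : V = VA ∪ VB) (hE : E = EA ∪ EB ∪ {b})
    (hAspan : ∀ e ∈ EA, e.1 ∈ VA ∧ e.2 ∈ VA) (hBspan : ∀ e ∈ EB, e.1 ∈ VB ∧ e.2 ∈ VB)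
    (hd : Disjoint VA VB) (hp : p ∈ VA) (hq : q ∈ VB) (hb : b = (p, q) ∨ b = (q, p))
    (hBconn : Conn EB VB) :
    comp V E p q = VB ∧ subE V E p q = EB := by
  have hD := Finset.disjoint_left.1 hd
  have hqp : q ≠ p := fun h => hD hp (h ▸ hq)
  have hcomp : comp V E p q = VB := by
    apply comp_spec (F := EB) (hq)
    · intro x hx
      exact Finset.mem_erase.2 ⟨fun h => hD (h ▸ hp) hx, hV ▸ Finset.mem_union_right _ hx⟩
    · intro a ha c hc hadj
      rw [hE, oadj_union, oadj_union] at hadj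
      rcases hadj with (hadj | hadj) | hadj
      · exact absurd (oadj_span hAspan hadj).1 (fun hx => hD hx ha)
      · exact (oadj_span hBspan hadj).2
      · rw [oadj_singleton] at hadj
        exfalso
        rcases hb with rfl | rfl
        · rcases (hadj : (a = p ∧ c = q) ∨ (a = q ∧ c = p)) with ⟨h1, _⟩ | ⟨_, h2⟩
          · exact hD hp ((show a = p from h1) ▸ ha)
          · exact (Finset.mem_erase.1 hc).1 h2
        · rcases (hadj : (a = q ∧ c = p) ∨ (a = p ∧ c = q)) with ⟨_, h2⟩ | ⟨h1, _⟩
          · exact (Finset.mem_erase.1 hc).1 h2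
          · exact hD hp ((show a = p from h1) ▸ ha)
    · exact hE ▸ (Finset.Subset.trans Finset.subset_union_right Finset.subset_union_left
        : EB ⊆ _)
    · exact hBconn
  refine ⟨hcomp, ?_⟩
  simp only [subE, hcomp]
  rw [hE]
  apply Finset.Subset.antisymm
  · intro e he
    obtain ⟨heE, h1, h2⟩ := Finset.mem_filter.1 he
    rcases Finset.mem_union.1 heE with h | h
    · rcases Finset.mem_union.1 h with h | h
      · exact absurd (hAspan e h).1 (fun hx => hD hx h1)
      · exact h
    · exfalso
      have heb : e = b := Finset.mem_singleton.1 h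
      subst heb
      rcases hb with rfl | rfl
      · exact hD hp h1
      · exact hD hp h2
  · intro e he
    exact Finset.mem_filter.2 ⟨Finset.mem_union_left _ (Finset.mem_union_right _ he),
      (hBspan e he).1, (hBspan e he).2⟩

lemma join_nbr (hV : V = VA ∪ VB) (hE : E = EA ∪ EB ∪ {b})
    (hAspan : ∀ e ∈ EA, e.1 ∈ VA ∧ e.2 ∈ VA) (hBspan : ∀ e ∈ EB, e.1 ∈ VB ∧ e.2 ∈ VB)
    (hd : Disjoint VA VB) (hp : p ∈ VA) (hq : q ∈ VB) (hb : b = (p, q) ∨ b = (q, p))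
    (hv : v ∈ VA) (hvp : v ≠ p) :
    (V.erase v).filter (fun u => OAdj E u v) = (VA.erase v).filter (fun u => OAdj EA u v) := by
  have hD := Finset.disjoint_left.1 hd
  apply Finset.Subset.antisymm
  · intro x hx
    obtain ⟨hxV, hadj⟩ := Finset.mem_filter.1 hx
    rw [hE, oadj_union, oadj_union] at hadj
    rcases hadj with (hadj | hadj) | hadj
    · exact Finset.mem_filter.2 ⟨Finset.mem_erase.2
        ⟨(Finset.mem_erase.1 hxV).1, (oadj_span hAspan hadj).1⟩, hadj⟩
    · exact absurd (oadj_span hBspan hadj).2 (fun hy => hD hv hy)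
    · rw [oadj_singleton] at hadj
      exfalso
      rcases hb with rfl | rfl
      · rcases (hadj : (x = p ∧ v = q) ∨ (x = q ∧ v = p)) with ⟨_, h2⟩ | ⟨_, h2⟩
        · exact hD hv (by rw [h2]; exact hq)
        · exact hvp h2
      · rcases (hadj : (x = q ∧ v = p) ∨ (x = p ∧ v = q)) with ⟨_, h2⟩ | ⟨_, h2⟩
        · exact hvp h2
        · exact hD hv (by rw [h2]; exact hq)
  · intro x hx
    obtain ⟨hxV, hadj⟩ := Finset.mem_filter.1 hx
    refine Finset.mem_filter.2 ⟨Finset.mem_erase.2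
      ⟨(Finset.mem_erase.1 hxV).1, hV ▸ Finset.mem_union_left _ (Finset.mem_of_mem_erase hxV)⟩,
      ?_⟩
    rw [hE, oadj_union, oadj_union]
    exact Or.inl (Or.inl hadj)

lemma join_nbr_p (hV : V = VA ∪ VB) (hE : E = EA ∪ EB ∪ {b})
    (hAspan : ∀ e ∈ EA, e.1 ∈ VA ∧ e.2 ∈ VA) (hBspan : ∀ e ∈ EB, e.1 ∈ VB ∧ e.2 ∈ VB)
    (hd : Disjoint VA VB) (hp : p ∈ VA) (hq : q ∈ VB) (hb : b = (p, q) ∨ b = (q, p)) :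
    (V.erase p).filter (fun u => OAdj E u p)
      = insert q ((VA.erase p).filter (fun u => OAdj EA u p)) := by
  have hD := Finset.disjoint_left.1 hd
  apply Finset.Subset.antisymm
  · intro x hx
    obtain ⟨hxV, hadj⟩ := Finset.mem_filter.1 hx
    rw [hE, oadj_union, oadj_union] at hadj
    rcases hadj with (hadj | hadj) | hadj
    · exact Finset.mem_insert_of_mem (Finset.mem_filter.2 ⟨Finset.mem_erase.2
        ⟨(Finset.mem_erase.1 hxV).1, (oadj_span hAspan hadj).1⟩, hadj⟩)
    · exact absurd (oadj_span hBspan hadj).2 (fun hy => hD hp hy)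
    · rw [oadj_singleton] at hadj
      rcases hb with rfl | rfl
      · rcases (hadj : (x = p ∧ p = q) ∨ (x = q ∧ p = p)) with ⟨_, h2⟩ | ⟨h1, _⟩
        · exact (hD hp (by rw [h2]; exact hq)).elim
        · rw [h1]; exact Finset.mem_insert_self _ _
      · rcases (hadj : (x = q ∧ p = p) ∨ (x = p ∧ p = q)) with ⟨h1, _⟩ | ⟨_, h2⟩
        · rw [h1]; exact Finset.mem_insert_self _ _
        · exact (hD hp (by rw [h2]; exact hq)).elim
  · intro x hx
    rcases Finset.mem_insert.1 hx with rfl | hx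
    · refine Finset.mem_filter.2 ⟨Finset.mem_erase.2
        ⟨fun h => hD (h ▸ hp) hq, hV ▸ Finset.mem_union_right _ hq⟩, ?_⟩
      rw [hE]
      rcases hb with rfl | rfl
      · exact Or.inr (by simp)
      · exact Or.inl (by simp)
    · obtain ⟨hxV, hadj⟩ := Finset.mem_filter.1 hx
      refine Finset.mem_filter.2 ⟨Finset.mem_erase.2
        ⟨(Finset.mem_erase.1 hxV).1, hV ▸ Finset.mem_union_left _ (Finset.mem_of_mem_erase hxV)⟩,
        ?_⟩
      rw [hE, oadj_union, oadj_union]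
      exact Or.inl (Or.inl hadj)

lemma join_eps (hE : E = EA ∪ EB ∪ {b})
    (hBspan : ∀ e ∈ EB, e.1 ∈ VB ∧ e.2 ∈ VB)
    (hvB : v ∉ VB) (hb2 : b.2 ≠ v) :
    E.filter (fun e => e.2 = v) = EA.filter (fun e => e.2 = v) := by
  rw [hE]
  apply Finset.Subset.antisymm
  · intro e he
    obtain ⟨heE, h2⟩ := Finset.mem_filter.1 he
    rcases Finset.mem_union.1 heE with h | h
    · rcases Finset.mem_union.1 h with h | h
      · exact Finset.mem_filter.2 ⟨h, h2⟩
      · exact absurd (h2 ▸ (hBspan e h).2) hvB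
    · have heb : e = b := Finset.mem_singleton.1 h
      rw [heb] at h2
      exact absurd h2 hb2
  · intro e he
    obtain ⟨heE, h2⟩ := Finset.mem_filter.1 he
    exact Finset.mem_filter.2 ⟨Finset.mem_union_left _ (Finset.mem_union_left _ heE), h2⟩

lemma join_eps_head (hE : E = EA ∪ EB ∪ {b})
    (hBspan : ∀ e ∈ EB, e.1 ∈ VB ∧ e.2 ∈ VB)
    (hvB : v ∉ VB) (hb2 : b.2 = v) :
    E.filter (fun e => e.2 = v) = insert b (EA.filter (fun e => e.2 = v)) := by
  rw [hE]
  apply Finset.Subset.antisymm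
  · intro e he
    obtain ⟨heE, h2⟩ := Finset.mem_filter.1 he
    rcases Finset.mem_union.1 heE with h | h
    · rcases Finset.mem_union.1 h with h | h
      · exact Finset.mem_insert_of_mem (Finset.mem_filter.2 ⟨h, h2⟩)
      · exact absurd (h2 ▸ (hBspan e h).2) hvB
    · exact (Finset.mem_singleton.1 h) ▸ Finset.mem_insert_self _ _
  · intro e he
    rcases Finset.mem_insert.1 he with rfl | he
    · exact Finset.mem_filter.2 ⟨Finset.mem_union_right _ (Finset.mem_singleton_self _), hb2⟩
    · obtain ⟨heE, h2⟩ := Finset.mem_filter.1 he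
      exact Finset.mem_filter.2 ⟨Finset.mem_union_left _ (Finset.mem_union_left _ heE), h2⟩

end Join

/-! The per-vertex computation for vertices of `V₁`. -/

noncomputable def term (a : Finset ℕ → Finset (ℕ × ℕ) → ℚ)
    (V : Finset ℕ) (E : Finset (ℕ × ℕ)) (v : ℕ) : ℚ :=
  (-1 : ℚ) ^ (E.filter (fun e => e.2 = v)).card *
    ∏ u ∈ (V.erase v).filter (fun u => OAdj E u v), a (comp V E v u) (subE V E v u)

lemma span_of {V E} (h : IsOTree V E) : ∀ e ∈ E, e.1 ∈ V ∧ e.2 ∈ V :=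
  fun e he => ⟨(h.2.1 e he).1, (h.2.1 e he).2.1⟩

set_option maxHeartbeats 2000000 in
lemma class1 (a : Finset ℕ → Finset (ℕ × ℕ) → ℚ)
    {V₁ V₂ V₃ : Finset ℕ} {E₁ E₂ E₃ : Finset (ℕ × ℕ)} {v₁ v₂ v₃ : ℕ}
    (h₁ : IsOTree V₁ E₁) (h₂ : IsOTree V₂ E₂) (h₃ : IsOTree V₃ E₃)
    (hm₁ : v₁ ∈ V₁) (hm₂ : v₂ ∈ V₂) (hm₃ : v₃ ∈ V₃)
    (h₁₂ : Disjoint V₁ V₂) (h₁₃ : Disjoint V₁ V₃) (h₂₃ : Disjoint V₂ V₃)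
    (IH : ∀ C F, IsOTree C F → C ⊆ V₁ → v₁ ∈ C → C.card < V₁.card →
      a (C ∪ V₂ ∪ V₃) (F ∪ E₂ ∪ E₃ ∪ {(v₂, v₃), (v₁, v₃)})
        + a (C ∪ V₂ ∪ V₃) (F ∪ E₂ ∪ E₃ ∪ {(v₁, v₃), (v₁, v₂)})
        - a (C ∪ V₂ ∪ V₃) (F ∪ E₂ ∪ E₃ ∪ {(v₁, v₂), (v₂, v₃)})
        = a C F * a V₂ E₂ * a V₃ E₃)
    {v : ℕ} (hv : v ∈ V₁) :
    term a (V₁ ∪ V₂ ∪ V₃) (E₁ ∪ E₂ ∪ E₃ ∪ {(v₂, v₃), (v₁, v₃)}) v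
      + term a (V₁ ∪ V₂ ∪ V₃) (E₁ ∪ E₂ ∪ E₃ ∪ {(v₁, v₃), (v₁, v₂)}) v
      - term a (V₁ ∪ V₂ ∪ V₃) (E₁ ∪ E₂ ∪ E₃ ∪ {(v₁, v₂), (v₂, v₃)}) v
      = term a V₁ E₁ v * (a V₂ E₂ * a V₃ E₃) := by
  have sp₁ := span_of h₁
  have sp₂ := span_of h₂
  have sp₃ := span_of h₃
  have t23 : IsOTree (V₂ ∪ V₃) (E₂ ∪ E₃ ∪ {(v₂, v₃)}) :=
    join_tree rfl rfl h₂ h₃ h₂₃ hm₂ hm₃ (Or.inl rfl)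
  have t13 : IsOTree (V₁ ∪ V₃) (E₁ ∪ E₃ ∪ {(v₁, v₃)}) :=
    join_tree rfl rfl h₁ h₃ h₁₃ hm₁ hm₃ (Or.inl rfl)
  have t12 : IsOTree (V₁ ∪ V₂) (E₁ ∪ E₂ ∪ {(v₁, v₂)}) :=
    join_tree rfl rfl h₁ h₂ h₁₂ hm₁ hm₂ (Or.inl rfl)
  have sp23 := span_of t23
  have sp13 := span_of t13
  have sp12 := span_of t12
  have d1_23 : Disjoint V₁ (V₂ ∪ V₃) := Finset.disjoint_union_right.2 ⟨h₁₂, h₁₃⟩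
  have d13_2 : Disjoint (V₁ ∪ V₃) V₂ := Finset.disjoint_union_left.2 ⟨h₁₂, h₂₃.symm⟩
  have d12_3 : Disjoint (V₁ ∪ V₂) V₃ := Finset.disjoint_union_left.2 ⟨h₁₃, h₂₃⟩
  have hvV₂ : v ∉ V₂ := Finset.disjoint_left.1 h₁₂ hv
  have hvV₃ : v ∉ V₃ := Finset.disjoint_left.1 h₁₃ hv
  have hv23 : v ∉ V₂ ∪ V₃ := by
    rw [Finset.mem_union]; rintro (h | h); exacts [hvV₂ h, hvV₃ h]
  have hne₂ : v₂ ≠ v := fun h => hvV₂ (h ▸ hm₂)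
  have hne₃ : v₃ ≠ v := fun h => hvV₃ (h ▸ hm₃)
  have vO : V₁ ∪ V₂ ∪ V₃ = V₁ ∪ (V₂ ∪ V₃) := Finset.union_assoc _ _ _
  have v2O : V₁ ∪ V₂ ∪ V₃ = (V₁ ∪ V₃) ∪ V₂ := by ext x; simp [Finset.mem_union]; tauto
  have e1 : E₁ ∪ E₂ ∪ E₃ ∪ {(v₂, v₃), (v₁, v₃)}
      = E₁ ∪ (E₂ ∪ E₃ ∪ {(v₂, v₃)}) ∪ {(v₁, v₃)} := by
    ext e; simp [Finset.mem_union, Finset.mem_insert]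
  have e2 : E₁ ∪ E₂ ∪ E₃ ∪ {(v₁, v₃), (v₁, v₂)}
      = (E₁ ∪ E₃ ∪ {(v₁, v₃)}) ∪ E₂ ∪ {(v₁, v₂)} := by
    ext e; simp [Finset.mem_union, Finset.mem_insert]; tauto
  have e3 : E₁ ∪ E₂ ∪ E₃ ∪ {(v₁, v₂), (v₂, v₃)}
      = (E₁ ∪ E₂ ∪ {(v₁, v₂)}) ∪ E₃ ∪ {(v₂, v₃)} := by
    ext e; simp [Finset.mem_union, Finset.mem_insert]
  -- in-degree counts agree with those inside T₁
  have heps1 : (E₁ ∪ E₂ ∪ E₃ ∪ {(v₂, v₃), (v₁, v₃)}).filter (fun e => e.2 = v)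
      = E₁.filter (fun e => e.2 = v) :=
    join_eps (VB := V₂ ∪ V₃) e1 sp23 hv23 hne₃
  have heps2 : (E₁ ∪ E₂ ∪ E₃ ∪ {(v₁, v₃), (v₁, v₂)}).filter (fun e => e.2 = v)
      = E₁.filter (fun e => e.2 = v) := by
    rw [join_eps (VB := V₂) e2 sp₂ hvV₂ hne₂]
    exact join_eps (VB := V₃) rfl sp₃ hvV₃ hne₃
  have heps3 : (E₁ ∪ E₂ ∪ E₃ ∪ {(v₁, v₂), (v₂, v₃)}).filter (fun e => e.2 = v)
      = E₁.filter (fun e => e.2 = v) := by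
    rw [join_eps (VB := V₃) e3 sp₃ hvV₃ hne₃]
    exact join_eps (VB := V₂) rfl sp₂ hvV₂ hne₂
  have hself : ∀ (W : Finset ℕ) (F : Finset (ℕ × ℕ)) (w u' : ℕ), w ∉ comp W F w u' :=
    fun W F w u' h => (Finset.mem_erase.1 (comp_subset h)).1 rfl
  by_cases hvv : v = v₁
  · subst hvv
    -- neighbour sets
    have hnbr1 : ((V₁ ∪ V₂ ∪ V₃).erase v).filter
          (fun u => OAdj (E₁ ∪ E₂ ∪ E₃ ∪ {(v₂, v₃), (v, v₃)}) u v)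
        = insert v₃ ((V₁.erase v).filter (fun u => OAdj E₁ u v)) :=
      join_nbr_p vO e1 sp₁ sp23 d1_23 hv (Finset.mem_union_right _ hm₃) (Or.inl rfl)
    have hnbr2 : ((V₁ ∪ V₂ ∪ V₃).erase v).filter
          (fun u => OAdj (E₁ ∪ E₂ ∪ E₃ ∪ {(v, v₃), (v, v₂)}) u v)
        = insert v₂ (((V₁ ∪ V₃).erase v).filter
            (fun u => OAdj (E₁ ∪ E₃ ∪ {(v, v₃)}) u v)) :=
      join_nbr_p v2O e2 sp13 sp₂ d13_2 (Finset.mem_union_left _ hv) hm₂ (Or.inl rfl)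
    have hnbr2' : ((V₁ ∪ V₃).erase v).filter (fun u => OAdj (E₁ ∪ E₃ ∪ {(v, v₃)}) u v)
        = insert v₃ ((V₁.erase v).filter (fun u => OAdj E₁ u v)) :=
      join_nbr_p rfl rfl sp₁ sp₃ h₁₃ hv hm₃ (Or.inl rfl)
    have hnbr3 : ((V₁ ∪ V₂ ∪ V₃).erase v).filter
          (fun u => OAdj (E₁ ∪ E₂ ∪ E₃ ∪ {(v, v₂), (v₂, v₃)}) u v)
        = ((V₁ ∪ V₂).erase v).filter (fun u => OAdj (E₁ ∪ E₂ ∪ {(v, v₂)}) u v) :=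
      join_nbr rfl e3 sp12 sp₃ d12_3 (Finset.mem_union_right _ hm₂) hm₃ (Or.inl rfl)
        (Finset.mem_union_left _ hv) (fun h => hvV₂ (h ▸ hm₂))
    have hnbr3' : ((V₁ ∪ V₂).erase v).filter (fun u => OAdj (E₁ ∪ E₂ ∪ {(v, v₂)}) u v)
        = insert v₂ ((V₁.erase v).filter (fun u => OAdj E₁ u v)) :=
      join_nbr_p rfl rfl sp₁ sp₂ h₁₂ hv hm₂ (Or.inl rfl)
    -- components towards old neighbours are unchanged
    have hc1 : ∀ u ∈ (V₁.erase v).filter (fun u => OAdj E₁ u v),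
        comp (V₁ ∪ V₂ ∪ V₃) (E₁ ∪ E₂ ∪ E₃ ∪ {(v₂, v₃), (v, v₃)}) v u = comp V₁ E₁ v u ∧
        subE (V₁ ∪ V₂ ∪ V₃) (E₁ ∪ E₂ ∪ E₃ ∪ {(v₂, v₃), (v, v₃)}) v u = subE V₁ E₁ v u := by
      intro u hu
      exact join_comp_out vO e1 sp₁ sp23 d1_23 hv (Finset.mem_union_right _ hm₃)
        (Or.inl rfl) (Finset.mem_filter.1 hu).1 (hself _ _ _ _)
    have hc2 : ∀ u ∈ (V₁.erase v).filter (fun u => OAdj E₁ u v),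
        comp (V₁ ∪ V₂ ∪ V₃) (E₁ ∪ E₂ ∪ E₃ ∪ {(v, v₃), (v, v₂)}) v u = comp V₁ E₁ v u ∧
        subE (V₁ ∪ V₂ ∪ V₃) (E₁ ∪ E₂ ∪ E₃ ∪ {(v, v₃), (v, v₂)}) v u = subE V₁ E₁ v u := by
      intro u hu
      have huV : u ∈ V₁.erase v := (Finset.mem_filter.1 hu).1
      have hin := join_comp_out (VA := V₁) (VB := V₃) (EA := E₁) (EB := E₃)
        rfl rfl sp₁ sp₃ h₁₃ hv hm₃ (Or.inl rfl) huV (hself _ _ _ _)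
      have huV' : u ∈ (V₁ ∪ V₃).erase v := Finset.mem_erase.2
        ⟨(Finset.mem_erase.1 huV).1, Finset.mem_union_left _ (Finset.mem_of_mem_erase huV)⟩
      have hout := join_comp_out v2O e2 sp13 sp₂ d13_2 (Finset.mem_union_left _ hv) hm₂
        (Or.inl rfl) huV' (hself _ _ _ _)
      rw [hout.1, hout.2, hin.1, hin.2]
      exact ⟨rfl, rfl⟩
    have hc3 : ∀ u ∈ (V₁.erase v).filter (fun u => OAdj E₁ u v),
        comp (V₁ ∪ V₂ ∪ V₃) (E₁ ∪ E₂ ∪ E₃ ∪ {(v, v₂), (v₂, v₃)}) v u = comp V₁ E₁ v u ∧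
        subE (V₁ ∪ V₂ ∪ V₃) (E₁ ∪ E₂ ∪ E₃ ∪ {(v, v₂), (v₂, v₃)}) v u = subE V₁ E₁ v u := by
      intro u hu
      have huV : u ∈ V₁.erase v := (Finset.mem_filter.1 hu).1
      have hin := join_comp_out (VA := V₁) (VB := V₂) (EA := E₁) (EB := E₂)
        rfl rfl sp₁ sp₂ h₁₂ hv hm₂ (Or.inl rfl) huV (hself _ _ _ _)
      have huV' : u ∈ (V₁ ∪ V₂).erase v := Finset.mem_erase.2
        ⟨(Finset.mem_erase.1 huV).1, Finset.mem_union_left _ (Finset.mem_of_mem_erase huV)⟩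
      have hpu3 : v₂ ∉ comp (V₁ ∪ V₂) (E₁ ∪ E₂ ∪ {(v, v₂)}) v u := by
        rw [hin.1]
        intro hx
        exact hvV₂ (by
          have := Finset.mem_of_mem_erase (comp_subset hx)
          exact absurd this (Finset.disjoint_right.1 h₁₂ hm₂)) |>.elim
      have hout := join_comp_out rfl e3 sp12 sp₃ d12_3 (Finset.mem_union_right _ hm₂) hm₃
        (Or.inl rfl) huV' hpu3
      rw [hout.1, hout.2, hin.1, hin.2]
      exact ⟨rfl, rfl⟩
    -- bridge components
    have hb1 : comp (V₁ ∪ V₂ ∪ V₃) (E₁ ∪ E₂ ∪ E₃ ∪ {(v₂, v₃), (v, v₃)}) v v₃ = V₂ ∪ V₃ ∧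
        subE (V₁ ∪ V₂ ∪ V₃) (E₁ ∪ E₂ ∪ E₃ ∪ {(v₂, v₃), (v, v₃)}) v v₃
          = E₂ ∪ E₃ ∪ {(v₂, v₃)} :=
      join_comp_bridge vO e1 sp₁ sp23 d1_23 hv (Finset.mem_union_right _ hm₃)
        (Or.inl rfl) t23.conn
    have hb2a : comp (V₁ ∪ V₂ ∪ V₃) (E₁ ∪ E₂ ∪ E₃ ∪ {(v, v₃), (v, v₂)}) v v₂ = V₂ ∧
        subE (V₁ ∪ V₂ ∪ V₃) (E₁ ∪ E₂ ∪ E₃ ∪ {(v, v₃), (v, v₂)}) v v₂ = E₂ :=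
      join_comp_bridge v2O e2 sp13 sp₂ d13_2 (Finset.mem_union_left _ hv) hm₂
        (Or.inl rfl) h₂.conn
    have hb2b : comp (V₁ ∪ V₂ ∪ V₃) (E₁ ∪ E₂ ∪ E₃ ∪ {(v, v₃), (v, v₂)}) v v₃ = V₃ ∧
        subE (V₁ ∪ V₂ ∪ V₃) (E₁ ∪ E₂ ∪ E₃ ∪ {(v, v₃), (v, v₂)}) v v₃ = E₃ := by
      have h3V : v₃ ∈ (V₁ ∪ V₃).erase v := Finset.mem_erase.2
        ⟨fun h => hvV₃ (h ▸ hm₃), Finset.mem_union_right _ hm₃⟩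
      have hout := join_comp_out v2O e2 sp13 sp₂ d13_2 (Finset.mem_union_left _ hv) hm₂
        (Or.inl rfl) h3V (hself _ _ _ _)
      have hin := join_comp_bridge (VA := V₁) (VB := V₃) (EA := E₁) (EB := E₃)
        rfl rfl sp₁ sp₃ h₁₃ hv hm₃ (Or.inl rfl) h₃.conn
      rw [hout.1, hout.2, hin.1, hin.2]
      exact ⟨rfl, rfl⟩
    have hb3 : comp (V₁ ∪ V₂ ∪ V₃) (E₁ ∪ E₂ ∪ E₃ ∪ {(v, v₂), (v₂, v₃)}) v v₂ = V₂ ∪ V₃ ∧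
        subE (V₁ ∪ V₂ ∪ V₃) (E₁ ∪ E₂ ∪ E₃ ∪ {(v, v₂), (v₂, v₃)}) v v₂
          = E₂ ∪ E₃ ∪ {(v₂, v₃)} := by
      have h2V : v₂ ∈ (V₁ ∪ V₂).erase v := Finset.mem_erase.2
        ⟨fun h => hvV₂ (h ▸ hm₂), Finset.mem_union_right _ hm₂⟩
      have hin := join_comp_bridge (VA := V₁) (VB := V₂) (EA := E₁) (EB := E₂)
        rfl rfl sp₁ sp₂ h₁₂ hv hm₂ (Or.inl rfl) h₂.conn
      have hout := join_comp_in rfl e3 sp12 sp₃ d12_3 (Finset.mem_union_right _ hm₂) hm₃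
        (Or.inl rfl) (Finset.mem_union_left _ hv) h2V
        (by rw [hin.1]; exact hm₂) h₃.conn
      rw [hout.1, hout.2, hin.1, hin.2]
      exact ⟨rfl, rfl⟩
    -- assemble
    have hv₃N : v₃ ∉ (V₁.erase v).filter (fun u => OAdj E₁ u v) := by
      intro hx
      exact (Finset.disjoint_right.1 h₁₃ hm₃)
        (Finset.mem_of_mem_erase (Finset.mem_filter.1 hx).1)
    have hv₂N : v₂ ∉ insert v₃ ((V₁.erase v).filter (fun u => OAdj E₁ u v)) := by
      intro hx
      rcases Finset.mem_insert.1 hx with h | hx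
      · exact (Finset.disjoint_left.1 h₂₃ hm₂) (h ▸ hm₃)
      · exact (Finset.disjoint_right.1 h₁₂ hm₂)
          (Finset.mem_of_mem_erase (Finset.mem_filter.1 hx).1)
    have hv₂N' : v₂ ∉ (V₁.erase v).filter (fun u => OAdj E₁ u v) := by
      intro hx
      exact (Finset.disjoint_right.1 h₁₂ hm₂)
        (Finset.mem_of_mem_erase (Finset.mem_filter.1 hx).1)
    have hP1 : ∏ u ∈ (V₁.erase v).filter (fun u => OAdj E₁ u v),
        a (comp (V₁ ∪ V₂ ∪ V₃) (E₁ ∪ E₂ ∪ E₃ ∪ {(v₂, v₃), (v, v₃)}) v u)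
          (subE (V₁ ∪ V₂ ∪ V₃) (E₁ ∪ E₂ ∪ E₃ ∪ {(v₂, v₃), (v, v₃)}) v u)
        = ∏ u ∈ (V₁.erase v).filter (fun u => OAdj E₁ u v),
            a (comp V₁ E₁ v u) (subE V₁ E₁ v u) :=
      Finset.prod_congr rfl (fun u hu => by rw [(hc1 u hu).1, (hc1 u hu).2])
    have hP2 : ∏ u ∈ (V₁.erase v).filter (fun u => OAdj E₁ u v),
        a (comp (V₁ ∪ V₂ ∪ V₃) (E₁ ∪ E₂ ∪ E₃ ∪ {(v, v₃), (v, v₂)}) v u)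
          (subE (V₁ ∪ V₂ ∪ V₃) (E₁ ∪ E₂ ∪ E₃ ∪ {(v, v₃), (v, v₂)}) v u)
        = ∏ u ∈ (V₁.erase v).filter (fun u => OAdj E₁ u v),
            a (comp V₁ E₁ v u) (subE V₁ E₁ v u) :=
      Finset.prod_congr rfl (fun u hu => by rw [(hc2 u hu).1, (hc2 u hu).2])
    have hP3 : ∏ u ∈ (V₁.erase v).filter (fun u => OAdj E₁ u v),
        a (comp (V₁ ∪ V₂ ∪ V₃) (E₁ ∪ E₂ ∪ E₃ ∪ {(v, v₂), (v₂, v₃)}) v u)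
          (subE (V₁ ∪ V₂ ∪ V₃) (E₁ ∪ E₂ ∪ E₃ ∪ {(v, v₂), (v₂, v₃)}) v u)
        = ∏ u ∈ (V₁.erase v).filter (fun u => OAdj E₁ u v),
            a (comp V₁ E₁ v u) (subE V₁ E₁ v u) :=
      Finset.prod_congr rfl (fun u hu => by rw [(hc3 u hu).1, (hc3 u hu).2])
    simp only [term, heps1, heps2, heps3, hnbr1, hnbr2, hnbr2', hnbr3, hnbr3']
    rw [Finset.prod_insert hv₃N, Finset.prod_insert hv₂N, Finset.prod_insert hv₃N,
      Finset.prod_insert hv₂N', hb1.1, hb1.2, hb2a.1, hb2a.2, hb2b.1, hb2b.2, hb3.1, hb3.2,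
      hP1, hP2, hP3]
    ring
  · -- v ≠ v₁ : use the induction hypothesis
    have hv₁e : v₁ ∈ V₁.erase v := Finset.mem_erase.2 ⟨fun h => hvv h.symm, hm₁⟩
    obtain ⟨us, husN, hv₁C⟩ := comp_cover h₁ hv v₁ hv₁e
    have husV : us ∈ V₁.erase v := (Finset.mem_filter.1 husN).1
    have htd := tree_decomp h₁ hv
    have hvv₂ : v ≠ v₂ := fun h => hvV₂ (h ▸ hm₂)
    -- neighbour sets
    have hnbr1 : ((V₁ ∪ V₂ ∪ V₃).erase v).filter
          (fun u => OAdj (E₁ ∪ E₂ ∪ E₃ ∪ {(v₂, v₃), (v₁, v₃)}) u v)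
        = (V₁.erase v).filter (fun u => OAdj E₁ u v) :=
      join_nbr vO e1 sp₁ sp23 d1_23 hm₁ (Finset.mem_union_right _ hm₃) (Or.inl rfl) hv hvv
    have hnbr2 : ((V₁ ∪ V₂ ∪ V₃).erase v).filter
          (fun u => OAdj (E₁ ∪ E₂ ∪ E₃ ∪ {(v₁, v₃), (v₁, v₂)}) u v)
        = ((V₁ ∪ V₃).erase v).filter (fun u => OAdj (E₁ ∪ E₃ ∪ {(v₁, v₃)}) u v) :=
      join_nbr v2O e2 sp13 sp₂ d13_2 (Finset.mem_union_left _ hm₁) hm₂ (Or.inl rfl)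
        (Finset.mem_union_left _ hv) hvv
    have hnbr2' : ((V₁ ∪ V₃).erase v).filter (fun u => OAdj (E₁ ∪ E₃ ∪ {(v₁, v₃)}) u v)
        = (V₁.erase v).filter (fun u => OAdj E₁ u v) :=
      join_nbr rfl rfl sp₁ sp₃ h₁₃ hm₁ hm₃ (Or.inl rfl) hv hvv
    have hnbr3 : ((V₁ ∪ V₂ ∪ V₃).erase v).filter
          (fun u => OAdj (E₁ ∪ E₂ ∪ E₃ ∪ {(v₁, v₂), (v₂, v₃)}) u v)
        = ((V₁ ∪ V₂).erase v).filter (fun u => OAdj (E₁ ∪ E₂ ∪ {(v₁, v₂)}) u v) :=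
      join_nbr rfl e3 sp12 sp₃ d12_3 (Finset.mem_union_right _ hm₂) hm₃ (Or.inl rfl)
        (Finset.mem_union_left _ hv) hvv₂
    have hnbr3' : ((V₁ ∪ V₂).erase v).filter (fun u => OAdj (E₁ ∪ E₂ ∪ {(v₁, v₂)}) u v)
        = (V₁.erase v).filter (fun u => OAdj E₁ u v) :=
      join_nbr rfl rfl sp₁ sp₂ h₁₂ hm₁ hm₂ (Or.inl rfl) hv hvv
    -- unchanged components (those not containing v₁)
    have hc1 : ∀ u ∈ (V₁.erase v).filter (fun u => OAdj E₁ u v), v₁ ∉ comp V₁ E₁ v u →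
        comp (V₁ ∪ V₂ ∪ V₃) (E₁ ∪ E₂ ∪ E₃ ∪ {(v₂, v₃), (v₁, v₃)}) v u = comp V₁ E₁ v u ∧
        subE (V₁ ∪ V₂ ∪ V₃) (E₁ ∪ E₂ ∪ E₃ ∪ {(v₂, v₃), (v₁, v₃)}) v u = subE V₁ E₁ v u := by
      intro u hu hpu
      exact join_comp_out vO e1 sp₁ sp23 d1_23 hm₁ (Finset.mem_union_right _ hm₃)
        (Or.inl rfl) (Finset.mem_filter.1 hu).1 hpu
    have hc2 : ∀ u ∈ (V₁.erase v).filter (fun u => OAdj E₁ u v), v₁ ∉ comp V₁ E₁ v u →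
        comp (V₁ ∪ V₂ ∪ V₃) (E₁ ∪ E₂ ∪ E₃ ∪ {(v₁, v₃), (v₁, v₂)}) v u = comp V₁ E₁ v u ∧
        subE (V₁ ∪ V₂ ∪ V₃) (E₁ ∪ E₂ ∪ E₃ ∪ {(v₁, v₃), (v₁, v₂)}) v u = subE V₁ E₁ v u := by
      intro u hu hpu
      have huV : u ∈ V₁.erase v := (Finset.mem_filter.1 hu).1
      have hin := join_comp_out (VA := V₁) (VB := V₃) (EA := E₁) (EB := E₃)
        rfl rfl sp₁ sp₃ h₁₃ hm₁ hm₃ (Or.inl rfl) huV hpu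
      have huV' : u ∈ (V₁ ∪ V₃).erase v := Finset.mem_erase.2
        ⟨(Finset.mem_erase.1 huV).1, Finset.mem_union_left _ (Finset.mem_of_mem_erase huV)⟩
      have hpu' : v₁ ∉ comp (V₁ ∪ V₃) (E₁ ∪ E₃ ∪ {(v₁, v₃)}) v u := by
        rw [hin.1]; exact hpu
      have hout := join_comp_out v2O e2 sp13 sp₂ d13_2 (Finset.mem_union_left _ hm₁) hm₂
        (Or.inl rfl) huV' hpu'
      rw [hout.1, hout.2, hin.1, hin.2]
      exact ⟨rfl, rfl⟩
    have hc3 : ∀ u ∈ (V₁.erase v).filter (fun u => OAdj E₁ u v), v₁ ∉ comp V₁ E₁ v u →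
        comp (V₁ ∪ V₂ ∪ V₃) (E₁ ∪ E₂ ∪ E₃ ∪ {(v₁, v₂), (v₂, v₃)}) v u = comp V₁ E₁ v u ∧
        subE (V₁ ∪ V₂ ∪ V₃) (E₁ ∪ E₂ ∪ E₃ ∪ {(v₁, v₂), (v₂, v₃)}) v u = subE V₁ E₁ v u := by
      intro u hu hpu
      have huV : u ∈ V₁.erase v := (Finset.mem_filter.1 hu).1
      have hin := join_comp_out (VA := V₁) (VB := V₂) (EA := E₁) (EB := E₂)
        rfl rfl sp₁ sp₂ h₁₂ hm₁ hm₂ (Or.inl rfl) huV hpu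
      have huV' : u ∈ (V₁ ∪ V₂).erase v := Finset.mem_erase.2
        ⟨(Finset.mem_erase.1 huV).1, Finset.mem_union_left _ (Finset.mem_of_mem_erase huV)⟩
      have hpu' : v₂ ∉ comp (V₁ ∪ V₂) (E₁ ∪ E₂ ∪ {(v₁, v₂)}) v u := by
        rw [hin.1]
        intro hx
        exact (Finset.disjoint_right.1 h₁₂ hm₂) (Finset.mem_of_mem_erase (comp_subset hx))
      have hout := join_comp_out rfl e3 sp12 sp₃ d12_3 (Finset.mem_union_right _ hm₂) hm₃
        (Or.inl rfl) huV' hpu'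
      rw [hout.1, hout.2, hin.1, hin.2]
      exact ⟨rfl, rfl⟩
    -- the component containing v₁, in each hat tree
    have hcin1 : comp (V₁ ∪ V₂ ∪ V₃) (E₁ ∪ E₂ ∪ E₃ ∪ {(v₂, v₃), (v₁, v₃)}) v us
          = comp V₁ E₁ v us ∪ (V₂ ∪ V₃) ∧
        subE (V₁ ∪ V₂ ∪ V₃) (E₁ ∪ E₂ ∪ E₃ ∪ {(v₂, v₃), (v₁, v₃)}) v us
          = subE V₁ E₁ v us ∪ (E₂ ∪ E₃ ∪ {(v₂, v₃)}) ∪ {(v₁, v₃)} :=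
      join_comp_in vO e1 sp₁ sp23 d1_23 hm₁ (Finset.mem_union_right _ hm₃) (Or.inl rfl)
        hv husV hv₁C t23.conn
    have hcin2 : comp (V₁ ∪ V₂ ∪ V₃) (E₁ ∪ E₂ ∪ E₃ ∪ {(v₁, v₃), (v₁, v₂)}) v us
          = comp V₁ E₁ v us ∪ V₃ ∪ V₂ ∧
        subE (V₁ ∪ V₂ ∪ V₃) (E₁ ∪ E₂ ∪ E₃ ∪ {(v₁, v₃), (v₁, v₂)}) v us
          = subE V₁ E₁ v us ∪ E₃ ∪ {(v₁, v₃)} ∪ E₂ ∪ {(v₁, v₂)} := by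
      have hin := join_comp_in (VA := V₁) (VB := V₃) (EA := E₁) (EB := E₃)
        rfl rfl sp₁ sp₃ h₁₃ hm₁ hm₃ (Or.inl rfl) hv husV hv₁C h₃.conn
      have husV' : us ∈ (V₁ ∪ V₃).erase v := Finset.mem_erase.2
        ⟨(Finset.mem_erase.1 husV).1, Finset.mem_union_left _ (Finset.mem_of_mem_erase husV)⟩
      have hpu' : v₁ ∈ comp (V₁ ∪ V₃) (E₁ ∪ E₃ ∪ {(v₁, v₃)}) v us := by
        rw [hin.1]; exact Finset.mem_union_left _ hv₁C
      have hout := join_comp_in v2O e2 sp13 sp₂ d13_2 (Finset.mem_union_left _ hm₁) hm₂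
        (Or.inl rfl) (Finset.mem_union_left _ hv) husV' hpu' h₂.conn
      rw [hout.1, hout.2, hin.1, hin.2]
      exact ⟨rfl, rfl⟩
    have hcin3 : comp (V₁ ∪ V₂ ∪ V₃) (E₁ ∪ E₂ ∪ E₃ ∪ {(v₁, v₂), (v₂, v₃)}) v us
          = comp V₁ E₁ v us ∪ V₂ ∪ V₃ ∧
        subE (V₁ ∪ V₂ ∪ V₃) (E₁ ∪ E₂ ∪ E₃ ∪ {(v₁, v₂), (v₂, v₃)}) v us
          = subE V₁ E₁ v us ∪ E₂ ∪ {(v₁, v₂)} ∪ E₃ ∪ {(v₂, v₃)} := by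
      have hin := join_comp_in (VA := V₁) (VB := V₂) (EA := E₁) (EB := E₂)
        rfl rfl sp₁ sp₂ h₁₂ hm₁ hm₂ (Or.inl rfl) hv husV hv₁C h₂.conn
      have husV' : us ∈ (V₁ ∪ V₂).erase v := Finset.mem_erase.2
        ⟨(Finset.mem_erase.1 husV).1, Finset.mem_union_left _ (Finset.mem_of_mem_erase husV)⟩
      have hpu' : v₂ ∈ comp (V₁ ∪ V₂) (E₁ ∪ E₂ ∪ {(v₁, v₂)}) v us := by
        rw [hin.1]; exact Finset.mem_union_right _ hm₂
      have hout := join_comp_in rfl e3 sp12 sp₃ d12_3 (Finset.mem_union_right _ hm₂) hm₃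
        (Or.inl rfl) (Finset.mem_union_left _ hv) husV' hpu' h₃.conn
      rw [hout.1, hout.2, hin.1, hin.2]
      exact ⟨rfl, rfl⟩
    -- glue the shapes to the induction hypothesis
    have gv1 : comp V₁ E₁ v us ∪ (V₂ ∪ V₃) = comp V₁ E₁ v us ∪ V₂ ∪ V₃ :=
      (Finset.union_assoc _ _ _).symm
    have gv2 : comp V₁ E₁ v us ∪ V₃ ∪ V₂ = comp V₁ E₁ v us ∪ V₂ ∪ V₃ := by
      ext x; simp [Finset.mem_union]; tauto
    have ge1 : subE V₁ E₁ v us ∪ (E₂ ∪ E₃ ∪ {(v₂, v₃)}) ∪ {(v₁, v₃)}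
        = subE V₁ E₁ v us ∪ E₂ ∪ E₃ ∪ {(v₂, v₃), (v₁, v₃)} := by
      ext e; simp [Finset.mem_union, Finset.mem_insert]
    have ge2 : subE V₁ E₁ v us ∪ E₃ ∪ {(v₁, v₃)} ∪ E₂ ∪ {(v₁, v₂)}
        = subE V₁ E₁ v us ∪ E₂ ∪ E₃ ∪ {(v₁, v₃), (v₁, v₂)} := by
      ext e; simp [Finset.mem_union, Finset.mem_insert]; tauto
    have ge3 : subE V₁ E₁ v us ∪ E₂ ∪ {(v₁, v₂)} ∪ E₃ ∪ {(v₂, v₃)}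
        = subE V₁ E₁ v us ∪ E₂ ∪ E₃ ∪ {(v₁, v₂), (v₂, v₃)} := by
      ext e; simp [Finset.mem_union, Finset.mem_insert]
    -- induction hypothesis applied to the component of v₁
    have htree : IsOTree (comp V₁ E₁ v us) (subE V₁ E₁ v us) := htd.1 us husN
    have hsubV : comp V₁ E₁ v us ⊆ V₁ :=
      fun x hx => Finset.mem_of_mem_erase (comp_subset hx)
    have hcard : (comp V₁ E₁ v us).card < V₁.card :=
      lt_of_le_of_lt (Finset.card_le_card comp_subset) (Finset.card_erase_lt_of_mem hv)
    have hIH := IH (comp V₁ E₁ v us) (subE V₁ E₁ v us) htree hsubV hv₁C hcard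
    -- product over the unchanged components
    have hcond : ∀ u ∈ ((V₁.erase v).filter (fun u => OAdj E₁ u v)).erase us,
        v₁ ∉ comp V₁ E₁ v u := by
      intro u hu hx
      exact (Finset.mem_erase.1 hu).1
        (htd.2 u (Finset.mem_of_mem_erase hu) us husN v₁ hx hv₁C)
    have hQ1 : ∏ u ∈ ((V₁.erase v).filter (fun u => OAdj E₁ u v)).erase us,
        a (comp (V₁ ∪ V₂ ∪ V₃) (E₁ ∪ E₂ ∪ E₃ ∪ {(v₂, v₃), (v₁, v₃)}) v u)
          (subE (V₁ ∪ V₂ ∪ V₃) (E₁ ∪ E₂ ∪ E₃ ∪ {(v₂, v₃), (v₁, v₃)}) v u)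
        = ∏ u ∈ ((V₁.erase v).filter (fun u => OAdj E₁ u v)).erase us,
            a (comp V₁ E₁ v u) (subE V₁ E₁ v u) :=
      Finset.prod_congr rfl (fun u hu => by
        rw [(hc1 u (Finset.mem_of_mem_erase hu) (hcond u hu)).1,
          (hc1 u (Finset.mem_of_mem_erase hu) (hcond u hu)).2])
    have hQ2 : ∏ u ∈ ((V₁.erase v).filter (fun u => OAdj E₁ u v)).erase us,
        a (comp (V₁ ∪ V₂ ∪ V₃) (E₁ ∪ E₂ ∪ E₃ ∪ {(v₁, v₃), (v₁, v₂)}) v u)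
          (subE (V₁ ∪ V₂ ∪ V₃) (E₁ ∪ E₂ ∪ E₃ ∪ {(v₁, v₃), (v₁, v₂)}) v u)
        = ∏ u ∈ ((V₁.erase v).filter (fun u => OAdj E₁ u v)).erase us,
            a (comp V₁ E₁ v u) (subE V₁ E₁ v u) :=
      Finset.prod_congr rfl (fun u hu => by
        rw [(hc2 u (Finset.mem_of_mem_erase hu) (hcond u hu)).1,
          (hc2 u (Finset.mem_of_mem_erase hu) (hcond u hu)).2])
    have hQ3 : ∏ u ∈ ((V₁.erase v).filter (fun u => OAdj E₁ u v)).erase us,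
        a (comp (V₁ ∪ V₂ ∪ V₃) (E₁ ∪ E₂ ∪ E₃ ∪ {(v₁, v₂), (v₂, v₃)}) v u)
          (subE (V₁ ∪ V₂ ∪ V₃) (E₁ ∪ E₂ ∪ E₃ ∪ {(v₁, v₂), (v₂, v₃)}) v u)
        = ∏ u ∈ ((V₁.erase v).filter (fun u => OAdj E₁ u v)).erase us,
            a (comp V₁ E₁ v u) (subE V₁ E₁ v u) :=
      Finset.prod_congr rfl (fun u hu => by
        rw [(hc3 u (Finset.mem_of_mem_erase hu) (hcond u hu)).1,
          (hc3 u (Finset.mem_of_mem_erase hu) (hcond u hu)).2])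
    simp only [term, heps1, heps2, heps3, hnbr1, hnbr2, hnbr2', hnbr3, hnbr3']
    rw [← Finset.mul_prod_erase _ (fun u => a (comp V₁ E₁ v u) (subE V₁ E₁ v u)) husN]
    rw [← Finset.mul_prod_erase _ (fun u => a (comp (V₁ ∪ V₂ ∪ V₃)
          (E₁ ∪ E₂ ∪ E₃ ∪ {(v₂, v₃), (v₁, v₃)}) v u)
        (subE (V₁ ∪ V₂ ∪ V₃) (E₁ ∪ E₂ ∪ E₃ ∪ {(v₂, v₃), (v₁, v₃)}) v u)) husN]
    rw [← Finset.mul_prod_erase _ (fun u => a (comp (V₁ ∪ V₂ ∪ V₃)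
          (E₁ ∪ E₂ ∪ E₃ ∪ {(v₁, v₃), (v₁, v₂)}) v u)
        (subE (V₁ ∪ V₂ ∪ V₃) (E₁ ∪ E₂ ∪ E₃ ∪ {(v₁, v₃), (v₁, v₂)}) v u)) husN]
    rw [← Finset.mul_prod_erase _ (fun u => a (comp (V₁ ∪ V₂ ∪ V₃)
          (E₁ ∪ E₂ ∪ E₃ ∪ {(v₁, v₂), (v₂, v₃)}) v u)
        (subE (V₁ ∪ V₂ ∪ V₃) (E₁ ∪ E₂ ∪ E₃ ∪ {(v₁, v₂), (v₂, v₃)}) v u)) husN]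
    rw [hQ1, hQ2, hQ3, hcin1.1, hcin1.2, hcin2.1, hcin2.2, hcin3.1, hcin3.2,
      gv1, gv2, ge1, ge2, ge3]
    linear_combination ((-1 : ℚ) ^ (E₁.filter (fun e => e.2 = v)).card *
      ∏ u ∈ ((V₁.erase v).filter (fun u => OAdj E₁ u v)).erase us,
        a (comp V₁ E₁ v u) (subE V₁ E₁ v u)) * hIH

set_option maxHeartbeats 2000000 in
lemma class2 (a : Finset ℕ → Finset (ℕ × ℕ) → ℚ)
    {V₁ V₂ V₃ : Finset ℕ} {E₁ E₂ E₃ : Finset (ℕ × ℕ)} {v₁ v₂ v₃ : ℕ}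
    (h₁ : IsOTree V₁ E₁) (h₂ : IsOTree V₂ E₂) (h₃ : IsOTree V₃ E₃)
    (hm₁ : v₁ ∈ V₁) (hm₂ : v₂ ∈ V₂) (hm₃ : v₃ ∈ V₃)
    (h₁₂ : Disjoint V₁ V₂) (h₁₃ : Disjoint V₁ V₃) (h₂₃ : Disjoint V₂ V₃)
    (IH : ∀ C F, IsOTree C F → C ⊆ V₂ → v₂ ∈ C → C.card < V₂.card →
      a (V₁ ∪ C ∪ V₃) (E₁ ∪ F ∪ E₃ ∪ {(v₂, v₃), (v₁, v₃)})
        + a (V₁ ∪ C ∪ V₃) (E₁ ∪ F ∪ E₃ ∪ {(v₁, v₃), (v₁, v₂)})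
        - a (V₁ ∪ C ∪ V₃) (E₁ ∪ F ∪ E₃ ∪ {(v₁, v₂), (v₂, v₃)})
        = a V₁ E₁ * a C F * a V₃ E₃)
    {v : ℕ} (hv : v ∈ V₂) :
    term a (V₁ ∪ V₂ ∪ V₃) (E₁ ∪ E₂ ∪ E₃ ∪ {(v₂, v₃), (v₁, v₃)}) v
      + term a (V₁ ∪ V₂ ∪ V₃) (E₁ ∪ E₂ ∪ E₃ ∪ {(v₁, v₃), (v₁, v₂)}) v
      - term a (V₁ ∪ V₂ ∪ V₃) (E₁ ∪ E₂ ∪ E₃ ∪ {(v₁, v₂), (v₂, v₃)}) v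
      = term a V₂ E₂ v * (a V₁ E₁ * a V₃ E₃) := by
  have sp₁ := span_of h₁
  have sp₂ := span_of h₂
  have sp₃ := span_of h₃
  have t13 : IsOTree (V₁ ∪ V₃) (E₁ ∪ E₃ ∪ {(v₁, v₃)}) :=
    join_tree rfl rfl h₁ h₃ h₁₃ hm₁ hm₃ (Or.inl rfl)
  have t12 : IsOTree (V₁ ∪ V₂) (E₁ ∪ E₂ ∪ {(v₁, v₂)}) :=
    join_tree rfl rfl h₁ h₂ h₁₂ hm₁ hm₂ (Or.inl rfl)
  have sp13 := span_of t13
  have sp12 := span_of t12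
  have d2_13 : Disjoint V₂ (V₁ ∪ V₃) := Finset.disjoint_union_right.2 ⟨h₁₂.symm, h₂₃⟩
  have d12_3 : Disjoint (V₁ ∪ V₂) V₃ := Finset.disjoint_union_left.2 ⟨h₁₃, h₂₃⟩
  have d21 : Disjoint V₂ V₁ := h₁₂.symm
  have hvV₁ : v ∉ V₁ := Finset.disjoint_right.1 h₁₂ hv
  have hvV₃ : v ∉ V₃ := Finset.disjoint_left.1 h₂₃ hv
  have hv13 : v ∉ V₁ ∪ V₃ := by
    rw [Finset.mem_union]; rintro (h | h); exacts [hvV₁ h, hvV₃ h]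
  have hne₁ : v₁ ≠ v := fun h => hvV₁ (h ▸ hm₁)
  have hne₃ : v₃ ≠ v := fun h => hvV₃ (h ▸ hm₃)
  have w1 : V₁ ∪ V₂ ∪ V₃ = V₂ ∪ (V₁ ∪ V₃) := by ext x; simp [Finset.mem_union]; tauto
  have w3' : V₁ ∪ V₂ = V₂ ∪ V₁ := Finset.union_comm _ _
  have f1 : E₁ ∪ E₂ ∪ E₃ ∪ {(v₂, v₃), (v₁, v₃)}
      = E₂ ∪ (E₁ ∪ E₃ ∪ {(v₁, v₃)}) ∪ {(v₂, v₃)} := by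
    ext e; simp [Finset.mem_union, Finset.mem_insert]; tauto
  have f2 : E₁ ∪ E₂ ∪ E₃ ∪ {(v₁, v₃), (v₁, v₂)}
      = E₂ ∪ (E₁ ∪ E₃ ∪ {(v₁, v₃)}) ∪ {(v₁, v₂)} := by
    ext e; simp [Finset.mem_union, Finset.mem_insert]; tauto
  have f3 : E₁ ∪ E₂ ∪ E₃ ∪ {(v₁, v₂), (v₂, v₃)}
      = (E₁ ∪ E₂ ∪ {(v₁, v₂)}) ∪ E₃ ∪ {(v₂, v₃)} := by
    ext e; simp [Finset.mem_union, Finset.mem_insert]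
  have f3' : E₁ ∪ E₂ ∪ {(v₁, v₂)} = E₂ ∪ E₁ ∪ {(v₁, v₂)} := by
    ext e; simp [Finset.mem_union]; tauto
  -- in-degree of v
  have heps1 : (E₁ ∪ E₂ ∪ E₃ ∪ {(v₂, v₃), (v₁, v₃)}).filter (fun e => e.2 = v)
      = E₂.filter (fun e => e.2 = v) :=
    join_eps (VB := V₁ ∪ V₃) f1 sp13 hv13 hne₃
  have heps3a : (E₁ ∪ E₂ ∪ E₃ ∪ {(v₁, v₂), (v₂, v₃)}).filter (fun e => e.2 = v)
      = (E₁ ∪ E₂ ∪ {(v₁, v₂)}).filter (fun e => e.2 = v) :=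
    join_eps (VB := V₃) f3 sp₃ hvV₃ hne₃
  have hb12E₂ : (v₁, v₂) ∉ E₂ :=
    bridge_not_memA (VA := V₂) (VB := V₁) (p := v₂) sp₂ d21 hm₁ (Or.inr rfl)
  have hself : ∀ (W : Finset ℕ) (F : Finset (ℕ × ℕ)) (w u' : ℕ), w ∉ comp W F w u' :=
    fun W F w u' h => (Finset.mem_erase.1 (comp_subset h)).1 rfl
  by_cases hvv : v = v₂
  · subst hvv
    have heps2 : (E₁ ∪ E₂ ∪ E₃ ∪ {(v₁, v₃), (v₁, v)}).filter (fun e => e.2 = v)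
        = insert (v₁, v) (E₂.filter (fun e => e.2 = v)) :=
      join_eps_head (VB := V₁ ∪ V₃) f2 sp13 hv13 rfl
    have heps3 : (E₁ ∪ E₂ ∪ E₃ ∪ {(v₁, v), (v, v₃)}).filter (fun e => e.2 = v)
        = insert (v₁, v) (E₂.filter (fun e => e.2 = v)) := by
      rw [heps3a]
      exact join_eps_head (VB := V₁) f3' sp₁ hvV₁ rfl
    have hcard2 : (insert (v₁, v) (E₂.filter (fun e => e.2 = v))).card
        = (E₂.filter (fun e => e.2 = v)).card + 1 :=
      Finset.card_insert_of_notMem (fun hx => hb12E₂ (Finset.mem_filter.1 hx).1)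
    -- neighbour sets
    have hnbr1 : ((V₁ ∪ V₂ ∪ V₃).erase v).filter
          (fun u => OAdj (E₁ ∪ E₂ ∪ E₃ ∪ {(v, v₃), (v₁, v₃)}) u v)
        = insert v₃ ((V₂.erase v).filter (fun u => OAdj E₂ u v)) :=
      join_nbr_p w1 f1 sp₂ sp13 d2_13 hv (Finset.mem_union_right _ hm₃) (Or.inl rfl)
    have hnbr2 : ((V₁ ∪ V₂ ∪ V₃).erase v).filter
          (fun u => OAdj (E₁ ∪ E₂ ∪ E₃ ∪ {(v₁, v₃), (v₁, v)}) u v)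
        = insert v₁ ((V₂.erase v).filter (fun u => OAdj E₂ u v)) :=
      join_nbr_p w1 f2 sp₂ sp13 d2_13 hv (Finset.mem_union_left _ hm₁) (Or.inr rfl)
    have hnbr3 : ((V₁ ∪ V₂ ∪ V₃).erase v).filter
          (fun u => OAdj (E₁ ∪ E₂ ∪ E₃ ∪ {(v₁, v), (v, v₃)}) u v)
        = insert v₃ (((V₁ ∪ V₂).erase v).filter (fun u => OAdj (E₁ ∪ E₂ ∪ {(v₁, v)}) u v)) :=
      join_nbr_p rfl f3 sp12 sp₃ d12_3 (Finset.mem_union_right _ hv) hm₃ (Or.inl rfl)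
    have hnbr3' : ((V₁ ∪ V₂).erase v).filter (fun u => OAdj (E₁ ∪ E₂ ∪ {(v₁, v)}) u v)
        = insert v₁ ((V₂.erase v).filter (fun u => OAdj E₂ u v)) :=
      join_nbr_p w3' f3' sp₂ sp₁ d21 hv hm₁ (Or.inr rfl)
    -- unchanged components
    have hc1 : ∀ u ∈ (V₂.erase v).filter (fun u => OAdj E₂ u v),
        comp (V₁ ∪ V₂ ∪ V₃) (E₁ ∪ E₂ ∪ E₃ ∪ {(v, v₃), (v₁, v₃)}) v u = comp V₂ E₂ v u ∧
        subE (V₁ ∪ V₂ ∪ V₃) (E₁ ∪ E₂ ∪ E₃ ∪ {(v, v₃), (v₁, v₃)}) v u = subE V₂ E₂ v u := by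
      intro u hu
      exact join_comp_out w1 f1 sp₂ sp13 d2_13 hv (Finset.mem_union_right _ hm₃)
        (Or.inl rfl) (Finset.mem_filter.1 hu).1 (hself _ _ _ _)
    have hc2 : ∀ u ∈ (V₂.erase v).filter (fun u => OAdj E₂ u v),
        comp (V₁ ∪ V₂ ∪ V₃) (E₁ ∪ E₂ ∪ E₃ ∪ {(v₁, v₃), (v₁, v)}) v u = comp V₂ E₂ v u ∧
        subE (V₁ ∪ V₂ ∪ V₃) (E₁ ∪ E₂ ∪ E₃ ∪ {(v₁, v₃), (v₁, v)}) v u = subE V₂ E₂ v u := by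
      intro u hu
      exact join_comp_out w1 f2 sp₂ sp13 d2_13 hv (Finset.mem_union_left _ hm₁)
        (Or.inr rfl) (Finset.mem_filter.1 hu).1 (hself _ _ _ _)
    have hc3 : ∀ u ∈ (V₂.erase v).filter (fun u => OAdj E₂ u v),
        comp (V₁ ∪ V₂ ∪ V₃) (E₁ ∪ E₂ ∪ E₃ ∪ {(v₁, v), (v, v₃)}) v u = comp V₂ E₂ v u ∧
        subE (V₁ ∪ V₂ ∪ V₃) (E₁ ∪ E₂ ∪ E₃ ∪ {(v₁, v), (v, v₃)}) v u = subE V₂ E₂ v u := by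
      intro u hu
      have huV : u ∈ V₂.erase v := (Finset.mem_filter.1 hu).1
      have hin := join_comp_out (VA := V₂) (VB := V₁) (EA := E₂) (EB := E₁)
        w3' f3' sp₂ sp₁ d21 hv hm₁ (Or.inr rfl) huV (hself _ _ _ _)
      have huV' : u ∈ (V₁ ∪ V₂).erase v := Finset.mem_erase.2
        ⟨(Finset.mem_erase.1 huV).1, Finset.mem_union_right _ (Finset.mem_of_mem_erase huV)⟩
      have hout := join_comp_out rfl f3 sp12 sp₃ d12_3 (Finset.mem_union_right _ hv) hm₃
        (Or.inl rfl) huV' (hself _ _ _ _)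
      rw [hout.1, hout.2, hin.1, hin.2]
      exact ⟨rfl, rfl⟩
    -- bridge components
    have hb1 : comp (V₁ ∪ V₂ ∪ V₃) (E₁ ∪ E₂ ∪ E₃ ∪ {(v, v₃), (v₁, v₃)}) v v₃ = V₁ ∪ V₃ ∧
        subE (V₁ ∪ V₂ ∪ V₃) (E₁ ∪ E₂ ∪ E₃ ∪ {(v, v₃), (v₁, v₃)}) v v₃
          = E₁ ∪ E₃ ∪ {(v₁, v₃)} :=
      join_comp_bridge w1 f1 sp₂ sp13 d2_13 hv (Finset.mem_union_right _ hm₃)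
        (Or.inl rfl) t13.conn
    have hb2 : comp (V₁ ∪ V₂ ∪ V₃) (E₁ ∪ E₂ ∪ E₃ ∪ {(v₁, v₃), (v₁, v)}) v v₁ = V₁ ∪ V₃ ∧
        subE (V₁ ∪ V₂ ∪ V₃) (E₁ ∪ E₂ ∪ E₃ ∪ {(v₁, v₃), (v₁, v)}) v v₁
          = E₁ ∪ E₃ ∪ {(v₁, v₃)} :=
      join_comp_bridge w1 f2 sp₂ sp13 d2_13 hv (Finset.mem_union_left _ hm₁)
        (Or.inr rfl) t13.conn
    have hb3a : comp (V₁ ∪ V₂ ∪ V₃) (E₁ ∪ E₂ ∪ E₃ ∪ {(v₁, v), (v, v₃)}) v v₃ = V₃ ∧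
        subE (V₁ ∪ V₂ ∪ V₃) (E₁ ∪ E₂ ∪ E₃ ∪ {(v₁, v), (v, v₃)}) v v₃ = E₃ :=
      join_comp_bridge rfl f3 sp12 sp₃ d12_3 (Finset.mem_union_right _ hv) hm₃
        (Or.inl rfl) h₃.conn
    have hb3b : comp (V₁ ∪ V₂ ∪ V₃) (E₁ ∪ E₂ ∪ E₃ ∪ {(v₁, v), (v, v₃)}) v v₁ = V₁ ∧
        subE (V₁ ∪ V₂ ∪ V₃) (E₁ ∪ E₂ ∪ E₃ ∪ {(v₁, v), (v, v₃)}) v v₁ = E₁ := by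
      have h1V : v₁ ∈ (V₁ ∪ V₂).erase v := Finset.mem_erase.2
        ⟨fun h => hvV₁ (h ▸ hm₁), Finset.mem_union_left _ hm₁⟩
      have hout := join_comp_out rfl f3 sp12 sp₃ d12_3 (Finset.mem_union_right _ hv) hm₃
        (Or.inl rfl) h1V (hself _ _ _ _)
      have hin := join_comp_bridge (VA := V₂) (VB := V₁) (EA := E₂) (EB := E₁)
        w3' f3' sp₂ sp₁ d21 hv hm₁ (Or.inr rfl) h₁.conn
      rw [hout.1, hout.2, hin.1, hin.2]
      exact ⟨rfl, rfl⟩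
    -- assemble
    have hv₃N : v₃ ∉ (V₂.erase v).filter (fun u => OAdj E₂ u v) := by
      intro hx
      exact (Finset.disjoint_right.1 h₂₃ hm₃)
        (Finset.mem_of_mem_erase (Finset.mem_filter.1 hx).1)
    have hv₁N : v₁ ∉ (V₂.erase v).filter (fun u => OAdj E₂ u v) := by
      intro hx
      exact (Finset.disjoint_left.1 h₁₂ hm₁)
        (Finset.mem_of_mem_erase (Finset.mem_filter.1 hx).1)
    have hv₃N' : v₃ ∉ insert v₁ ((V₂.erase v).filter (fun u => OAdj E₂ u v)) := by
      intro hx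
      rcases Finset.mem_insert.1 hx with h | hx
      · exact (Finset.disjoint_left.1 h₁₃ (by rw [h]; exact hm₁)) hm₃
      · exact (Finset.disjoint_right.1 h₂₃ hm₃)
          (Finset.mem_of_mem_erase (Finset.mem_filter.1 hx).1)
    have hP1 : ∏ u ∈ (V₂.erase v).filter (fun u => OAdj E₂ u v),
        a (comp (V₁ ∪ V₂ ∪ V₃) (E₁ ∪ E₂ ∪ E₃ ∪ {(v, v₃), (v₁, v₃)}) v u)
          (subE (V₁ ∪ V₂ ∪ V₃) (E₁ ∪ E₂ ∪ E₃ ∪ {(v, v₃), (v₁, v₃)}) v u)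
        = ∏ u ∈ (V₂.erase v).filter (fun u => OAdj E₂ u v),
            a (comp V₂ E₂ v u) (subE V₂ E₂ v u) :=
      Finset.prod_congr rfl (fun u hu => by rw [(hc1 u hu).1, (hc1 u hu).2])
    have hP2 : ∏ u ∈ (V₂.erase v).filter (fun u => OAdj E₂ u v),
        a (comp (V₁ ∪ V₂ ∪ V₃) (E₁ ∪ E₂ ∪ E₃ ∪ {(v₁, v₃), (v₁, v)}) v u)
          (subE (V₁ ∪ V₂ ∪ V₃) (E₁ ∪ E₂ ∪ E₃ ∪ {(v₁, v₃), (v₁, v)}) v u)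
        = ∏ u ∈ (V₂.erase v).filter (fun u => OAdj E₂ u v),
            a (comp V₂ E₂ v u) (subE V₂ E₂ v u) :=
      Finset.prod_congr rfl (fun u hu => by rw [(hc2 u hu).1, (hc2 u hu).2])
    have hP3 : ∏ u ∈ (V₂.erase v).filter (fun u => OAdj E₂ u v),
        a (comp (V₁ ∪ V₂ ∪ V₃) (E₁ ∪ E₂ ∪ E₃ ∪ {(v₁, v), (v, v₃)}) v u)
          (subE (V₁ ∪ V₂ ∪ V₃) (E₁ ∪ E₂ ∪ E₃ ∪ {(v₁, v), (v, v₃)}) v u)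
        = ∏ u ∈ (V₂.erase v).filter (fun u => OAdj E₂ u v),
            a (comp V₂ E₂ v u) (subE V₂ E₂ v u) :=
      Finset.prod_congr rfl (fun u hu => by rw [(hc3 u hu).1, (hc3 u hu).2])
    simp only [term, heps1, heps2, heps3, hnbr1, hnbr2, hnbr3, hnbr3', hcard2]
    rw [Finset.prod_insert hv₃N, Finset.prod_insert hv₁N, Finset.prod_insert hv₃N',
      Finset.prod_insert hv₁N, hb1.1, hb1.2, hb2.1, hb2.2, hb3a.1, hb3a.2, hb3b.1, hb3b.2,
      hP1, hP2, hP3]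
    rw [pow_succ]
    ring
  · -- v ≠ v₂
    have hne₂v : v₂ ≠ v := fun h => hvv h.symm
    have heps2 : (E₁ ∪ E₂ ∪ E₃ ∪ {(v₁, v₃), (v₁, v₂)}).filter (fun e => e.2 = v)
        = E₂.filter (fun e => e.2 = v) :=
      join_eps (VB := V₁ ∪ V₃) f2 sp13 hv13 hne₂v
    have heps3 : (E₁ ∪ E₂ ∪ E₃ ∪ {(v₁, v₂), (v₂, v₃)}).filter (fun e => e.2 = v)
        = E₂.filter (fun e => e.2 = v) := by
      rw [heps3a]
      exact join_eps (VB := V₁) f3' sp₁ hvV₁ hne₂v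
    have hv₂e : v₂ ∈ V₂.erase v := Finset.mem_erase.2 ⟨hne₂v, hm₂⟩
    obtain ⟨us, husN, hv₂C⟩ := comp_cover h₂ hv v₂ hv₂e
    have husV : us ∈ V₂.erase v := (Finset.mem_filter.1 husN).1
    have htd := tree_decomp h₂ hv
    -- neighbour sets
    have hnbr1 : ((V₁ ∪ V₂ ∪ V₃).erase v).filter
          (fun u => OAdj (E₁ ∪ E₂ ∪ E₃ ∪ {(v₂, v₃), (v₁, v₃)}) u v)
        = (V₂.erase v).filter (fun u => OAdj E₂ u v) :=
      join_nbr w1 f1 sp₂ sp13 d2_13 hm₂ (Finset.mem_union_right _ hm₃) (Or.inl rfl) hv hvv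
    have hnbr2 : ((V₁ ∪ V₂ ∪ V₃).erase v).filter
          (fun u => OAdj (E₁ ∪ E₂ ∪ E₃ ∪ {(v₁, v₃), (v₁, v₂)}) u v)
        = (V₂.erase v).filter (fun u => OAdj E₂ u v) :=
      join_nbr w1 f2 sp₂ sp13 d2_13 hm₂ (Finset.mem_union_left _ hm₁) (Or.inr rfl) hv hvv
    have hnbr3 : ((V₁ ∪ V₂ ∪ V₃).erase v).filter
          (fun u => OAdj (E₁ ∪ E₂ ∪ E₃ ∪ {(v₁, v₂), (v₂, v₃)}) u v)
        = ((V₁ ∪ V₂).erase v).filter (fun u => OAdj (E₁ ∪ E₂ ∪ {(v₁, v₂)}) u v) :=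
      join_nbr rfl f3 sp12 sp₃ d12_3 (Finset.mem_union_right _ hm₂) hm₃ (Or.inl rfl)
        (Finset.mem_union_right _ hv) hvv
    have hnbr3' : ((V₁ ∪ V₂).erase v).filter (fun u => OAdj (E₁ ∪ E₂ ∪ {(v₁, v₂)}) u v)
        = (V₂.erase v).filter (fun u => OAdj E₂ u v) :=
      join_nbr w3' f3' sp₂ sp₁ d21 hm₂ hm₁ (Or.inr rfl) hv hvv
    -- unchanged components
    have hc1 : ∀ u ∈ (V₂.erase v).filter (fun u => OAdj E₂ u v), v₂ ∉ comp V₂ E₂ v u →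
        comp (V₁ ∪ V₂ ∪ V₃) (E₁ ∪ E₂ ∪ E₃ ∪ {(v₂, v₃), (v₁, v₃)}) v u = comp V₂ E₂ v u ∧
        subE (V₁ ∪ V₂ ∪ V₃) (E₁ ∪ E₂ ∪ E₃ ∪ {(v₂, v₃), (v₁, v₃)}) v u = subE V₂ E₂ v u := by
      intro u hu hpu
      exact join_comp_out w1 f1 sp₂ sp13 d2_13 hm₂ (Finset.mem_union_right _ hm₃)
        (Or.inl rfl) (Finset.mem_filter.1 hu).1 hpu
    have hc2 : ∀ u ∈ (V₂.erase v).filter (fun u => OAdj E₂ u v), v₂ ∉ comp V₂ E₂ v u →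
        comp (V₁ ∪ V₂ ∪ V₃) (E₁ ∪ E₂ ∪ E₃ ∪ {(v₁, v₃), (v₁, v₂)}) v u = comp V₂ E₂ v u ∧
        subE (V₁ ∪ V₂ ∪ V₃) (E₁ ∪ E₂ ∪ E₃ ∪ {(v₁, v₃), (v₁, v₂)}) v u = subE V₂ E₂ v u := by
      intro u hu hpu
      exact join_comp_out w1 f2 sp₂ sp13 d2_13 hm₂ (Finset.mem_union_left _ hm₁)
        (Or.inr rfl) (Finset.mem_filter.1 hu).1 hpu
    have hc3 : ∀ u ∈ (V₂.erase v).filter (fun u => OAdj E₂ u v), v₂ ∉ comp V₂ E₂ v u →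
        comp (V₁ ∪ V₂ ∪ V₃) (E₁ ∪ E₂ ∪ E₃ ∪ {(v₁, v₂), (v₂, v₃)}) v u = comp V₂ E₂ v u ∧
        subE (V₁ ∪ V₂ ∪ V₃) (E₁ ∪ E₂ ∪ E₃ ∪ {(v₁, v₂), (v₂, v₃)}) v u = subE V₂ E₂ v u := by
      intro u hu hpu
      have huV : u ∈ V₂.erase v := (Finset.mem_filter.1 hu).1
      have hin := join_comp_out (VA := V₂) (VB := V₁) (EA := E₂) (EB := E₁)
        w3' f3' sp₂ sp₁ d21 hm₂ hm₁ (Or.inr rfl) huV hpu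
      have huV' : u ∈ (V₁ ∪ V₂).erase v := Finset.mem_erase.2
        ⟨(Finset.mem_erase.1 huV).1, Finset.mem_union_right _ (Finset.mem_of_mem_erase huV)⟩
      have hpu' : v₂ ∉ comp (V₁ ∪ V₂) (E₁ ∪ E₂ ∪ {(v₁, v₂)}) v u := by
        rw [hin.1]; exact hpu
      have hout := join_comp_out rfl f3 sp12 sp₃ d12_3 (Finset.mem_union_right _ hm₂) hm₃
        (Or.inl rfl) huV' hpu'
      rw [hout.1, hout.2, hin.1, hin.2]
      exact ⟨rfl, rfl⟩
    -- the component containing v₂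
    have hcin1 : comp (V₁ ∪ V₂ ∪ V₃) (E₁ ∪ E₂ ∪ E₃ ∪ {(v₂, v₃), (v₁, v₃)}) v us
          = comp V₂ E₂ v us ∪ (V₁ ∪ V₃) ∧
        subE (V₁ ∪ V₂ ∪ V₃) (E₁ ∪ E₂ ∪ E₃ ∪ {(v₂, v₃), (v₁, v₃)}) v us
          = subE V₂ E₂ v us ∪ (E₁ ∪ E₃ ∪ {(v₁, v₃)}) ∪ {(v₂, v₃)} :=
      join_comp_in w1 f1 sp₂ sp13 d2_13 hm₂ (Finset.mem_union_right _ hm₃) (Or.inl rfl)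
        hv husV hv₂C t13.conn
    have hcin2 : comp (V₁ ∪ V₂ ∪ V₃) (E₁ ∪ E₂ ∪ E₃ ∪ {(v₁, v₃), (v₁, v₂)}) v us
          = comp V₂ E₂ v us ∪ (V₁ ∪ V₃) ∧
        subE (V₁ ∪ V₂ ∪ V₃) (E₁ ∪ E₂ ∪ E₃ ∪ {(v₁, v₃), (v₁, v₂)}) v us
          = subE V₂ E₂ v us ∪ (E₁ ∪ E₃ ∪ {(v₁, v₃)}) ∪ {(v₁, v₂)} :=
      join_comp_in w1 f2 sp₂ sp13 d2_13 hm₂ (Finset.mem_union_left _ hm₁) (Or.inr rfl)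
        hv husV hv₂C t13.conn
    have hcin3 : comp (V₁ ∪ V₂ ∪ V₃) (E₁ ∪ E₂ ∪ E₃ ∪ {(v₁, v₂), (v₂, v₃)}) v us
          = comp V₂ E₂ v us ∪ V₁ ∪ V₃ ∧
        subE (V₁ ∪ V₂ ∪ V₃) (E₁ ∪ E₂ ∪ E₃ ∪ {(v₁, v₂), (v₂, v₃)}) v us
          = subE V₂ E₂ v us ∪ E₁ ∪ {(v₁, v₂)} ∪ E₃ ∪ {(v₂, v₃)} := by
      have hin := join_comp_in (VA := V₂) (VB := V₁) (EA := E₂) (EB := E₁)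
        w3' f3' sp₂ sp₁ d21 hm₂ hm₁ (Or.inr rfl) hv husV hv₂C h₁.conn
      have husV' : us ∈ (V₁ ∪ V₂).erase v := Finset.mem_erase.2
        ⟨(Finset.mem_erase.1 husV).1, Finset.mem_union_right _ (Finset.mem_of_mem_erase husV)⟩
      have hpu' : v₂ ∈ comp (V₁ ∪ V₂) (E₁ ∪ E₂ ∪ {(v₁, v₂)}) v us := by
        rw [hin.1]; exact Finset.mem_union_left _ hv₂C
      have hout := join_comp_in rfl f3 sp12 sp₃ d12_3 (Finset.mem_union_right _ hm₂) hm₃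
        (Or.inl rfl) (Finset.mem_union_right _ hv) husV' hpu' h₃.conn
      rw [hout.1, hout.2, hin.1, hin.2]
      exact ⟨rfl, rfl⟩
    -- glue
    have gv1 : comp V₂ E₂ v us ∪ (V₁ ∪ V₃) = V₁ ∪ comp V₂ E₂ v us ∪ V₃ := by
      ext x; simp [Finset.mem_union]; tauto
    have gv3 : comp V₂ E₂ v us ∪ V₁ ∪ V₃ = V₁ ∪ comp V₂ E₂ v us ∪ V₃ := by
      ext x; simp [Finset.mem_union]; tauto
    have ge1 : subE V₂ E₂ v us ∪ (E₁ ∪ E₃ ∪ {(v₁, v₃)}) ∪ {(v₂, v₃)}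
        = E₁ ∪ subE V₂ E₂ v us ∪ E₃ ∪ {(v₂, v₃), (v₁, v₃)} := by
      ext e; simp [Finset.mem_union, Finset.mem_insert]; tauto
    have ge2 : subE V₂ E₂ v us ∪ (E₁ ∪ E₃ ∪ {(v₁, v₃)}) ∪ {(v₁, v₂)}
        = E₁ ∪ subE V₂ E₂ v us ∪ E₃ ∪ {(v₁, v₃), (v₁, v₂)} := by
      ext e; simp [Finset.mem_union, Finset.mem_insert]; tauto
    have ge3 : subE V₂ E₂ v us ∪ E₁ ∪ {(v₁, v₂)} ∪ E₃ ∪ {(v₂, v₃)}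
        = E₁ ∪ subE V₂ E₂ v us ∪ E₃ ∪ {(v₁, v₂), (v₂, v₃)} := by
      ext e; simp [Finset.mem_union, Finset.mem_insert]; tauto
    -- induction hypothesis
    have htree : IsOTree (comp V₂ E₂ v us) (subE V₂ E₂ v us) := htd.1 us husN
    have hsubV : comp V₂ E₂ v us ⊆ V₂ :=
      fun x hx => Finset.mem_of_mem_erase (comp_subset hx)
    have hcard : (comp V₂ E₂ v us).card < V₂.card :=
      lt_of_le_of_lt (Finset.card_le_card comp_subset) (Finset.card_erase_lt_of_mem hv)
    have hIH := IH (comp V₂ E₂ v us) (subE V₂ E₂ v us) htree hsubV hv₂C hcard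
    have hcond : ∀ u ∈ ((V₂.erase v).filter (fun u => OAdj E₂ u v)).erase us,
        v₂ ∉ comp V₂ E₂ v u := by
      intro u hu hx
      exact (Finset.mem_erase.1 hu).1
        (htd.2 u (Finset.mem_of_mem_erase hu) us husN v₂ hx hv₂C)
    have hQ1 : ∏ u ∈ ((V₂.erase v).filter (fun u => OAdj E₂ u v)).erase us,
        a (comp (V₁ ∪ V₂ ∪ V₃) (E₁ ∪ E₂ ∪ E₃ ∪ {(v₂, v₃), (v₁, v₃)}) v u)
          (subE (V₁ ∪ V₂ ∪ V₃) (E₁ ∪ E₂ ∪ E₃ ∪ {(v₂, v₃), (v₁, v₃)}) v u)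
        = ∏ u ∈ ((V₂.erase v).filter (fun u => OAdj E₂ u v)).erase us,
            a (comp V₂ E₂ v u) (subE V₂ E₂ v u) :=
      Finset.prod_congr rfl (fun u hu => by
        rw [(hc1 u (Finset.mem_of_mem_erase hu) (hcond u hu)).1,
          (hc1 u (Finset.mem_of_mem_erase hu) (hcond u hu)).2])
    have hQ2 : ∏ u ∈ ((V₂.erase v).filter (fun u => OAdj E₂ u v)).erase us,
        a (comp (V₁ ∪ V₂ ∪ V₃) (E₁ ∪ E₂ ∪ E₃ ∪ {(v₁, v₃), (v₁, v₂)}) v u)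
          (subE (V₁ ∪ V₂ ∪ V₃) (E₁ ∪ E₂ ∪ E₃ ∪ {(v₁, v₃), (v₁, v₂)}) v u)
        = ∏ u ∈ ((V₂.erase v).filter (fun u => OAdj E₂ u v)).erase us,
            a (comp V₂ E₂ v u) (subE V₂ E₂ v u) :=
      Finset.prod_congr rfl (fun u hu => by
        rw [(hc2 u (Finset.mem_of_mem_erase hu) (hcond u hu)).1,
          (hc2 u (Finset.mem_of_mem_erase hu) (hcond u hu)).2])
    have hQ3 : ∏ u ∈ ((V₂.erase v).filter (fun u => OAdj E₂ u v)).erase us,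
        a (comp (V₁ ∪ V₂ ∪ V₃) (E₁ ∪ E₂ ∪ E₃ ∪ {(v₁, v₂), (v₂, v₃)}) v u)
          (subE (V₁ ∪ V₂ ∪ V₃) (E₁ ∪ E₂ ∪ E₃ ∪ {(v₁, v₂), (v₂, v₃)}) v u)
        = ∏ u ∈ ((V₂.erase v).filter (fun u => OAdj E₂ u v)).erase us,
            a (comp V₂ E₂ v u) (subE V₂ E₂ v u) :=
      Finset.prod_congr rfl (fun u hu => by
        rw [(hc3 u (Finset.mem_of_mem_erase hu) (hcond u hu)).1,
          (hc3 u (Finset.mem_of_mem_erase hu) (hcond u hu)).2])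
    simp only [term, heps1, heps2, heps3, hnbr1, hnbr2, hnbr3, hnbr3']
    rw [← Finset.mul_prod_erase _ (fun u => a (comp V₂ E₂ v u) (subE V₂ E₂ v u)) husN]
    rw [← Finset.mul_prod_erase _ (fun u => a (comp (V₁ ∪ V₂ ∪ V₃)
          (E₁ ∪ E₂ ∪ E₃ ∪ {(v₂, v₃), (v₁, v₃)}) v u)
        (subE (V₁ ∪ V₂ ∪ V₃) (E₁ ∪ E₂ ∪ E₃ ∪ {(v₂, v₃), (v₁, v₃)}) v u)) husN]
    rw [← Finset.mul_prod_erase _ (fun u => a (comp (V₁ ∪ V₂ ∪ V₃)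
          (E₁ ∪ E₂ ∪ E₃ ∪ {(v₁, v₃), (v₁, v₂)}) v u)
        (subE (V₁ ∪ V₂ ∪ V₃) (E₁ ∪ E₂ ∪ E₃ ∪ {(v₁, v₃), (v₁, v₂)}) v u)) husN]
    rw [← Finset.mul_prod_erase _ (fun u => a (comp (V₁ ∪ V₂ ∪ V₃)
          (E₁ ∪ E₂ ∪ E₃ ∪ {(v₁, v₂), (v₂, v₃)}) v u)
        (subE (V₁ ∪ V₂ ∪ V₃) (E₁ ∪ E₂ ∪ E₃ ∪ {(v₁, v₂), (v₂, v₃)}) v u)) husN]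
    rw [hQ1, hQ2, hQ3, hcin1.1, hcin1.2, hcin2.1, hcin2.2, hcin3.1, hcin3.2,
      gv1, gv3, ge1, ge2, ge3]
    linear_combination ((-1 : ℚ) ^ (E₂.filter (fun e => e.2 = v)).card *
      ∏ u ∈ ((V₂.erase v).filter (fun u => OAdj E₂ u v)).erase us,
        a (comp V₂ E₂ v u) (subE V₂ E₂ v u)) * hIH

set_option maxHeartbeats 2000000 in
lemma class3 (a : Finset ℕ → Finset (ℕ × ℕ) → ℚ)
    {V₁ V₂ V₃ : Finset ℕ} {E₁ E₂ E₃ : Finset (ℕ × ℕ)} {v₁ v₂ v₃ : ℕ}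
    (h₁ : IsOTree V₁ E₁) (h₂ : IsOTree V₂ E₂) (h₃ : IsOTree V₃ E₃)
    (hm₁ : v₁ ∈ V₁) (hm₂ : v₂ ∈ V₂) (hm₃ : v₃ ∈ V₃)
    (h₁₂ : Disjoint V₁ V₂) (h₁₃ : Disjoint V₁ V₃) (h₂₃ : Disjoint V₂ V₃)
    (IH : ∀ C F, IsOTree C F → C ⊆ V₃ → v₃ ∈ C → C.card < V₃.card →
      a (V₁ ∪ V₂ ∪ C) (E₁ ∪ E₂ ∪ F ∪ {(v₂, v₃), (v₁, v₃)})
        + a (V₁ ∪ V₂ ∪ C) (E₁ ∪ E₂ ∪ F ∪ {(v₁, v₃), (v₁, v₂)})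
        - a (V₁ ∪ V₂ ∪ C) (E₁ ∪ E₂ ∪ F ∪ {(v₁, v₂), (v₂, v₃)})
        = a V₁ E₁ * a V₂ E₂ * a C F)
    {v : ℕ} (hv : v ∈ V₃) :
    term a (V₁ ∪ V₂ ∪ V₃) (E₁ ∪ E₂ ∪ E₃ ∪ {(v₂, v₃), (v₁, v₃)}) v
      + term a (V₁ ∪ V₂ ∪ V₃) (E₁ ∪ E₂ ∪ E₃ ∪ {(v₁, v₃), (v₁, v₂)}) v
      - term a (V₁ ∪ V₂ ∪ V₃) (E₁ ∪ E₂ ∪ E₃ ∪ {(v₁, v₂), (v₂, v₃)}) v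
      = term a V₃ E₃ v * (a V₁ E₁ * a V₂ E₂) := by
  have sp₁ := span_of h₁
  have sp₂ := span_of h₂
  have sp₃ := span_of h₃
  have t23 : IsOTree (V₂ ∪ V₃) (E₂ ∪ E₃ ∪ {(v₂, v₃)}) :=
    join_tree rfl rfl h₂ h₃ h₂₃ hm₂ hm₃ (Or.inl rfl)
  have t12 : IsOTree (V₁ ∪ V₂) (E₁ ∪ E₂ ∪ {(v₁, v₂)}) :=
    join_tree rfl rfl h₁ h₂ h₁₂ hm₁ hm₂ (Or.inl rfl)
  have sp23 := span_of t23
  have sp12 := span_of t12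
  have d3_12 : Disjoint V₃ (V₁ ∪ V₂) := Finset.disjoint_union_right.2 ⟨h₁₃.symm, h₂₃.symm⟩
  have d23_1 : Disjoint (V₂ ∪ V₃) V₁ := Finset.disjoint_union_left.2 ⟨h₁₂.symm, h₁₃.symm⟩
  have d32 : Disjoint V₃ V₂ := h₂₃.symm
  have hvV₁ : v ∉ V₁ := Finset.disjoint_right.1 h₁₃ hv
  have hvV₂ : v ∉ V₂ := Finset.disjoint_right.1 h₂₃ hv
  have hv12 : v ∉ V₁ ∪ V₂ := by
    rw [Finset.mem_union]; rintro (h | h); exacts [hvV₁ h, hvV₂ h]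
  have hne₁ : v₁ ≠ v := fun h => hvV₁ (h ▸ hm₁)
  have hne₂ : v₂ ≠ v := fun h => hvV₂ (h ▸ hm₂)
  have u1 : V₁ ∪ V₂ ∪ V₃ = (V₂ ∪ V₃) ∪ V₁ := by ext x; simp [Finset.mem_union]; tauto
  have u1' : V₂ ∪ V₃ = V₃ ∪ V₂ := Finset.union_comm _ _
  have u2 : V₁ ∪ V₂ ∪ V₃ = V₃ ∪ (V₁ ∪ V₂) := by ext x; simp [Finset.mem_union]; tauto
  have g1 : E₁ ∪ E₂ ∪ E₃ ∪ {(v₂, v₃), (v₁, v₃)}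
      = (E₂ ∪ E₃ ∪ {(v₂, v₃)}) ∪ E₁ ∪ {(v₁, v₃)} := by
    ext e; simp [Finset.mem_union, Finset.mem_insert]; tauto
  have g1' : E₂ ∪ E₃ ∪ {(v₂, v₃)} = E₃ ∪ E₂ ∪ {(v₂, v₃)} := by
    ext e; simp [Finset.mem_union]; tauto
  have g2 : E₁ ∪ E₂ ∪ E₃ ∪ {(v₁, v₃), (v₁, v₂)}
      = E₃ ∪ (E₁ ∪ E₂ ∪ {(v₁, v₂)}) ∪ {(v₁, v₃)} := by
    ext e; simp [Finset.mem_union, Finset.mem_insert]; tauto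
  have g3 : E₁ ∪ E₂ ∪ E₃ ∪ {(v₁, v₂), (v₂, v₃)}
      = E₃ ∪ (E₁ ∪ E₂ ∪ {(v₁, v₂)}) ∪ {(v₂, v₃)} := by
    ext e; simp [Finset.mem_union, Finset.mem_insert]; tauto
  have hb13E₃ : (v₁, v₃) ∉ E₃ :=
    bridge_not_memA (VA := V₃) (VB := V₁) (p := v₃) sp₃ h₁₃.symm hm₁ (Or.inr rfl)
  have hb23E₃ : (v₂, v₃) ∉ E₃ :=
    bridge_not_memA (VA := V₃) (VB := V₂) (p := v₃) sp₃ d32 hm₂ (Or.inr rfl)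
  have hself : ∀ (W : Finset ℕ) (F : Finset (ℕ × ℕ)) (w u' : ℕ), w ∉ comp W F w u' :=
    fun W F w u' h => (Finset.mem_erase.1 (comp_subset h)).1 rfl
  by_cases hvv : v = v₃
  · subst hvv
    have heps1 : (E₁ ∪ E₂ ∪ E₃ ∪ {(v₂, v), (v₁, v)}).filter (fun e => e.2 = v)
        = insert (v₁, v) (insert (v₂, v) (E₃.filter (fun e => e.2 = v))) := by
      rw [join_eps_head (VB := V₁) g1 sp₁ hvV₁ rfl,
        join_eps_head (VB := V₂) g1' sp₂ hvV₂ rfl]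
    have heps2 : (E₁ ∪ E₂ ∪ E₃ ∪ {(v₁, v), (v₁, v₂)}).filter (fun e => e.2 = v)
        = insert (v₁, v) (E₃.filter (fun e => e.2 = v)) :=
      join_eps_head (VB := V₁ ∪ V₂) g2 sp12 hv12 rfl
    have heps3 : (E₁ ∪ E₂ ∪ E₃ ∪ {(v₁, v₂), (v₂, v)}).filter (fun e => e.2 = v)
        = insert (v₂, v) (E₃.filter (fun e => e.2 = v)) :=
      join_eps_head (VB := V₁ ∪ V₂) g3 sp12 hv12 rfl
    have hcard1 : (insert (v₁, v) (insert (v₂, v) (E₃.filter (fun e => e.2 = v)))).card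
        = (E₃.filter (fun e => e.2 = v)).card + 2 := by
      rw [Finset.card_insert_of_notMem, Finset.card_insert_of_notMem
        (fun hx => hb23E₃ (Finset.mem_filter.1 hx).1)]
      intro hx
      rcases Finset.mem_insert.1 hx with h | hx
      · exact (Finset.disjoint_left.1 h₁₂ hm₁)
          (by rw [show v₁ = v₂ from congrArg Prod.fst h]; exact hm₂)
      · exact hb13E₃ (Finset.mem_filter.1 hx).1
    have hcard2 : (insert (v₁, v) (E₃.filter (fun e => e.2 = v))).card
        = (E₃.filter (fun e => e.2 = v)).card + 1 :=
      Finset.card_insert_of_notMem (fun hx => hb13E₃ (Finset.mem_filter.1 hx).1)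
    have hcard3 : (insert (v₂, v) (E₃.filter (fun e => e.2 = v))).card
        = (E₃.filter (fun e => e.2 = v)).card + 1 :=
      Finset.card_insert_of_notMem (fun hx => hb23E₃ (Finset.mem_filter.1 hx).1)
    -- neighbour sets
    have hnbr1 : ((V₁ ∪ V₂ ∪ V₃).erase v).filter
          (fun u => OAdj (E₁ ∪ E₂ ∪ E₃ ∪ {(v₂, v), (v₁, v)}) u v)
        = insert v₁ (((V₂ ∪ V₃).erase v).filter
            (fun u => OAdj (E₂ ∪ E₃ ∪ {(v₂, v)}) u v)) :=
      join_nbr_p u1 g1 sp23 sp₁ d23_1 (Finset.mem_union_right _ hv) hm₁ (Or.inr rfl)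
    have hnbr1' : ((V₂ ∪ V₃).erase v).filter (fun u => OAdj (E₂ ∪ E₃ ∪ {(v₂, v)}) u v)
        = insert v₂ ((V₃.erase v).filter (fun u => OAdj E₃ u v)) :=
      join_nbr_p u1' g1' sp₃ sp₂ d32 hv hm₂ (Or.inr rfl)
    have hnbr2 : ((V₁ ∪ V₂ ∪ V₃).erase v).filter
          (fun u => OAdj (E₁ ∪ E₂ ∪ E₃ ∪ {(v₁, v), (v₁, v₂)}) u v)
        = insert v₁ ((V₃.erase v).filter (fun u => OAdj E₃ u v)) :=
      join_nbr_p u2 g2 sp₃ sp12 d3_12 hv (Finset.mem_union_left _ hm₁) (Or.inr rfl)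
    have hnbr3 : ((V₁ ∪ V₂ ∪ V₃).erase v).filter
          (fun u => OAdj (E₁ ∪ E₂ ∪ E₃ ∪ {(v₁, v₂), (v₂, v)}) u v)
        = insert v₂ ((V₃.erase v).filter (fun u => OAdj E₃ u v)) :=
      join_nbr_p u2 g3 sp₃ sp12 d3_12 hv (Finset.mem_union_right _ hm₂) (Or.inr rfl)
    -- unchanged components
    have hc1 : ∀ u ∈ (V₃.erase v).filter (fun u => OAdj E₃ u v),
        comp (V₁ ∪ V₂ ∪ V₃) (E₁ ∪ E₂ ∪ E₃ ∪ {(v₂, v), (v₁, v)}) v u = comp V₃ E₃ v u ∧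
        subE (V₁ ∪ V₂ ∪ V₃) (E₁ ∪ E₂ ∪ E₃ ∪ {(v₂, v), (v₁, v)}) v u = subE V₃ E₃ v u := by
      intro u hu
      have huV : u ∈ V₃.erase v := (Finset.mem_filter.1 hu).1
      have hin := join_comp_out (VA := V₃) (VB := V₂) (EA := E₃) (EB := E₂)
        u1' g1' sp₃ sp₂ d32 hv hm₂ (Or.inr rfl) huV (hself _ _ _ _)
      have huV' : u ∈ (V₂ ∪ V₃).erase v := Finset.mem_erase.2
        ⟨(Finset.mem_erase.1 huV).1, Finset.mem_union_right _ (Finset.mem_of_mem_erase huV)⟩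
      have hout := join_comp_out u1 g1 sp23 sp₁ d23_1 (Finset.mem_union_right _ hv) hm₁
        (Or.inr rfl) huV' (hself _ _ _ _)
      rw [hout.1, hout.2, hin.1, hin.2]
      exact ⟨rfl, rfl⟩
    have hc2 : ∀ u ∈ (V₃.erase v).filter (fun u => OAdj E₃ u v),
        comp (V₁ ∪ V₂ ∪ V₃) (E₁ ∪ E₂ ∪ E₃ ∪ {(v₁, v), (v₁, v₂)}) v u = comp V₃ E₃ v u ∧
        subE (V₁ ∪ V₂ ∪ V₃) (E₁ ∪ E₂ ∪ E₃ ∪ {(v₁, v), (v₁, v₂)}) v u = subE V₃ E₃ v u := by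
      intro u hu
      exact join_comp_out u2 g2 sp₃ sp12 d3_12 hv (Finset.mem_union_left _ hm₁)
        (Or.inr rfl) (Finset.mem_filter.1 hu).1 (hself _ _ _ _)
    have hc3 : ∀ u ∈ (V₃.erase v).filter (fun u => OAdj E₃ u v),
        comp (V₁ ∪ V₂ ∪ V₃) (E₁ ∪ E₂ ∪ E₃ ∪ {(v₁, v₂), (v₂, v)}) v u = comp V₃ E₃ v u ∧
        subE (V₁ ∪ V₂ ∪ V₃) (E₁ ∪ E₂ ∪ E₃ ∪ {(v₁, v₂), (v₂, v)}) v u = subE V₃ E₃ v u := by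
      intro u hu
      exact join_comp_out u2 g3 sp₃ sp12 d3_12 hv (Finset.mem_union_right _ hm₂)
        (Or.inr rfl) (Finset.mem_filter.1 hu).1 (hself _ _ _ _)
    -- bridge components
    have hb1a : comp (V₁ ∪ V₂ ∪ V₃) (E₁ ∪ E₂ ∪ E₃ ∪ {(v₂, v), (v₁, v)}) v v₁ = V₁ ∧
        subE (V₁ ∪ V₂ ∪ V₃) (E₁ ∪ E₂ ∪ E₃ ∪ {(v₂, v), (v₁, v)}) v v₁ = E₁ :=
      join_comp_bridge u1 g1 sp23 sp₁ d23_1 (Finset.mem_union_right _ hv) hm₁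
        (Or.inr rfl) h₁.conn
    have hb1b : comp (V₁ ∪ V₂ ∪ V₃) (E₁ ∪ E₂ ∪ E₃ ∪ {(v₂, v), (v₁, v)}) v v₂ = V₂ ∧
        subE (V₁ ∪ V₂ ∪ V₃) (E₁ ∪ E₂ ∪ E₃ ∪ {(v₂, v), (v₁, v)}) v v₂ = E₂ := by
      have h2V : v₂ ∈ (V₂ ∪ V₃).erase v := Finset.mem_erase.2
        ⟨fun h => hvV₂ (h ▸ hm₂), Finset.mem_union_left _ hm₂⟩
      have hout := join_comp_out u1 g1 sp23 sp₁ d23_1 (Finset.mem_union_right _ hv) hm₁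
        (Or.inr rfl) h2V (hself _ _ _ _)
      have hin := join_comp_bridge (VA := V₃) (VB := V₂) (EA := E₃) (EB := E₂)
        u1' g1' sp₃ sp₂ d32 hv hm₂ (Or.inr rfl) h₂.conn
      rw [hout.1, hout.2, hin.1, hin.2]
      exact ⟨rfl, rfl⟩
    have hb2 : comp (V₁ ∪ V₂ ∪ V₃) (E₁ ∪ E₂ ∪ E₃ ∪ {(v₁, v), (v₁, v₂)}) v v₁ = V₁ ∪ V₂ ∧
        subE (V₁ ∪ V₂ ∪ V₃) (E₁ ∪ E₂ ∪ E₃ ∪ {(v₁, v), (v₁, v₂)}) v v₁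
          = E₁ ∪ E₂ ∪ {(v₁, v₂)} :=
      join_comp_bridge u2 g2 sp₃ sp12 d3_12 hv (Finset.mem_union_left _ hm₁)
        (Or.inr rfl) t12.conn
    have hb3 : comp (V₁ ∪ V₂ ∪ V₃) (E₁ ∪ E₂ ∪ E₃ ∪ {(v₁, v₂), (v₂, v)}) v v₂ = V₁ ∪ V₂ ∧
        subE (V₁ ∪ V₂ ∪ V₃) (E₁ ∪ E₂ ∪ E₃ ∪ {(v₁, v₂), (v₂, v)}) v v₂
          = E₁ ∪ E₂ ∪ {(v₁, v₂)} :=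
      join_comp_bridge u2 g3 sp₃ sp12 d3_12 hv (Finset.mem_union_right _ hm₂)
        (Or.inr rfl) t12.conn
    -- assemble
    have hv₁N : v₁ ∉ (V₃.erase v).filter (fun u => OAdj E₃ u v) := by
      intro hx
      exact (Finset.disjoint_left.1 h₁₃ hm₁)
        (Finset.mem_of_mem_erase (Finset.mem_filter.1 hx).1)
    have hv₂N : v₂ ∉ (V₃.erase v).filter (fun u => OAdj E₃ u v) := by
      intro hx
      exact (Finset.disjoint_left.1 h₂₃ hm₂)
        (Finset.mem_of_mem_erase (Finset.mem_filter.1 hx).1)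
    have hv₁N' : v₁ ∉ insert v₂ ((V₃.erase v).filter (fun u => OAdj E₃ u v)) := by
      intro hx
      rcases Finset.mem_insert.1 hx with h | hx
      · exact (Finset.disjoint_left.1 h₁₂ hm₁) (by rw [h]; exact hm₂)
      · exact hv₁N hx
    have hP1 : ∏ u ∈ (V₃.erase v).filter (fun u => OAdj E₃ u v),
        a (comp (V₁ ∪ V₂ ∪ V₃) (E₁ ∪ E₂ ∪ E₃ ∪ {(v₂, v), (v₁, v)}) v u)
          (subE (V₁ ∪ V₂ ∪ V₃) (E₁ ∪ E₂ ∪ E₃ ∪ {(v₂, v), (v₁, v)}) v u)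
        = ∏ u ∈ (V₃.erase v).filter (fun u => OAdj E₃ u v),
            a (comp V₃ E₃ v u) (subE V₃ E₃ v u) :=
      Finset.prod_congr rfl (fun u hu => by rw [(hc1 u hu).1, (hc1 u hu).2])
    have hP2 : ∏ u ∈ (V₃.erase v).filter (fun u => OAdj E₃ u v),
        a (comp (V₁ ∪ V₂ ∪ V₃) (E₁ ∪ E₂ ∪ E₃ ∪ {(v₁, v), (v₁, v₂)}) v u)
          (subE (V₁ ∪ V₂ ∪ V₃) (E₁ ∪ E₂ ∪ E₃ ∪ {(v₁, v), (v₁, v₂)}) v u)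
        = ∏ u ∈ (V₃.erase v).filter (fun u => OAdj E₃ u v),
            a (comp V₃ E₃ v u) (subE V₃ E₃ v u) :=
      Finset.prod_congr rfl (fun u hu => by rw [(hc2 u hu).1, (hc2 u hu).2])
    have hP3 : ∏ u ∈ (V₃.erase v).filter (fun u => OAdj E₃ u v),
        a (comp (V₁ ∪ V₂ ∪ V₃) (E₁ ∪ E₂ ∪ E₃ ∪ {(v₁, v₂), (v₂, v)}) v u)
          (subE (V₁ ∪ V₂ ∪ V₃) (E₁ ∪ E₂ ∪ E₃ ∪ {(v₁, v₂), (v₂, v)}) v u)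
        = ∏ u ∈ (V₃.erase v).filter (fun u => OAdj E₃ u v),
            a (comp V₃ E₃ v u) (subE V₃ E₃ v u) :=
      Finset.prod_congr rfl (fun u hu => by rw [(hc3 u hu).1, (hc3 u hu).2])
    simp only [term, heps1, heps2, heps3, hnbr1, hnbr1', hnbr2, hnbr3, hcard1, hcard2, hcard3]
    rw [Finset.prod_insert hv₁N', Finset.prod_insert hv₂N, Finset.prod_insert hv₁N,
      Finset.prod_insert hv₂N, hb1a.1, hb1a.2, hb1b.1, hb1b.2, hb2.1, hb2.2, hb3.1, hb3.2,
      hP1, hP2, hP3]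
    rw [pow_succ, pow_succ]
    ring
  · -- v ≠ v₃
    have hne₃v : v₃ ≠ v := fun h => hvv h.symm
    have heps1 : (E₁ ∪ E₂ ∪ E₃ ∪ {(v₂, v₃), (v₁, v₃)}).filter (fun e => e.2 = v)
        = E₃.filter (fun e => e.2 = v) := by
      rw [join_eps (VB := V₁) g1 sp₁ hvV₁ hne₃v]
      exact join_eps (VB := V₂) g1' sp₂ hvV₂ hne₃v
    have heps2 : (E₁ ∪ E₂ ∪ E₃ ∪ {(v₁, v₃), (v₁, v₂)}).filter (fun e => e.2 = v)
        = E₃.filter (fun e => e.2 = v) :=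
      join_eps (VB := V₁ ∪ V₂) g2 sp12 hv12 hne₃v
    have heps3 : (E₁ ∪ E₂ ∪ E₃ ∪ {(v₁, v₂), (v₂, v₃)}).filter (fun e => e.2 = v)
        = E₃.filter (fun e => e.2 = v) :=
      join_eps (VB := V₁ ∪ V₂) g3 sp12 hv12 hne₃v
    have hv₃e : v₃ ∈ V₃.erase v := Finset.mem_erase.2 ⟨hne₃v, hm₃⟩
    obtain ⟨us, husN, hv₃C⟩ := comp_cover h₃ hv v₃ hv₃e
    have husV : us ∈ V₃.erase v := (Finset.mem_filter.1 husN).1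
    have htd := tree_decomp h₃ hv
    -- neighbour sets
    have hnbr1 : ((V₁ ∪ V₂ ∪ V₃).erase v).filter
          (fun u => OAdj (E₁ ∪ E₂ ∪ E₃ ∪ {(v₂, v₃), (v₁, v₃)}) u v)
        = ((V₂ ∪ V₃).erase v).filter (fun u => OAdj (E₂ ∪ E₃ ∪ {(v₂, v₃)}) u v) :=
      join_nbr u1 g1 sp23 sp₁ d23_1 (Finset.mem_union_right _ hm₃) hm₁ (Or.inr rfl)
        (Finset.mem_union_right _ hv) hvv
    have hnbr1' : ((V₂ ∪ V₃).erase v).filter (fun u => OAdj (E₂ ∪ E₃ ∪ {(v₂, v₃)}) u v)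
        = (V₃.erase v).filter (fun u => OAdj E₃ u v) :=
      join_nbr u1' g1' sp₃ sp₂ d32 hm₃ hm₂ (Or.inr rfl) hv hvv
    have hnbr2 : ((V₁ ∪ V₂ ∪ V₃).erase v).filter
          (fun u => OAdj (E₁ ∪ E₂ ∪ E₃ ∪ {(v₁, v₃), (v₁, v₂)}) u v)
        = (V₃.erase v).filter (fun u => OAdj E₃ u v) :=
      join_nbr u2 g2 sp₃ sp12 d3_12 hm₃ (Finset.mem_union_left _ hm₁) (Or.inr rfl) hv hvv
    have hnbr3 : ((V₁ ∪ V₂ ∪ V₃).erase v).filter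
          (fun u => OAdj (E₁ ∪ E₂ ∪ E₃ ∪ {(v₁, v₂), (v₂, v₃)}) u v)
        = (V₃.erase v).filter (fun u => OAdj E₃ u v) :=
      join_nbr u2 g3 sp₃ sp12 d3_12 hm₃ (Finset.mem_union_right _ hm₂) (Or.inr rfl) hv hvv
    -- unchanged components
    have hc1 : ∀ u ∈ (V₃.erase v).filter (fun u => OAdj E₃ u v), v₃ ∉ comp V₃ E₃ v u →
        comp (V₁ ∪ V₂ ∪ V₃) (E₁ ∪ E₂ ∪ E₃ ∪ {(v₂, v₃), (v₁, v₃)}) v u = comp V₃ E₃ v u ∧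
        subE (V₁ ∪ V₂ ∪ V₃) (E₁ ∪ E₂ ∪ E₃ ∪ {(v₂, v₃), (v₁, v₃)}) v u = subE V₃ E₃ v u := by
      intro u hu hpu
      have huV : u ∈ V₃.erase v := (Finset.mem_filter.1 hu).1
      have hin := join_comp_out (VA := V₃) (VB := V₂) (EA := E₃) (EB := E₂)
        u1' g1' sp₃ sp₂ d32 hm₃ hm₂ (Or.inr rfl) huV hpu
      have huV' : u ∈ (V₂ ∪ V₃).erase v := Finset.mem_erase.2
        ⟨(Finset.mem_erase.1 huV).1, Finset.mem_union_right _ (Finset.mem_of_mem_erase huV)⟩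
      have hpu' : v₃ ∉ comp (V₂ ∪ V₃) (E₂ ∪ E₃ ∪ {(v₂, v₃)}) v u := by
        rw [hin.1]; exact hpu
      have hout := join_comp_out u1 g1 sp23 sp₁ d23_1 (Finset.mem_union_right _ hm₃) hm₁
        (Or.inr rfl) huV' hpu'
      rw [hout.1, hout.2, hin.1, hin.2]
      exact ⟨rfl, rfl⟩
    have hc2 : ∀ u ∈ (V₃.erase v).filter (fun u => OAdj E₃ u v), v₃ ∉ comp V₃ E₃ v u →
        comp (V₁ ∪ V₂ ∪ V₃) (E₁ ∪ E₂ ∪ E₃ ∪ {(v₁, v₃), (v₁, v₂)}) v u = comp V₃ E₃ v u ∧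
        subE (V₁ ∪ V₂ ∪ V₃) (E₁ ∪ E₂ ∪ E₃ ∪ {(v₁, v₃), (v₁, v₂)}) v u = subE V₃ E₃ v u := by
      intro u hu hpu
      exact join_comp_out u2 g2 sp₃ sp12 d3_12 hm₃ (Finset.mem_union_left _ hm₁)
        (Or.inr rfl) (Finset.mem_filter.1 hu).1 hpu
    have hc3 : ∀ u ∈ (V₃.erase v).filter (fun u => OAdj E₃ u v), v₃ ∉ comp V₃ E₃ v u →
        comp (V₁ ∪ V₂ ∪ V₃) (E₁ ∪ E₂ ∪ E₃ ∪ {(v₁, v₂), (v₂, v₃)}) v u = comp V₃ E₃ v u ∧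
        subE (V₁ ∪ V₂ ∪ V₃) (E₁ ∪ E₂ ∪ E₃ ∪ {(v₁, v₂), (v₂, v₃)}) v u = subE V₃ E₃ v u := by
      intro u hu hpu
      exact join_comp_out u2 g3 sp₃ sp12 d3_12 hm₃ (Finset.mem_union_right _ hm₂)
        (Or.inr rfl) (Finset.mem_filter.1 hu).1 hpu
    -- the component containing v₃
    have hcin1 : comp (V₁ ∪ V₂ ∪ V₃) (E₁ ∪ E₂ ∪ E₃ ∪ {(v₂, v₃), (v₁, v₃)}) v us
          = comp V₃ E₃ v us ∪ V₂ ∪ V₁ ∧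
        subE (V₁ ∪ V₂ ∪ V₃) (E₁ ∪ E₂ ∪ E₃ ∪ {(v₂, v₃), (v₁, v₃)}) v us
          = subE V₃ E₃ v us ∪ E₂ ∪ {(v₂, v₃)} ∪ E₁ ∪ {(v₁, v₃)} := by
      have hin := join_comp_in (VA := V₃) (VB := V₂) (EA := E₃) (EB := E₂)
        u1' g1' sp₃ sp₂ d32 hm₃ hm₂ (Or.inr rfl) hv husV hv₃C h₂.conn
      have husV' : us ∈ (V₂ ∪ V₃).erase v := Finset.mem_erase.2
        ⟨(Finset.mem_erase.1 husV).1, Finset.mem_union_right _ (Finset.mem_of_mem_erase husV)⟩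
      have hpu' : v₃ ∈ comp (V₂ ∪ V₃) (E₂ ∪ E₃ ∪ {(v₂, v₃)}) v us := by
        rw [hin.1]; exact Finset.mem_union_left _ hv₃C
      have hout := join_comp_in u1 g1 sp23 sp₁ d23_1 (Finset.mem_union_right _ hm₃) hm₁
        (Or.inr rfl) (Finset.mem_union_right _ hv) husV' hpu' h₁.conn
      rw [hout.1, hout.2, hin.1, hin.2]
      exact ⟨rfl, rfl⟩
    have hcin2 : comp (V₁ ∪ V₂ ∪ V₃) (E₁ ∪ E₂ ∪ E₃ ∪ {(v₁, v₃), (v₁, v₂)}) v us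
          = comp V₃ E₃ v us ∪ (V₁ ∪ V₂) ∧
        subE (V₁ ∪ V₂ ∪ V₃) (E₁ ∪ E₂ ∪ E₃ ∪ {(v₁, v₃), (v₁, v₂)}) v us
          = subE V₃ E₃ v us ∪ (E₁ ∪ E₂ ∪ {(v₁, v₂)}) ∪ {(v₁, v₃)} :=
      join_comp_in u2 g2 sp₃ sp12 d3_12 hm₃ (Finset.mem_union_left _ hm₁) (Or.inr rfl)
        hv husV hv₃C t12.conn
    have hcin3 : comp (V₁ ∪ V₂ ∪ V₃) (E₁ ∪ E₂ ∪ E₃ ∪ {(v₁, v₂), (v₂, v₃)}) v us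
          = comp V₃ E₃ v us ∪ (V₁ ∪ V₂) ∧
        subE (V₁ ∪ V₂ ∪ V₃) (E₁ ∪ E₂ ∪ E₃ ∪ {(v₁, v₂), (v₂, v₃)}) v us
          = subE V₃ E₃ v us ∪ (E₁ ∪ E₂ ∪ {(v₁, v₂)}) ∪ {(v₂, v₃)} :=
      join_comp_in u2 g3 sp₃ sp12 d3_12 hm₃ (Finset.mem_union_right _ hm₂) (Or.inr rfl)
        hv husV hv₃C t12.conn
    -- glue
    have gv1 : comp V₃ E₃ v us ∪ V₂ ∪ V₁ = V₁ ∪ V₂ ∪ comp V₃ E₃ v us := by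
      ext x; simp [Finset.mem_union]; tauto
    have gv2 : comp V₃ E₃ v us ∪ (V₁ ∪ V₂) = V₁ ∪ V₂ ∪ comp V₃ E₃ v us := by
      ext x; simp [Finset.mem_union]; tauto
    have ge1 : subE V₃ E₃ v us ∪ E₂ ∪ {(v₂, v₃)} ∪ E₁ ∪ {(v₁, v₃)}
        = E₁ ∪ E₂ ∪ subE V₃ E₃ v us ∪ {(v₂, v₃), (v₁, v₃)} := by
      ext e; simp [Finset.mem_union, Finset.mem_insert]; tauto
    have ge2 : subE V₃ E₃ v us ∪ (E₁ ∪ E₂ ∪ {(v₁, v₂)}) ∪ {(v₁, v₃)}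
        = E₁ ∪ E₂ ∪ subE V₃ E₃ v us ∪ {(v₁, v₃), (v₁, v₂)} := by
      ext e; simp [Finset.mem_union, Finset.mem_insert]; tauto
    have ge3 : subE V₃ E₃ v us ∪ (E₁ ∪ E₂ ∪ {(v₁, v₂)}) ∪ {(v₂, v₃)}
        = E₁ ∪ E₂ ∪ subE V₃ E₃ v us ∪ {(v₁, v₂), (v₂, v₃)} := by
      ext e; simp [Finset.mem_union, Finset.mem_insert]; tauto
    -- induction hypothesis
    have htree : IsOTree (comp V₃ E₃ v us) (subE V₃ E₃ v us) := htd.1 us husN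
    have hsubV : comp V₃ E₃ v us ⊆ V₃ :=
      fun x hx => Finset.mem_of_mem_erase (comp_subset hx)
    have hcard : (comp V₃ E₃ v us).card < V₃.card :=
      lt_of_le_of_lt (Finset.card_le_card comp_subset) (Finset.card_erase_lt_of_mem hv)
    have hIH := IH (comp V₃ E₃ v us) (subE V₃ E₃ v us) htree hsubV hv₃C hcard
    have hcond : ∀ u ∈ ((V₃.erase v).filter (fun u => OAdj E₃ u v)).erase us,
        v₃ ∉ comp V₃ E₃ v u := by
      intro u hu hx
      exact (Finset.mem_erase.1 hu).1
        (htd.2 u (Finset.mem_of_mem_erase hu) us husN v₃ hx hv₃C)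
    have hQ1 : ∏ u ∈ ((V₃.erase v).filter (fun u => OAdj E₃ u v)).erase us,
        a (comp (V₁ ∪ V₂ ∪ V₃) (E₁ ∪ E₂ ∪ E₃ ∪ {(v₂, v₃), (v₁, v₃)}) v u)
          (subE (V₁ ∪ V₂ ∪ V₃) (E₁ ∪ E₂ ∪ E₃ ∪ {(v₂, v₃), (v₁, v₃)}) v u)
        = ∏ u ∈ ((V₃.erase v).filter (fun u => OAdj E₃ u v)).erase us,
            a (comp V₃ E₃ v u) (subE V₃ E₃ v u) :=
      Finset.prod_congr rfl (fun u hu => by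
        rw [(hc1 u (Finset.mem_of_mem_erase hu) (hcond u hu)).1,
          (hc1 u (Finset.mem_of_mem_erase hu) (hcond u hu)).2])
    have hQ2 : ∏ u ∈ ((V₃.erase v).filter (fun u => OAdj E₃ u v)).erase us,
        a (comp (V₁ ∪ V₂ ∪ V₃) (E₁ ∪ E₂ ∪ E₃ ∪ {(v₁, v₃), (v₁, v₂)}) v u)
          (subE (V₁ ∪ V₂ ∪ V₃) (E₁ ∪ E₂ ∪ E₃ ∪ {(v₁, v₃), (v₁, v₂)}) v u)
        = ∏ u ∈ ((V₃.erase v).filter (fun u => OAdj E₃ u v)).erase us,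
            a (comp V₃ E₃ v u) (subE V₃ E₃ v u) :=
      Finset.prod_congr rfl (fun u hu => by
        rw [(hc2 u (Finset.mem_of_mem_erase hu) (hcond u hu)).1,
          (hc2 u (Finset.mem_of_mem_erase hu) (hcond u hu)).2])
    have hQ3 : ∏ u ∈ ((V₃.erase v).filter (fun u => OAdj E₃ u v)).erase us,
        a (comp (V₁ ∪ V₂ ∪ V₃) (E₁ ∪ E₂ ∪ E₃ ∪ {(v₁, v₂), (v₂, v₃)}) v u)
          (subE (V₁ ∪ V₂ ∪ V₃) (E₁ ∪ E₂ ∪ E₃ ∪ {(v₁, v₂), (v₂, v₃)}) v u)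
        = ∏ u ∈ ((V₃.erase v).filter (fun u => OAdj E₃ u v)).erase us,
            a (comp V₃ E₃ v u) (subE V₃ E₃ v u) :=
      Finset.prod_congr rfl (fun u hu => by
        rw [(hc3 u (Finset.mem_of_mem_erase hu) (hcond u hu)).1,
          (hc3 u (Finset.mem_of_mem_erase hu) (hcond u hu)).2])
    simp only [term, heps1, heps2, heps3, hnbr1, hnbr1', hnbr2, hnbr3]
    rw [← Finset.mul_prod_erase _ (fun u => a (comp V₃ E₃ v u) (subE V₃ E₃ v u)) husN]
    rw [← Finset.mul_prod_erase _ (fun u => a (comp (V₁ ∪ V₂ ∪ V₃)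
          (E₁ ∪ E₂ ∪ E₃ ∪ {(v₂, v₃), (v₁, v₃)}) v u)
        (subE (V₁ ∪ V₂ ∪ V₃) (E₁ ∪ E₂ ∪ E₃ ∪ {(v₂, v₃), (v₁, v₃)}) v u)) husN]
    rw [← Finset.mul_prod_erase _ (fun u => a (comp (V₁ ∪ V₂ ∪ V₃)
          (E₁ ∪ E₂ ∪ E₃ ∪ {(v₁, v₃), (v₁, v₂)}) v u)
        (subE (V₁ ∪ V₂ ∪ V₃) (E₁ ∪ E₂ ∪ E₃ ∪ {(v₁, v₃), (v₁, v₂)}) v u)) husN]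
    rw [← Finset.mul_prod_erase _ (fun u => a (comp (V₁ ∪ V₂ ∪ V₃)
          (E₁ ∪ E₂ ∪ E₃ ∪ {(v₁, v₂), (v₂, v₃)}) v u)
        (subE (V₁ ∪ V₂ ∪ V₃) (E₁ ∪ E₂ ∪ E₃ ∪ {(v₁, v₂), (v₂, v₃)}) v u)) husN]
    rw [hQ1, hQ2, hQ3, hcin1.1, hcin1.2, hcin2.1, hcin2.2, hcin3.1, hcin3.2,
      gv1, gv2, ge1, ge2, ge3]
    linear_combination ((-1 : ℚ) ^ (E₃.filter (fun e => e.2 = v)).card *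
      ∏ u ∈ ((V₃.erase v).filter (fun u => OAdj E₃ u v)).erase us,
        a (comp V₃ E₃ v u) (subE V₃ E₃ v u)) * hIH

lemma sum_term (a : Finset ℕ → Finset (ℕ × ℕ) → ℚ)
    (hbase : ∀ V E, IsOTree V E → V.card = 1 → a V E = 1)
    (hrec : ∀ V E, IsOTree V E → 2 ≤ V.card →
      a V E = (V.card : ℚ)⁻¹ *
        ∑ v ∈ V, (-1 : ℚ) ^ (E.filter (fun e => e.2 = v)).card *
          ∏ u ∈ (V.erase v).filter (fun u => OAdj E u v),
            a (comp V E v u) (subE V E v u))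
    {V E} (h : IsOTree V E) :
    ∑ v ∈ V, term a V E v = (V.card : ℚ) * a V E := by
  rcases eq_or_lt_of_le (by have := Finset.card_pos.2 h.1; omega : 1 ≤ V.card) with h1 | h2
  · obtain ⟨x, hx⟩ := Finset.card_eq_one.1 h1.symm
    have hE : E = ∅ := by
      have h4 := h.2.2.2.1
      rw [← h1] at h4
      exact Finset.card_eq_zero.1 (by omega)
    rw [hbase V E h h1.symm, ← h1, hx, hE]
    simp [term]
  · have hr := hrec V E h h2
    have hc : (V.card : ℚ) ≠ 0 := by
      have := Finset.card_pos.2 h.1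
      positivity
    simp only [term]
    rw [hr, ← mul_assoc, mul_inv_cancel₀ hc, one_mul]

lemma main_aux (a : Finset ℕ → Finset (ℕ × ℕ) → ℚ)
    (hbase : ∀ V E, IsOTree V E → V.card = 1 → a V E = 1)
    (hrec : ∀ V E, IsOTree V E → 2 ≤ V.card →
      a V E = (V.card : ℚ)⁻¹ *
        ∑ v ∈ V, (-1 : ℚ) ^ (E.filter (fun e => e.2 = v)).card *
          ∏ u ∈ (V.erase v).filter (fun u => OAdj E u v),
            a (comp V E v u) (subE V E v u)) :
    ∀ n : ℕ, ∀ (V₁ V₂ V₃ : Finset ℕ) (E₁ E₂ E₃ : Finset (ℕ × ℕ)) (v₁ v₂ v₃ : ℕ),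
      IsOTree V₁ E₁ → IsOTree V₂ E₂ → IsOTree V₃ E₃ →
      v₁ ∈ V₁ → v₂ ∈ V₂ → v₃ ∈ V₃ →
      Disjoint V₁ V₂ → Disjoint V₁ V₃ → Disjoint V₂ V₃ →
      V₁.card + V₂.card + V₃.card = n →
      a (V₁ ∪ V₂ ∪ V₃) (E₁ ∪ E₂ ∪ E₃ ∪ {(v₂, v₃), (v₁, v₃)})
        + a (V₁ ∪ V₂ ∪ V₃) (E₁ ∪ E₂ ∪ E₃ ∪ {(v₁, v₃), (v₁, v₂)})
        - a (V₁ ∪ V₂ ∪ V₃) (E₁ ∪ E₂ ∪ E₃ ∪ {(v₁, v₂), (v₂, v₃)})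
        = a V₁ E₁ * a V₂ E₂ * a V₃ E₃ := by
  intro n
  induction n using Nat.strong_induction_on with
  | _ n IHn =>
  intro V₁ V₂ V₃ E₁ E₂ E₃ v₁ v₂ v₃ h₁ h₂ h₃ hm₁ hm₂ hm₃ h₁₂ h₁₃ h₂₃ hn
  have t23 : IsOTree (V₂ ∪ V₃) (E₂ ∪ E₃ ∪ {(v₂, v₃)}) :=
    join_tree rfl rfl h₂ h₃ h₂₃ hm₂ hm₃ (Or.inl rfl)
  have t13 : IsOTree (V₁ ∪ V₃) (E₁ ∪ E₃ ∪ {(v₁, v₃)}) :=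
    join_tree rfl rfl h₁ h₃ h₁₃ hm₁ hm₃ (Or.inl rfl)
  have t12 : IsOTree (V₁ ∪ V₂) (E₁ ∪ E₂ ∪ {(v₁, v₂)}) :=
    join_tree rfl rfl h₁ h₂ h₁₂ hm₁ hm₂ (Or.inl rfl)
  have d1_23 : Disjoint V₁ (V₂ ∪ V₃) := Finset.disjoint_union_right.2 ⟨h₁₂, h₁₃⟩
  have d13_2 : Disjoint (V₁ ∪ V₃) V₂ := Finset.disjoint_union_left.2 ⟨h₁₂, h₂₃.symm⟩
  have d12_3 : Disjoint (V₁ ∪ V₂) V₃ := Finset.disjoint_union_left.2 ⟨h₁₃, h₂₃⟩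
  have vO : V₁ ∪ V₂ ∪ V₃ = V₁ ∪ (V₂ ∪ V₃) := Finset.union_assoc _ _ _
  have v2O : V₁ ∪ V₂ ∪ V₃ = (V₁ ∪ V₃) ∪ V₂ := by ext x; simp [Finset.mem_union]; tauto
  have e1 : E₁ ∪ E₂ ∪ E₃ ∪ {(v₂, v₃), (v₁, v₃)}
      = E₁ ∪ (E₂ ∪ E₃ ∪ {(v₂, v₃)}) ∪ {(v₁, v₃)} := by
    ext e; simp [Finset.mem_union, Finset.mem_insert]
  have e2 : E₁ ∪ E₂ ∪ E₃ ∪ {(v₁, v₃), (v₁, v₂)}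
      = (E₁ ∪ E₃ ∪ {(v₁, v₃)}) ∪ E₂ ∪ {(v₁, v₂)} := by
    ext e; simp [Finset.mem_union, Finset.mem_insert]; tauto
  have e3 : E₁ ∪ E₂ ∪ E₃ ∪ {(v₁, v₂), (v₂, v₃)}
      = (E₁ ∪ E₂ ∪ {(v₁, v₂)}) ∪ E₃ ∪ {(v₂, v₃)} := by
    ext e; simp [Finset.mem_union, Finset.mem_insert]
  have th1 : IsOTree (V₁ ∪ V₂ ∪ V₃) (E₁ ∪ E₂ ∪ E₃ ∪ {(v₂, v₃), (v₁, v₃)}) :=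
    join_tree vO e1 h₁ t23 d1_23 hm₁ (Finset.mem_union_right _ hm₃) (Or.inl rfl)
  have th2 : IsOTree (V₁ ∪ V₂ ∪ V₃) (E₁ ∪ E₂ ∪ E₃ ∪ {(v₁, v₃), (v₁, v₂)}) :=
    join_tree v2O e2 t13 h₂ d13_2 (Finset.mem_union_left _ hm₁) hm₂ (Or.inl rfl)
  have th3 : IsOTree (V₁ ∪ V₂ ∪ V₃) (E₁ ∪ E₂ ∪ E₃ ∪ {(v₁, v₂), (v₂, v₃)}) :=
    join_tree rfl e3 t12 h₃ d12_3 (Finset.mem_union_right _ hm₂) hm₃ (Or.inl rfl)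
  have n₁pos : 1 ≤ V₁.card := Finset.card_pos.2 h₁.1
  have n₂pos : 1 ≤ V₂.card := Finset.card_pos.2 h₂.1
  have n₃pos : 1 ≤ V₃.card := Finset.card_pos.2 h₃.1
  have hVcard : (V₁ ∪ V₂ ∪ V₃).card = V₁.card + V₂.card + V₃.card := by
    rw [Finset.card_union_of_disjoint d12_3, Finset.card_union_of_disjoint h₁₂]
  have hN2 : 2 ≤ (V₁ ∪ V₂ ∪ V₃).card := by omega
  -- the recursion applied to the three hat trees
  have aEq1 : a (V₁ ∪ V₂ ∪ V₃) (E₁ ∪ E₂ ∪ E₃ ∪ {(v₂, v₃), (v₁, v₃)})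
      = ((V₁ ∪ V₂ ∪ V₃).card : ℚ)⁻¹ *
        ∑ v ∈ V₁ ∪ V₂ ∪ V₃, term a (V₁ ∪ V₂ ∪ V₃) (E₁ ∪ E₂ ∪ E₃ ∪ {(v₂, v₃), (v₁, v₃)}) v := by
    rw [hrec _ _ th1 hN2]; rfl
  have aEq2 : a (V₁ ∪ V₂ ∪ V₃) (E₁ ∪ E₂ ∪ E₃ ∪ {(v₁, v₃), (v₁, v₂)})
      = ((V₁ ∪ V₂ ∪ V₃).card : ℚ)⁻¹ *
        ∑ v ∈ V₁ ∪ V₂ ∪ V₃, term a (V₁ ∪ V₂ ∪ V₃) (E₁ ∪ E₂ ∪ E₃ ∪ {(v₁, v₃), (v₁, v₂)}) v := by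
    rw [hrec _ _ th2 hN2]; rfl
  have aEq3 : a (V₁ ∪ V₂ ∪ V₃) (E₁ ∪ E₂ ∪ E₃ ∪ {(v₁, v₂), (v₂, v₃)})
      = ((V₁ ∪ V₂ ∪ V₃).card : ℚ)⁻¹ *
        ∑ v ∈ V₁ ∪ V₂ ∪ V₃, term a (V₁ ∪ V₂ ∪ V₃) (E₁ ∪ E₂ ∪ E₃ ∪ {(v₁, v₂), (v₂, v₃)}) v := by
    rw [hrec _ _ th3 hN2]; rfl
  -- induction hypotheses for the three classes
  have IH1 : ∀ C F, IsOTree C F → C ⊆ V₁ → v₁ ∈ C → C.card < V₁.card →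
      a (C ∪ V₂ ∪ V₃) (F ∪ E₂ ∪ E₃ ∪ {(v₂, v₃), (v₁, v₃)})
        + a (C ∪ V₂ ∪ V₃) (F ∪ E₂ ∪ E₃ ∪ {(v₁, v₃), (v₁, v₂)})
        - a (C ∪ V₂ ∪ V₃) (F ∪ E₂ ∪ E₃ ∪ {(v₁, v₂), (v₂, v₃)})
        = a C F * a V₂ E₂ * a V₃ E₃ := by
    intro C F hT hs hmem hlt
    exact IHn (C.card + V₂.card + V₃.card) (by omega) C V₂ V₃ F E₂ E₃ v₁ v₂ v₃
      hT h₂ h₃ hmem hm₂ hm₃ (Finset.disjoint_of_subset_left hs h₁₂)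
      (Finset.disjoint_of_subset_left hs h₁₃) h₂₃ rfl
  have IH2 : ∀ C F, IsOTree C F → C ⊆ V₂ → v₂ ∈ C → C.card < V₂.card →
      a (V₁ ∪ C ∪ V₃) (E₁ ∪ F ∪ E₃ ∪ {(v₂, v₃), (v₁, v₃)})
        + a (V₁ ∪ C ∪ V₃) (E₁ ∪ F ∪ E₃ ∪ {(v₁, v₃), (v₁, v₂)})
        - a (V₁ ∪ C ∪ V₃) (E₁ ∪ F ∪ E₃ ∪ {(v₁, v₂), (v₂, v₃)})
        = a V₁ E₁ * a C F * a V₃ E₃ := by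
    intro C F hT hs hmem hlt
    exact IHn (V₁.card + C.card + V₃.card) (by omega) V₁ C V₃ E₁ F E₃ v₁ v₂ v₃
      h₁ hT h₃ hm₁ hmem hm₃ (Finset.disjoint_of_subset_right hs h₁₂)
      h₁₃ (Finset.disjoint_of_subset_left hs h₂₃) rfl
  have IH3 : ∀ C F, IsOTree C F → C ⊆ V₃ → v₃ ∈ C → C.card < V₃.card →
      a (V₁ ∪ V₂ ∪ C) (E₁ ∪ E₂ ∪ F ∪ {(v₂, v₃), (v₁, v₃)})
        + a (V₁ ∪ V₂ ∪ C) (E₁ ∪ E₂ ∪ F ∪ {(v₁, v₃), (v₁, v₂)})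
        - a (V₁ ∪ V₂ ∪ C) (E₁ ∪ E₂ ∪ F ∪ {(v₁, v₂), (v₂, v₃)})
        = a V₁ E₁ * a V₂ E₂ * a C F := by
    intro C F hT hs hmem hlt
    exact IHn (V₁.card + V₂.card + C.card) (by omega) V₁ V₂ C E₁ E₂ F v₁ v₂ v₃
      h₁ h₂ hT hm₁ hm₂ hmem h₁₂ (Finset.disjoint_of_subset_right hs h₁₃)
      (Finset.disjoint_of_subset_right hs h₂₃) rfl
  -- the three class sums
  have hsum1 : ∑ v ∈ V₁,
      (term a (V₁ ∪ V₂ ∪ V₃) (E₁ ∪ E₂ ∪ E₃ ∪ {(v₂, v₃), (v₁, v₃)}) v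
        + term a (V₁ ∪ V₂ ∪ V₃) (E₁ ∪ E₂ ∪ E₃ ∪ {(v₁, v₃), (v₁, v₂)}) v
        - term a (V₁ ∪ V₂ ∪ V₃) (E₁ ∪ E₂ ∪ E₃ ∪ {(v₁, v₂), (v₂, v₃)}) v)
      = (V₁.card : ℚ) * (a V₁ E₁ * a V₂ E₂ * a V₃ E₃) := by
    rw [Finset.sum_congr rfl (fun v hv =>
      class1 a h₁ h₂ h₃ hm₁ hm₂ hm₃ h₁₂ h₁₃ h₂₃ IH1 hv)]
    rw [← Finset.sum_mul, sum_term a hbase hrec h₁]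
    ring
  have hsum2 : ∑ v ∈ V₂,
      (term a (V₁ ∪ V₂ ∪ V₃) (E₁ ∪ E₂ ∪ E₃ ∪ {(v₂, v₃), (v₁, v₃)}) v
        + term a (V₁ ∪ V₂ ∪ V₃) (E₁ ∪ E₂ ∪ E₃ ∪ {(v₁, v₃), (v₁, v₂)}) v
        - term a (V₁ ∪ V₂ ∪ V₃) (E₁ ∪ E₂ ∪ E₃ ∪ {(v₁, v₂), (v₂, v₃)}) v)
      = (V₂.card : ℚ) * (a V₁ E₁ * a V₂ E₂ * a V₃ E₃) := by
    rw [Finset.sum_congr rfl (fun v hv =>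
      class2 a h₁ h₂ h₃ hm₁ hm₂ hm₃ h₁₂ h₁₃ h₂₃ IH2 hv)]
    rw [← Finset.sum_mul, sum_term a hbase hrec h₂]
    ring
  have hsum3 : ∑ v ∈ V₃,
      (term a (V₁ ∪ V₂ ∪ V₃) (E₁ ∪ E₂ ∪ E₃ ∪ {(v₂, v₃), (v₁, v₃)}) v
        + term a (V₁ ∪ V₂ ∪ V₃) (E₁ ∪ E₂ ∪ E₃ ∪ {(v₁, v₃), (v₁, v₂)}) v
        - term a (V₁ ∪ V₂ ∪ V₃) (E₁ ∪ E₂ ∪ E₃ ∪ {(v₁, v₂), (v₂, v₃)}) v)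
      = (V₃.card : ℚ) * (a V₁ E₁ * a V₂ E₂ * a V₃ E₃) := by
    rw [Finset.sum_congr rfl (fun v hv =>
      class3 a h₁ h₂ h₃ hm₁ hm₂ hm₃ h₁₂ h₁₃ h₂₃ IH3 hv)]
    rw [← Finset.sum_mul, sum_term a hbase hrec h₃]
    ring
  have hsplit : ∑ v ∈ V₁ ∪ V₂ ∪ V₃,
      (term a (V₁ ∪ V₂ ∪ V₃) (E₁ ∪ E₂ ∪ E₃ ∪ {(v₂, v₃), (v₁, v₃)}) v
        + term a (V₁ ∪ V₂ ∪ V₃) (E₁ ∪ E₂ ∪ E₃ ∪ {(v₁, v₃), (v₁, v₂)}) v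
        - term a (V₁ ∪ V₂ ∪ V₃) (E₁ ∪ E₂ ∪ E₃ ∪ {(v₁, v₂), (v₂, v₃)}) v)
      = ((V₁.card + V₂.card + V₃.card : ℕ) : ℚ) * (a V₁ E₁ * a V₂ E₂ * a V₃ E₃) := by
    rw [Finset.sum_union d12_3, Finset.sum_union h₁₂, hsum1, hsum2, hsum3]
    push_cast
    ring
  have hNne : ((V₁ ∪ V₂ ∪ V₃).card : ℚ) ≠ 0 := by
    rw [hVcard]
    positivity
  rw [aEq1, aEq2, aEq3, ← mul_add, ← mul_sub, ← Finset.sum_add_distrib,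
    ← Finset.sum_sub_distrib, hsplit, ← hVcard, ← mul_assoc, inv_mul_cancel₀ hNne, one_mul]


/-- Proposition 4 of the paper: let `a` assign a rational number to every
oriented tree, with `a = 1` on one-vertex trees, and for trees with `n ≥ 2` vertices
`a_T = (1/n) ∑_{v} ε_v ∏_s a_{T_s(v)}`, where `T_s(v)` are the oriented trees obtained
by removing the vertex `v` (one for each neighbour of `v`) and `ε_v = (−1)^{n_v⁺}` with
`n_v⁺` the number of edges oriented towards `v`.  Then for oriented trees `T₁, T₂, T₃`
(with pairwise disjoint vertex sets) with marked vertices `v₁, v₂, v₃`,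
`a_{T̂₁} + a_{T̂₂} − a_{T̂₃} = a_{T₁} a_{T₂} a_{T₃}`, where `T̂₁` is obtained from the
disjoint union by adding the oriented edges `(v₂→v₃), (v₁→v₃)`; `T̂₂` by adding
`(v₁→v₃), (v₁→v₂)`; and `T̂₃` by adding `(v₁→v₂), (v₂→v₃)`. -/
theorem aT_three_tree_identity
    (a : Finset ℕ → Finset (ℕ × ℕ) → ℚ)
    (hbase : ∀ V E, IsOTree V E → V.card = 1 → a V E = 1)
    (hrec : ∀ V E, IsOTree V E → 2 ≤ V.card →
      a V E = (V.card : ℚ)⁻¹ *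
        ∑ v ∈ V, (-1 : ℚ) ^ (E.filter (fun e => e.2 = v)).card *
          ∏ u ∈ (V.erase v).filter (fun u => OAdj E u v),
            a (comp V E v u) (subE V E v u))
    (V₁ V₂ V₃ : Finset ℕ) (E₁ E₂ E₃ : Finset (ℕ × ℕ)) (v₁ v₂ v₃ : ℕ)
    (h₁ : IsOTree V₁ E₁) (h₂ : IsOTree V₂ E₂) (h₃ : IsOTree V₃ E₃)
    (hm₁ : v₁ ∈ V₁) (hm₂ : v₂ ∈ V₂) (hm₃ : v₃ ∈ V₃)
    (h₁₂ : Disjoint V₁ V₂) (h₁₃ : Disjoint V₁ V₃) (h₂₃ : Disjoint V₂ V₃) :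
    a (V₁ ∪ V₂ ∪ V₃) (E₁ ∪ E₂ ∪ E₃ ∪ {(v₂, v₃), (v₁, v₃)})
      + a (V₁ ∪ V₂ ∪ V₃) (E₁ ∪ E₂ ∪ E₃ ∪ {(v₁, v₃), (v₁, v₂)})
      - a (V₁ ∪ V₂ ∪ V₃) (E₁ ∪ E₂ ∪ E₃ ∪ {(v₁, v₂), (v₂, v₃)})
      = a V₁ E₁ * a V₂ E₂ * a V₃ E₃ :=
  main_aux a hbase hrec _ V₁ V₂ V₃ E₁ E₂ E₃ v₁ v₂ v₃ h₁ h₂ h₃ hm₁ hm₂ hm₃ h₁₂ h₁₃ h₂₃ rfl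
end

section
/- For every m ≥ 1 and pairwise distinct nonzero real numbers x_1,…,x_m: ∑_{β=1}^m (sgn(x_β) − 1) ∏_{α ≠ β} sgn(x_α − x_β) = ∏_{α=1}^m sgn(x_α) − 1. -/
/-!
Induct on the set of values, removing its least element `a`. Every other `b` sees `a` below
itself, so its product acquires the factor `sgn (a - b) = -1` and the remaining terms sum to
`1 - ∏ sgn` of the smaller set, while `a`'s own product is `1`. If `a < 0` this matches the
extra factor `-1` on the right; if `a > 0` all values are positive and both sides vanish.
-/

namespace Real

theorem prod_sign_sub_eq_one_of_forall_lt {a : ℝ} {t : Finset ℝ} (h : ∀ x ∈ t, a < x) :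
    ∏ x ∈ t, Real.sign (x - a) = 1 :=
  Finset.prod_eq_one fun x hx => Real.sign_of_pos (sub_pos.mpr (h x hx))

theorem sum_sign_sub_one_mul_prod_sign_sub (s : Finset ℝ) (h0 : (0 : ℝ) ∉ s) :
    ∑ b ∈ s, (Real.sign b - 1) * ∏ x ∈ s.erase b, Real.sign (x - b) =
      (∏ x ∈ s, Real.sign x) - 1 := by
  induction s using Finset.induction_on_min with
  | empty => simp
  | insert a t ha ih =>
    have hat : a ∉ t := fun h => lt_irrefl a (ha a h)
    rw [Finset.mem_insert, not_or] at h0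
    have hsum : ∑ b ∈ t, (Real.sign b - 1) * ∏ x ∈ (insert a t).erase b, Real.sign (x - b) =
        -((∏ x ∈ t, Real.sign x) - 1) := by
      rw [← ih h0.2, ← Finset.sum_neg_distrib]
      refine Finset.sum_congr rfl fun b hb => ?_
      rw [Finset.erase_insert_of_ne (ha b hb).ne,
        Finset.prod_insert fun h => hat (Finset.mem_of_mem_erase h),
        Real.sign_of_neg (sub_neg.mpr (ha b hb))]
      ring
    rw [Finset.sum_insert hat, Finset.erase_insert hat, prod_sign_sub_eq_one_of_forall_lt ha, hsum,
      Finset.prod_insert hat]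
    rcases (Ne.symm h0.1).lt_or_gt with hneg | hpos
    · rw [Real.sign_of_neg hneg]
      ring
    · rw [Real.sign_of_pos hpos,
        Finset.prod_eq_one fun x hx => Real.sign_of_pos (hpos.trans (ha x hx))]
      ring

end Real

theorem sign_sum_identity_general (m : ℕ) (x : Fin m → ℝ)
    (hx : ∀ α, x α ≠ 0) (hdist : ∀ α β, α ≠ β → x α ≠ x β) :
    ∑ β : Fin m, (Real.sign (x β) - 1) *
        ∏ α ∈ Finset.univ.erase β, Real.sign (x α - x β) =
      (∏ α : Fin m, Real.sign (x α)) - 1 := by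
  have hinj : Function.Injective x := fun α β h => by_contra fun hne => hdist α β hne h
  have h0 : (0 : ℝ) ∉ Finset.univ.image x := by
    simpa [eq_comm] using hx
  have key := Real.sum_sign_sub_one_mul_prod_sign_sub _ h0
  rw [Finset.sum_image hinj.injOn, Finset.prod_image hinj.injOn] at key
  rw [← key]
  refine Finset.sum_congr rfl fun β _ => ?_
  rw [← Finset.image_erase hinj, Finset.prod_image hinj.injOn]

/-- for `m ≥ 1` and pairwise distinct nonzero reals `x₁,…,x_m`,
`∑_{β} (sgn(x_β) − 1) ∏_{α ≠ β} sgn(x_α − x_β) = ∏_α sgn(x_α) − 1`. -/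
theorem sign_sum_identity (m : ℕ) (hm : 1 ≤ m) (x : Fin m → ℝ)
    (hx : ∀ α, x α ≠ 0) (hdist : ∀ α β, α ≠ β → x α ≠ x β) :
    ∑ β : Fin m, (Real.sign (x β) - 1) *
        ∏ α ∈ Finset.univ.erase β, Real.sign (x α - x β) =
      (∏ α : Fin m, Real.sign (x α)) - 1 :=
  sign_sum_identity_general m x hx hdist
end
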